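/- arXiv:2002.12446 — 10 statements merged into one kernel-verified Lean document; each statement's English description precedes it below -/
import Mathlib

section
/- Let M be an ergodic row-stochastic matrix on a finite state space with unique stationary distribution μ, and suppose its rescaled transition matrix L = D^{1/2} M D^{-1/2} (D = diag(μ)) is friendly. Then the automorphism group of M is trivial: for any permutation matrix Π, M = Πᵀ M Π implies Π = I. -/
open Matrix BigOperators

noncomputable section

/-- A permutation matrix: a square 0/1 matrix with exactly one 1 in each row and column. -/
def IsPermMatrix {n : ℕ} (P : Matrix (Fin n) (Fin n) ℝ) : Prop :=
  ∃ σ : Equiv.Perm (Fin n), ∀ i j, P i j = if σ i = j then 1 else 0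

/-- `A = U S Vᵀ` is a singular value decomposition of `A`, with the singular values
(diagonal of `S`) nonnegative and arranged in nonincreasing order. -/
def IsSVD {n : ℕ} (A U S V : Matrix (Fin n) (Fin n) ℝ) : Prop :=
  A = U * S * Vᵀ ∧ Uᵀ * U = 1 ∧ Vᵀ * V = 1 ∧
  (∀ i j, i ≠ j → S i j = 0) ∧ (∀ i, 0 ≤ S i i) ∧
  (∀ i j : Fin n, i ≤ j → S j j ≤ S i i)

/-- `V` is oriented so that `Vᵀ𝟙 ≥ 0` entrywise. -/
def ColOriented {n : ℕ} (V : Matrix (Fin n) (Fin n) ℝ) : Prop :=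
  ∀ i, 0 ≤ ∑ k, V k i

/-- A real square matrix is friendly if, for a singular value decomposition `A = U Σ Vᵀ`
with `V` oriented so that `Vᵀ𝟙 ≥ 0` entrywise, the singular values are pairwise distinct
and every entry of `Vᵀ𝟙` is nonzero. -/
def Friendly {n : ℕ} (A : Matrix (Fin n) (Fin n) ℝ) : Prop :=
  ∃ U S V, IsSVD A U S V ∧ ColOriented V ∧
    (∀ i j, i ≠ j → S i i ≠ S j j) ∧ (∀ i, (∑ k, V k i) ≠ 0)

/-- The rescaled transition matrix `L = D^{1/2} M D^{-1/2}` of a Markov chain `M`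
with stationary distribution `μ`, where `D = diag(μ)`. -/
def rescaled {n : ℕ} (M : Matrix (Fin n) (Fin n) ℝ) (μ : Fin n → ℝ) :
    Matrix (Fin n) (Fin n) ℝ :=
  Matrix.diagonal (fun i => Real.sqrt (μ i)) * M *
    Matrix.diagonal (fun i => (Real.sqrt (μ i))⁻¹)

lemma perm_mul_apply {n : ℕ} (σ : Equiv.Perm (Fin n)) (P B : Matrix (Fin n) (Fin n) ℝ)
    (hP : ∀ i j, P i j = if σ i = j then 1 else 0) (i j : Fin n) :
    (P * B) i j = B (σ i) j := by
  rw [Matrix.mul_apply]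
  rw [Finset.sum_eq_single (σ i) (fun b _ hb => by rw [hP, if_neg (fun h => hb h.symm), zero_mul])
    (fun h => absurd (Finset.mem_univ _) h)]
  rw [hP, if_pos rfl, one_mul]

lemma mul_perm_apply {n : ℕ} (σ : Equiv.Perm (Fin n)) (P B : Matrix (Fin n) (Fin n) ℝ)
    (hP : ∀ i j, P i j = if σ i = j then 1 else 0) (i j : Fin n) :
    (B * P) i j = B i (σ⁻¹ j) := by
  rw [Matrix.mul_apply]
  rw [Finset.sum_eq_single (σ⁻¹ j)
    (fun b _ hb => by
      rw [hP, if_neg, mul_zero]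
      intro hc; exact hb (by rw [← hc, Equiv.Perm.inv_def, Equiv.symm_apply_apply]))
    (fun h => absurd (Finset.mem_univ _) h)]
  rw [hP, if_pos (show σ (σ⁻¹ j) = j from σ.apply_symm_apply j), mul_one]

lemma diag_mul_apply' {n : ℕ} (D C : Matrix (Fin n) (Fin n) ℝ)
    (h : ∀ i j, i ≠ j → D i j = 0) (i j : Fin n) :
    (D * C) i j = D i i * C i j := by
  rw [Matrix.mul_apply]
  exact Finset.sum_eq_single i (fun b _ hb => by rw [h i b (Ne.symm hb), zero_mul])
    (fun hi => absurd (Finset.mem_univ _) hi)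

lemma mul_diag_apply' {n : ℕ} (C D : Matrix (Fin n) (Fin n) ℝ)
    (h : ∀ i j, i ≠ j → D i j = 0) (i j : Fin n) :
    (C * D) i j = C i j * D j j := by
  rw [Matrix.mul_apply]
  exact Finset.sum_eq_single j (fun b _ hb => by rw [h b j hb, mul_zero])
    (fun hj => absurd (Finset.mem_univ _) hj)

/-- If the rescaled transition matrix of an ergodic row-stochastic matrix `M` with unique
stationary distribution `μ` is friendly, then the automorphism group of `M` is trivial:
any permutation matrix `Π` with `M = Πᵀ M Π` is the identity. -/
theorem friendly_trivial_automorphism {n : ℕ} (M : Matrix (Fin n) (Fin n) ℝ)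
    (μ : Fin n → ℝ)
    (hMnn : ∀ i j, 0 ≤ M i j) (hMrow : ∀ i, ∑ j, M i j = 1)
    (hμpos : ∀ i, 0 < μ i) (hμsum : ∑ i, μ i = 1)
    (hstat : Matrix.vecMul μ M = μ)
    (huniq : ∀ ν : Fin n → ℝ, (∀ i, 0 ≤ ν i) → ∑ i, ν i = 1 →
      Matrix.vecMul ν M = ν → ν = μ)
    (hfriendly : Friendly (rescaled M μ))
    (Pm : Matrix (Fin n) (Fin n) ℝ) (hPm : IsPermMatrix Pm)
    (hsym : M = Pmᵀ * M * Pm) :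
    Pm = 1 := by
  obtain ⟨σ, hP⟩ := hPm
  obtain ⟨U, S, V, ⟨hA, hUU, hVV, hSoff, hSnn, _⟩, hor, hSdist, hVsum⟩ := hfriendly
  -- transpose of the permutation matrix is the permutation matrix of σ⁻¹
  have hPt : ∀ i j, Pmᵀ i j = if σ⁻¹ i = j then 1 else 0 := by
    intro i j
    rw [Matrix.transpose_apply, hP]
    by_cases h : σ j = i
    · rw [if_pos h, if_pos (by rw [← h, Equiv.Perm.inv_def, Equiv.symm_apply_apply])]
    · rw [if_neg h, if_neg (fun hc => h (by rw [← hc, Equiv.Perm.inv_def, Equiv.apply_symm_apply]))]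
  have hPtP : Pmᵀ * Pm = 1 := by
    ext i j
    rw [perm_mul_apply σ⁻¹ Pmᵀ Pm hPt, hP, Equiv.Perm.inv_def, Equiv.apply_symm_apply, Matrix.one_apply]
  have hPPt : Pm * Pmᵀ = 1 := by
    ext i j
    rw [perm_mul_apply σ Pm Pmᵀ hP, hPt, Equiv.Perm.inv_def, Equiv.symm_apply_apply, Matrix.one_apply]
  -- Pm commutes with M
  have hPmM : Pm * M = M * Pm := by
    conv_lhs => rw [hsym]
    rw [← Matrix.mul_assoc, ← Matrix.mul_assoc, hPPt, Matrix.one_mul]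
  -- entrywise symmetry
  have hMσ : ∀ i j, M (σ i) (σ j) = M i j := by
    intro i j
    calc M (σ i) (σ j) = (Pm * M) i (σ j) := (perm_mul_apply σ Pm M hP i (σ j)).symm
      _ = (M * Pm) i (σ j) := by rw [hPmM]
      _ = M i (σ⁻¹ (σ j)) := mul_perm_apply σ Pm M hP i (σ j)
      _ = M i j := by rw [Equiv.Perm.inv_def, Equiv.symm_apply_apply]
  -- μ is σ-invariant
  have hstat' : ∀ j, ∑ i, μ i * M i j = μ j := by
    intro j
    have := congrFun hstat j
    simpa [Matrix.vecMul, dotProduct] using this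
  have hνstat : Matrix.vecMul (fun i => μ (σ i)) M = (fun i => μ (σ i)) := by
    funext j
    have key : ∑ i, μ (σ i) * M i j = μ (σ j) := by
      calc ∑ i, μ (σ i) * M i j = ∑ i, μ (σ i) * M (σ i) (σ j) :=
            Finset.sum_congr rfl (fun i _ => by rw [hMσ])
        _ = ∑ k, μ k * M k (σ j) := Equiv.sum_comp σ (fun k => μ k * M k (σ j))
        _ = μ (σ j) := hstat' (σ j)
    simpa [Matrix.vecMul, dotProduct] using key
  have hμσ : ∀ i, μ (σ i) = μ i := by
    intro i
    exact congrFun (huniq (fun i => μ (σ i)) (fun i => (hμpos _).le)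
      (by rw [Equiv.sum_comp σ μ, hμsum]) hνstat) i
  -- Pm commutes with the diagonal rescaling matrices
  have hcomm : ∀ f : Fin n → ℝ, (∀ i, f (σ i) = f i) →
      Pm * Matrix.diagonal f = Matrix.diagonal f * Pm := by
    intro f hf
    ext i j
    rw [Matrix.mul_diagonal, Matrix.diagonal_mul, hP]
    rcases eq_or_ne (σ i) j with h | h
    · rw [if_pos h, ← h, hf, one_mul, mul_one]
    · rw [if_neg h, zero_mul, mul_zero]
  set Df : Matrix (Fin n) (Fin n) ℝ := Matrix.diagonal (fun i => Real.sqrt (μ i)) with hDf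
  set Dg : Matrix (Fin n) (Fin n) ℝ :=
    Matrix.diagonal (fun i => (Real.sqrt (μ i))⁻¹) with hDg
  have h1 : Pm * Df = Df * Pm := hcomm _ (fun i => by rw [hμσ])
  have h2 : Pm * Dg = Dg * Pm := hcomm _ (fun i => by rw [hμσ])
  set L : Matrix (Fin n) (Fin n) ℝ := rescaled M μ with hL
  have hLdef : L = Df * M * Dg := rfl
  -- Pm commutes with L
  have hPmL : Pm * L = L * Pm := by
    rw [hLdef, ← Matrix.mul_assoc, ← Matrix.mul_assoc, h1, Matrix.mul_assoc Df Pm M, hPmM,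
      ← Matrix.mul_assoc, Matrix.mul_assoc (Df * M) Pm Dg, h2, ← Matrix.mul_assoc]
  have hPmLt : Pm * Lᵀ = Lᵀ * Pm := by
    have ht : Lᵀ * Pmᵀ = Pmᵀ * Lᵀ := by
      have := congrArg Matrix.transpose hPmL
      simpa [Matrix.transpose_mul] using this
    calc Pm * Lᵀ = Pm * Lᵀ * (Pmᵀ * Pm) := by rw [hPtP, Matrix.mul_one]
      _ = Pm * (Lᵀ * Pmᵀ) * Pm := by simp only [Matrix.mul_assoc]
      _ = Pm * (Pmᵀ * Lᵀ) * Pm := by rw [ht]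
      _ = (Pm * Pmᵀ) * (Lᵀ * Pm) := by simp only [Matrix.mul_assoc]
      _ = Lᵀ * Pm := by rw [hPPt, Matrix.one_mul]
  -- Pm commutes with A = LᵀL
  have hPmA : Pm * (Lᵀ * L) = (Lᵀ * L) * Pm := by
    calc Pm * (Lᵀ * L) = (Pm * Lᵀ) * L := by rw [Matrix.mul_assoc]
      _ = (Lᵀ * Pm) * L := by rw [hPmLt]
      _ = Lᵀ * (Pm * L) := by rw [Matrix.mul_assoc]
      _ = Lᵀ * (L * Pm) := by rw [hPmL]
      _ = (Lᵀ * L) * Pm := by rw [Matrix.mul_assoc]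
  -- A = V (S*S) Vᵀ
  have hST : Sᵀ = S := by
    ext i j
    rw [Matrix.transpose_apply]
    rcases eq_or_ne i j with h | h
    · rw [h]
    · rw [hSoff j i (Ne.symm h), hSoff i j h]
  have hcanU : ∀ X : Matrix (Fin n) (Fin n) ℝ, Uᵀ * (U * X) = X := fun X => by
    rw [← Matrix.mul_assoc, hUU, Matrix.one_mul]
  have hA2 : Lᵀ * L = V * (S * S) * Vᵀ := by
    rw [hA, Matrix.transpose_mul, Matrix.transpose_mul, Matrix.transpose_transpose, hST]
    simp only [Matrix.mul_assoc, hcanU]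
  have hVVt : V * Vᵀ = 1 := mul_eq_one_comm.mp hVV
  have hcanV : ∀ X : Matrix (Fin n) (Fin n) ℝ, Vᵀ * (V * X) = X := fun X => by
    rw [← Matrix.mul_assoc, hVV, Matrix.one_mul]
  set C : Matrix (Fin n) (Fin n) ℝ := Vᵀ * (Pm * V) with hCdef
  have hPmV : Pm * V = V * C := by
    rw [hCdef, ← Matrix.mul_assoc, hVVt, Matrix.one_mul]
  have hAV : (Lᵀ * L) * V = V * (S * S) := by
    rw [hA2, Matrix.mul_assoc, Matrix.mul_assoc, hVV, Matrix.mul_one, ← Matrix.mul_assoc]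
  -- S² commutes with C
  have hkey : (S * S) * C = C * (S * S) := by
    have e1 : (Lᵀ * L) * (Pm * V) = V * ((S * S) * C) := by
      rw [hPmV, ← Matrix.mul_assoc, hAV, Matrix.mul_assoc]
    have e2 : (Lᵀ * L) * (Pm * V) = V * (C * (S * S)) := by
      calc (Lᵀ * L) * (Pm * V) = ((Lᵀ * L) * Pm) * V := (Matrix.mul_assoc (Lᵀ * L) Pm V).symm
        _ = (Pm * (Lᵀ * L)) * V := by rw [hPmA]
        _ = Pm * ((Lᵀ * L) * V) := by rw [Matrix.mul_assoc]
        _ = Pm * (V * (S * S)) := by rw [hAV]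
        _ = (Pm * V) * (S * S) := by rw [Matrix.mul_assoc]
        _ = (V * C) * (S * S) := by rw [hPmV]
        _ = V * (C * (S * S)) := by rw [Matrix.mul_assoc]
    have := e1.symm.trans e2
    calc (S * S) * C = Vᵀ * (V * ((S * S) * C)) := (hcanV _).symm
      _ = Vᵀ * (V * (C * (S * S))) := by rw [this]
      _ = C * (S * S) := hcanV _
  have hSSoff : ∀ i j, i ≠ j → (S * S) i j = 0 := by
    intro i j hij
    rw [diag_mul_apply' S S hSoff i j, hSoff i j hij, mul_zero]
  have hSS : ∀ i, (S * S) i i = S i i * S i i := fun i => diag_mul_apply' S S hSoff i i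
  -- C is diagonal
  have hCoff : ∀ i j, i ≠ j → C i j = 0 := by
    intro i j hij
    have e1 := congrFun (congrFun hkey i) j
    rw [diag_mul_apply' (S * S) C hSSoff i j, mul_diag_apply' C (S * S) hSSoff i j] at e1
    have hne : (S * S) i i ≠ (S * S) j j := by
      rw [hSS i, hSS j]
      intro h
      exact hSdist i j hij ((mul_self_inj (hSnn i) (hSnn j)).mp h)
    rcases mul_eq_zero.mp (show C i j * ((S * S) i i - (S * S) j j) = 0 by
      linear_combination e1) with h | h
    · exact h
    · exact absurd (sub_eq_zero.mp h) hne
  -- column sums force C = 1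
  have hCdiag : ∀ i, C i i = 1 := by
    intro i
    have hsum1 : ∑ k, (Pm * V) k i = ∑ k, V k i := by
      calc ∑ k, (Pm * V) k i = ∑ k, V (σ k) i :=
            Finset.sum_congr rfl (fun k _ => perm_mul_apply σ Pm V hP k i)
        _ = ∑ k, V k i := Equiv.sum_comp σ (fun k => V k i)
    have hsum2 : ∑ k, (V * C) k i = (∑ k, V k i) * C i i := by
      calc ∑ k, (V * C) k i = ∑ k, ∑ l, V k l * C l i := by
            simp only [Matrix.mul_apply]
        _ = ∑ l, ∑ k, V k l * C l i := Finset.sum_comm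
        _ = ∑ l, (∑ k, V k l) * C l i := by simp only [Finset.sum_mul]
        _ = (∑ k, V k i) * C i i := Finset.sum_eq_single i
            (fun b _ hb => by rw [hCoff b i hb, mul_zero])
            (fun hi => absurd (Finset.mem_univ _) hi)
    have : (∑ k, V k i) * 1 = (∑ k, V k i) * C i i := by
      rw [mul_one, ← hsum2, ← hPmV, hsum1]
    exact (mul_left_cancel₀ (hVsum i) this).symm
  have hC1 : C = 1 := by
    ext i j
    rcases eq_or_ne i j with h | h
    · rw [h, hCdiag, Matrix.one_apply_eq]
    · rw [hCoff i j h, Matrix.one_apply_ne h]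
  -- conclude
  have hPmV1 : Pm * V = V := by rw [hPmV, hC1, Matrix.mul_one]
  calc Pm = Pm * (V * Vᵀ) := by rw [hVVt, Matrix.mul_one]
    _ = (Pm * V) * Vᵀ := by rw [Matrix.mul_assoc]
    _ = V * Vᵀ := by rw [hPmV1]
    _ = 1 := hVVt
end
end

section
/- Let L₁ = U₁ΣV₁ᵀ and L₂ = U₂ΣV₂ᵀ be singular value decompositions of two friendly real n×n matrices (with the same Σ, and V₁, V₂ oriented so that V₁ᵀ𝟙 ≥ 0 and V₂ᵀ𝟙 ≥ 0 entrywise), and suppose L₂ = Π*ᵀ L₁ Π* for a permutation matrix Π*. Then Π* is the unique permutation matrix Π satisfying V₂ = Πᵀ V₁. -/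
open Matrix BigOperators

noncomputable section

lemma perm_mul_transpose {n : ℕ} (P : Matrix (Fin n) (Fin n) ℝ)
    (hP : IsPermMatrix P) : P * Pᵀ = 1 := by
  obtain ⟨σ, h⟩ := hP
  ext i j
  simp only [Matrix.mul_apply, Matrix.transpose_apply, h, Matrix.one_apply, ite_mul, one_mul,
    zero_mul]
  rw [Finset.sum_ite_eq (Finset.univ) (σ i)]
  simp [(Equiv.injective σ).eq_iff, eq_comm]

lemma perm_transpose_mul {n : ℕ} (P : Matrix (Fin n) (Fin n) ℝ)
    (hP : IsPermMatrix P) : Pᵀ * P = 1 :=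
  mul_eq_one_comm.mp (perm_mul_transpose P hP)

lemma svd_gram {n : ℕ} (A U S V : Matrix (Fin n) (Fin n) ℝ)
    (hA : A = U * S * Vᵀ) (hU : Uᵀ * U = 1) (hS : Sᵀ = S) :
    Aᵀ * A = V * (S * S) * Vᵀ := by
  subst hA
  simp only [Matrix.transpose_mul, Matrix.transpose_transpose, Matrix.mul_assoc, hS]
  rw [← Matrix.mul_assoc Uᵀ U, hU, Matrix.one_mul]

/-- Let `L₁ = U₁ S V₁ᵀ` and `L₂ = U₂ S V₂ᵀ` be oriented singular value decompositions of two
friendly matrices (friendliness expressed by the distinctness of the shared singular values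
and the nonvanishing of `V₁ᵀ𝟙` and `V₂ᵀ𝟙`), and suppose `L₂ = Π*ᵀ L₁ Π*` for a
permutation matrix `Π*`.  Then `Π*` is the unique permutation matrix `Π` with `V₂ = Πᵀ V₁`. -/
theorem svd_perm_recovery {n : ℕ}
    (L₁ L₂ U₁ U₂ S V₁ V₂ Pstar : Matrix (Fin n) (Fin n) ℝ)
    (h₁ : IsSVD L₁ U₁ S V₁) (h₂ : IsSVD L₂ U₂ S V₂)
    (hor₁ : ColOriented V₁) (hor₂ : ColOriented V₂)
    (hdist : ∀ i j, i ≠ j → S i i ≠ S j j)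
    (hnz₁ : ∀ i, (∑ k, V₁ k i) ≠ 0) (hnz₂ : ∀ i, (∑ k, V₂ k i) ≠ 0)
    (hP : IsPermMatrix Pstar) (hiso : L₂ = Pstarᵀ * L₁ * Pstar) :
    V₂ = Pstarᵀ * V₁ ∧
      ∀ Q : Matrix (Fin n) (Fin n) ℝ, IsPermMatrix Q → V₂ = Qᵀ * V₁ → Q = Pstar := by
  obtain ⟨hL₁, hU₁, hV₁, hSoff, hSnn, -⟩ := h₁
  obtain ⟨hL₂, hU₂, hV₂, -, -, -⟩ := h₂
  -- S is symmetric
  have hS : Sᵀ = S := by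
    ext i j
    by_cases h : i = j
    · subst h; rfl
    · rw [Matrix.transpose_apply, hSoff j i (Ne.symm h), hSoff i j h]
  set D := S * S with hDdef
  -- D is diagonal with distinct diagonal entries
  have hDoff : ∀ i j, i ≠ j → D i j = 0 := by
    intro i j h
    rw [hDdef, Matrix.mul_apply]
    apply Finset.sum_eq_zero
    intro k _
    by_cases hk : i = k
    · subst hk; rw [hSoff i j h, mul_zero]
    · rw [hSoff i k hk, zero_mul]
  have hDdiag : ∀ i, D i i = S i i * S i i := by
    intro i
    rw [hDdef, Matrix.mul_apply]
    rw [Finset.sum_eq_single i]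
    · intro k _ hk; rw [hSoff i k (Ne.symm hk), zero_mul]
    · intro h; exact absurd (Finset.mem_univ i) h
  have hDdist : ∀ i j, i ≠ j → D i i ≠ D j j := by
    intro i j h heq
    rw [hDdiag, hDdiag] at heq
    exact hdist i j h (by nlinarith [hSnn i, hSnn j, hdist i j h])
  have hPP : Pstar * Pstarᵀ = 1 := perm_mul_transpose Pstar hP
  have hPtP : Pstarᵀ * Pstar = 1 := perm_transpose_mul Pstar hP
  set W := Pstarᵀ * V₁ with hWdef
  have hWtW : Wᵀ * W = 1 := by
    rw [hWdef, Matrix.transpose_mul, Matrix.transpose_transpose, Matrix.mul_assoc,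
      ← Matrix.mul_assoc Pstar, hPP, Matrix.one_mul, hV₁]
  have hWWt : W * Wᵀ = 1 := mul_eq_one_comm.mp hWtW
  have hV₂V₂t : V₂ * V₂ᵀ = 1 := mul_eq_one_comm.mp hV₂
  -- gram matrix identity
  have hkey : V₂ * D * V₂ᵀ = W * D * Wᵀ := by
    have g2 : L₂ᵀ * L₂ = V₂ * D * V₂ᵀ := svd_gram L₂ U₂ S V₂ hL₂ hU₂ hS
    have g1 : L₁ᵀ * L₁ = V₁ * D * V₁ᵀ := svd_gram L₁ U₁ S V₁ hL₁ hU₁ hS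
    have t : L₂ᵀ * L₂ = Pstarᵀ * (L₁ᵀ * L₁) * Pstar := by
      rw [hiso]
      simp only [Matrix.transpose_mul, Matrix.transpose_transpose, Matrix.mul_assoc]
      rw [← Matrix.mul_assoc Pstar Pstarᵀ, hPP, Matrix.one_mul]
    rw [← g2, t, g1, hWdef]
    simp only [Matrix.transpose_mul, Matrix.transpose_transpose, Matrix.mul_assoc]
  -- X := Wᵀ * V₂ commutes with D
  have hcomm : (Wᵀ * V₂) * D = D * (Wᵀ * V₂) := by
    have e := congrArg (fun M => Wᵀ * M * V₂) hkey
    simp only [Matrix.mul_assoc] at e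
    rw [hV₂, Matrix.mul_one, ← Matrix.mul_assoc Wᵀ W, hWtW, Matrix.one_mul] at e
    simp only [Matrix.mul_assoc]
    exact e
  -- X is diagonal
  have hXoff : ∀ i j, i ≠ j → (Wᵀ * V₂) i j = 0 := by
    intro i j hij
    have e1 : ((Wᵀ * V₂) * D) i j = (Wᵀ * V₂) i j * D j j := by
      rw [Matrix.mul_apply, Finset.sum_eq_single j]
      · intro k _ hk; rw [hDoff k j hk, mul_zero]
      · intro h; exact absurd (Finset.mem_univ j) h
    have e2 : (D * (Wᵀ * V₂)) i j = D i i * (Wᵀ * V₂) i j := by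
      rw [Matrix.mul_apply, Finset.sum_eq_single i]
      · intro k _ hk; rw [hDoff i k (Ne.symm hk), zero_mul]
      · intro h; exact absurd (Finset.mem_univ i) h
    have e3 : (Wᵀ * V₂) i j * D j j = D i i * (Wᵀ * V₂) i j := by
      rw [← e1, ← e2, hcomm]
    have hne : D i i ≠ D j j := hDdist i j hij
    by_contra hXne
    apply hne
    have := mul_left_cancel₀ hXne (by linarith [e3, mul_comm ((Wᵀ * V₂) i j) (D j j)] : (Wᵀ * V₂) i j * D j j = (Wᵀ * V₂) i j * D i i)
    linarith [this]
  -- X is orthogonal, so diagonal entries square to 1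
  have hXtX : (Wᵀ * V₂)ᵀ * (Wᵀ * V₂) = 1 := by
    simp only [Matrix.transpose_mul, Matrix.transpose_transpose, Matrix.mul_assoc]
    rw [← Matrix.mul_assoc W Wᵀ, hWWt, Matrix.one_mul, hV₂]
  have hXsq : ∀ i, (Wᵀ * V₂) i i * (Wᵀ * V₂) i i = 1 := by
    intro i
    have := congrFun (congrFun hXtX i) i
    rw [Matrix.mul_apply, Finset.sum_eq_single i] at this
    · rw [Matrix.transpose_apply] at this
      simpa using this
    · intro k _ hk
      rw [Matrix.transpose_apply, hXoff k i hk, zero_mul]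
    · intro h; exact absurd (Finset.mem_univ i) h
  -- V₂ = W * X
  have hV2WX : V₂ = W * (Wᵀ * V₂) := by
    rw [← Matrix.mul_assoc, hWWt, Matrix.one_mul]
  -- column sums of W equal column sums of V₁
  obtain ⟨σ, hσ⟩ := hP
  have hWsum : ∀ i, ∑ k, W k i = ∑ k, V₁ k i := by
    intro i
    rw [hWdef]
    simp only [Matrix.mul_apply, Matrix.transpose_apply]
    rw [Finset.sum_comm]
    apply Finset.sum_congr rfl
    intro m _
    rw [← Finset.sum_mul]
    have : ∑ k, Pstar m k = 1 := by
      simp [hσ]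
    rw [this, one_mul]
  -- column sums of V₂ = X i i * column sums of W
  have hV2sum : ∀ i, ∑ k, V₂ k i = (∑ k, W k i) * (Wᵀ * V₂) i i := by
    intro i
    have hent : ∀ k, V₂ k i = W k i * (Wᵀ * V₂) i i := by
      intro k
      conv_lhs => rw [hV2WX]
      rw [Matrix.mul_apply, Finset.sum_eq_single i]
      · intro m _ hm; rw [hXoff m i hm, mul_zero]
      · intro h; exact absurd (Finset.mem_univ i) h
    rw [Finset.sum_congr rfl (fun k _ => hent k), Finset.sum_mul]
  -- diagonal entries of X are 1
  have hXdiag : ∀ i, (Wᵀ * V₂) i i = 1 := by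
    intro i
    have h1 : 0 < ∑ k, V₁ k i := lt_of_le_of_ne (hor₁ i) (Ne.symm (hnz₁ i))
    have h2 : 0 < ∑ k, V₂ k i := lt_of_le_of_ne (hor₂ i) (Ne.symm (hnz₂ i))
    have hw : 0 < ∑ k, W k i := by rw [hWsum i]; exact h1
    have hpos : 0 < (Wᵀ * V₂) i i := by
      have := hV2sum i
      nlinarith
    nlinarith [hXsq i]
  have hX1 : Wᵀ * V₂ = 1 := by
    ext i j
    by_cases h : i = j
    · subst h; rw [hXdiag i, Matrix.one_apply_eq]
    · rw [hXoff i j h, Matrix.one_apply_ne h]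
  have hmain : V₂ = Pstarᵀ * V₁ := by
    rw [← hWdef, hV2WX, hX1, Matrix.mul_one]
  refine ⟨hmain, ?_⟩
  intro Q hQ hQV
  have hV₁V₁t : V₁ * V₁ᵀ = 1 := mul_eq_one_comm.mp hV₁
  have : Qᵀ * V₁ = Pstarᵀ * V₁ := by rw [← hQV, hmain]
  have e := congrArg (fun M => M * V₁ᵀ) this
  simp only [Matrix.mul_assoc, hV₁V₁t, Matrix.mul_one] at e
  have : Qᵀᵀ = Pstarᵀᵀ := congrArg Matrix.transpose e
  simpa using this
end
end

section
/- Let M be an ergodic row-stochastic matrix on a finite state space whose rescaled transition matrix is friendly, let Π* be a permutation matrix, and let L₁ = U₁ΣV₁ᵀ and L₂ = U₂ΣV₂ᵀ be singular value decompositions (with V₁ᵀ𝟙 ≥ 0 and V₂ᵀ𝟙 ≥ 0 entrywise) of the rescaled transition matrices of M and of Π*ᵀ M Π* respectively. Then the linear assignment problem min over permutation matrices Π of ‖V₂ − ΠᵀV₁‖_F attains its minimum value 0 uniquely at Π = Π*; in particular Π* can be exactly recovered from M and Π*ᵀMΠ*. -/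
open Matrix BigOperators

noncomputable section

/-- The Frobenius norm of a real matrix. -/
def frobNorm {m n : Type*} [Fintype m] [Fintype n] (A : Matrix m n ℝ) : ℝ :=
  Real.sqrt (∑ i, ∑ j, (A i j) ^ 2)

section AuxLemmas
variable {n : ℕ}


lemma perm_tmul {P : Matrix (Fin n) (Fin n) ℝ} {σ : Equiv.Perm (Fin n)}
    (hP : ∀ i j, P i j = if σ i = j then 1 else 0) : Pᵀ * P = 1 := by
  ext i j
  simp only [Matrix.mul_apply, Matrix.transpose_apply, hP, Matrix.one_apply]
  rw [Fintype.sum_equiv σ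
      (fun k => (if σ k = i then (1:ℝ) else 0) * (if σ k = j then 1 else 0))
      (fun m => (if m = i then (1:ℝ) else 0) * (if m = j then 1 else 0))
      (fun x => rfl)]
  simp only [ite_mul, one_mul, zero_mul, Finset.sum_ite_eq, Finset.mem_univ, if_true]
  by_cases h : i = j <;> simp [h]

lemma perm_mult {P : Matrix (Fin n) (Fin n) ℝ} {σ : Equiv.Perm (Fin n)}
    (hP : ∀ i j, P i j = if σ i = j then 1 else 0) : P * Pᵀ = 1 := by
  ext i j
  simp only [Matrix.mul_apply, Matrix.transpose_apply, hP, Matrix.one_apply]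
  rw [Finset.sum_eq_single (σ i)]
  · by_cases h : i = j <;> simp [h, (Equiv.injective σ).eq_iff, eq_comm]
  · intro b _ hb
    simp [Ne.symm hb]
  · simp

lemma perm_colsum {P A : Matrix (Fin n) (Fin n) ℝ} {σ : Equiv.Perm (Fin n)}
    (hP : ∀ i j, P i j = if σ i = j then 1 else 0) (i : Fin n) :
    ∑ k, (Pᵀ * A) k i = ∑ k, A k i := by
  simp only [Matrix.mul_apply, Matrix.transpose_apply]
  rw [Finset.sum_comm]
  have h : ∀ l, ∑ k, P l k * A l i = A l i := by
    intro l
    simp [hP, ite_mul, one_mul, zero_mul, Finset.sum_ite_eq]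
  simp [h]

lemma perm_diag_comm {P : Matrix (Fin n) (Fin n) ℝ} {σ : Equiv.Perm (Fin n)}
    (hP : ∀ i j, P i j = if σ i = j then 1 else 0) (f : Fin n → ℝ) :
    Matrix.diagonal f * P = P * Matrix.diagonal (fun i => f (σ.symm i)) := by
  ext i j
  rw [Matrix.diagonal_mul, Matrix.mul_diagonal, hP]
  by_cases h : σ i = j
  · subst h
    simp
  · simp [h]

lemma perm_diag_conj {P : Matrix (Fin n) (Fin n) ℝ} {σ : Equiv.Perm (Fin n)}
    (hP : ∀ i j, P i j = if σ i = j then 1 else 0) (f : Fin n → ℝ) :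
    Pᵀ * Matrix.diagonal f * P = Matrix.diagonal (fun i => f (σ.symm i)) := by
  rw [Matrix.mul_assoc, perm_diag_comm hP, ← Matrix.mul_assoc, perm_tmul hP, Matrix.one_mul]



variable {n : ℕ}


lemma svd_V_unique {U S V U' V' : Matrix (Fin n) (Fin n) ℝ}
    (hU : Uᵀ * U = 1) (hV : Vᵀ * V = 1) (hU' : U'ᵀ * U' = 1) (hV' : V'ᵀ * V' = 1)
    (hA : U * S * Vᵀ = U' * S * V'ᵀ)
    (hSd : ∀ i j, i ≠ j → S i j = 0) (hSnn : ∀ i, 0 ≤ S i i)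
    (hdist : ∀ i j, i ≠ j → S i i ≠ S j j)
    (hor : ColOriented V) (hor' : ColOriented V')
    (hnz : ∀ i, (∑ k, V' k i) ≠ 0) : V = V' := by
  set s : Fin n → ℝ := fun i => S i i with hs
  have hSdiag : S = Matrix.diagonal s := by
    ext i j
    by_cases h : i = j
    · subst h; simp [Matrix.diagonal_apply_eq, hs]
    · simp [Matrix.diagonal_apply_ne _ h, hSd i j h]
  set D : Matrix (Fin n) (Fin n) ℝ := Matrix.diagonal (fun i => s i * s i) with hD
  have hVV : V * Vᵀ = 1 := mul_eq_one_comm.mp hV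
  have hV'V' : V' * V'ᵀ = 1 := mul_eq_one_comm.mp hV'
  -- AᵀA computed two ways
  have hATA : V * D * Vᵀ = V' * D * V'ᵀ := by
    have e1 : (U * S * Vᵀ)ᵀ * (U * S * Vᵀ) = V * D * Vᵀ := by
      rw [hSdiag]
      calc (U * Matrix.diagonal s * Vᵀ)ᵀ * (U * Matrix.diagonal s * Vᵀ)
          = V * Matrix.diagonal s * (Uᵀ * U) * Matrix.diagonal s * Vᵀ := by
            simp only [Matrix.transpose_mul, Matrix.transpose_transpose,
              Matrix.diagonal_transpose, Matrix.mul_assoc]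
        _ = V * D * Vᵀ := by
            rw [hU, Matrix.mul_one, hD, Matrix.mul_assoc V, Matrix.diagonal_mul_diagonal]
    have e2 : (U' * S * V'ᵀ)ᵀ * (U' * S * V'ᵀ) = V' * D * V'ᵀ := by
      rw [hSdiag]
      calc (U' * Matrix.diagonal s * V'ᵀ)ᵀ * (U' * Matrix.diagonal s * V'ᵀ)
          = V' * Matrix.diagonal s * (U'ᵀ * U') * Matrix.diagonal s * V'ᵀ := by
            simp only [Matrix.transpose_mul, Matrix.transpose_transpose,
              Matrix.diagonal_transpose, Matrix.mul_assoc]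
        _ = V' * D * V'ᵀ := by
            rw [hU', Matrix.mul_one, hD, Matrix.mul_assoc V', Matrix.diagonal_mul_diagonal]
    rw [← e1, ← e2, hA]
  have hcomm : (V'ᵀ * V) * D = D * (V'ᵀ * V) := by
    have h := congrArg (fun X => V'ᵀ * X * V) hATA
    calc V'ᵀ * V * D = V'ᵀ * (V * D * Vᵀ) * V := by
          simp only [Matrix.mul_assoc, hV, Matrix.mul_one]
      _ = V'ᵀ * (V' * D * V'ᵀ) * V := h
      _ = D * (V'ᵀ * V) := by
          simp only [Matrix.mul_assoc]
          rw [← Matrix.mul_assoc V'ᵀ V', hV', Matrix.one_mul]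
  have hWoff : ∀ i j, i ≠ j → (V'ᵀ * V) i j = 0 := by
    intro i j hij
    have h1 : ((V'ᵀ * V) * D) i j = (V'ᵀ * V) i j * (s j * s j) := Matrix.mul_diagonal _ _ _ _
    have h2 : (D * (V'ᵀ * V)) i j = (s i * s i) * (V'ᵀ * V) i j := Matrix.diagonal_mul _ _ _ _
    have h3 : (V'ᵀ * V) i j * (s j * s j) = (s i * s i) * (V'ᵀ * V) i j := by
      rw [← h1, ← h2, hcomm]
    by_contra hne
    have h4 : s j * s j = s i * s i :=
      mul_left_cancel₀ hne (by linarith [h3])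
    have h5 : (s j - s i) * (s j + s i) = 0 := by linear_combination h4
    rcases mul_eq_zero.mp h5 with h6 | h6
    · exact hdist i j hij (by simpa [hs] using (by linarith : s i = s j))
    · have hi := hSnn i
      have hj := hSnn j
      exact hdist i j hij (by simp only [hs] at h6 ⊢; linarith)
  have hWsq : ∀ i, (V'ᵀ * V) i i * (V'ᵀ * V) i i = 1 := by
    intro i
    have hWW : (V'ᵀ * V)ᵀ * (V'ᵀ * V) = 1 := by
      rw [Matrix.transpose_mul, Matrix.transpose_transpose, Matrix.mul_assoc,
        ← Matrix.mul_assoc V' V'ᵀ V, hV'V', Matrix.one_mul, hV]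
    have h1 : ((V'ᵀ * V)ᵀ * (V'ᵀ * V)) i i = 1 := by rw [hWW]; simp [Matrix.one_apply]
    rw [Matrix.mul_apply] at h1
    rw [← h1, Finset.sum_eq_single i
      (fun b _ hb => by rw [Matrix.transpose_apply, hWoff b i hb, zero_mul])
      (fun h => absurd (Finset.mem_univ i) h)]
    rfl
  have hVeq : V = V' * (V'ᵀ * V) := by
    rw [← Matrix.mul_assoc, hV'V', Matrix.one_mul]
  have hWone : ∀ i, (V'ᵀ * V) i i = 1 := by
    intro i
    have hcs : ∑ k, V k i = (∑ k, V' k i) * (V'ᵀ * V) i i := by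
      calc ∑ k, V k i = ∑ k, (V' * (V'ᵀ * V)) k i := by rw [← hVeq]
        _ = ∑ k, ∑ l, V' k l * (V'ᵀ * V) l i := by simp [Matrix.mul_apply]
        _ = ∑ k, V' k i * (V'ᵀ * V) i i := by
            refine Finset.sum_congr rfl (fun k _ => ?_)
            rw [Finset.sum_eq_single i
              (fun b _ hb => by rw [hWoff b i hb, mul_zero])
              (fun h => absurd (Finset.mem_univ i) h)]
        _ = (∑ k, V' k i) * (V'ᵀ * V) i i := by rw [Finset.sum_mul]
    have hc : 0 < ∑ k, V' k i := lt_of_le_of_ne (hor' i) (Ne.symm (hnz i))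
    have hw0 : 0 ≤ (V'ᵀ * V) i i := by
      by_contra hneg
      push_neg at hneg
      have h1 : (∑ k, V' k i) * (V'ᵀ * V) i i < 0 := mul_neg_of_pos_of_neg hc hneg
      have h2 := hor i
      rw [hcs] at h2
      linarith
    have h5 : ((V'ᵀ * V) i i - 1) * ((V'ᵀ * V) i i + 1) = 0 := by linear_combination hWsq i
    rcases mul_eq_zero.mp h5 with h6 | h6
    · linarith
    · linarith
  have hWid : V'ᵀ * V = 1 := by
    ext i j
    by_cases h : i = j
    · subst h; simp [hWone i, Matrix.one_apply]
    · simp [hWoff i j h, Matrix.one_apply, h]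
  rw [hVeq, hWid, Matrix.mul_one]



end AuxLemmas

lemma frob_helper {n : ℕ} (A : Matrix (Fin n) (Fin n) ℝ) (h : A ≠ 0) :
    0 < ∑ i, ∑ j, (A i j) ^ 2 := by
  have : ∃ i j, A i j ≠ 0 := by
    by_contra hc
    push_neg at hc
    exact h (by ext i j; simpa using hc i j)
  obtain ⟨i, j, hij⟩ := this
  have h1 : 0 < ∑ j, (A i j) ^ 2 := by
    apply Finset.sum_pos' (fun k _ => sq_nonneg _)
    exact ⟨j, Finset.mem_univ j, by positivity⟩
  apply Finset.sum_pos' (fun k _ => Finset.sum_nonneg (fun l _ => sq_nonneg _))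
  exact ⟨i, Finset.mem_univ i, h1⟩

/-- Exact recovery of the alignment via linear assignment: for an ergodic row-stochastic `M`
with unique stationary distribution `μ`, whose rescaled transition matrix `L₁` is friendly
(distinct singular values, `V₁ᵀ𝟙` nonvanishing, oriented SVD `L₁ = U₁ S V₁ᵀ`), a permutation
matrix `Π*` (with permutation `σ`), and an oriented SVD `L₂ = U₂ S V₂ᵀ` of the rescaled
transition matrix of `Π*ᵀ M Π*` (whose stationary distribution is `μ ∘ σ⁻¹`), the linear
assignment problem `min_Π ‖V₂ − Πᵀ V₁‖_F` attains its minimum value `0` uniquely at `Π = Π*`. -/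
theorem exact_symmetry_recovery {n : ℕ} (M : Matrix (Fin n) (Fin n) ℝ) (μ : Fin n → ℝ)
    (hMnn : ∀ i j, 0 ≤ M i j) (hMrow : ∀ i, ∑ j, M i j = 1)
    (hμpos : ∀ i, 0 < μ i) (hμsum : ∑ i, μ i = 1)
    (hstat : Matrix.vecMul μ M = μ)
    (huniq : ∀ ν : Fin n → ℝ, (∀ i, 0 ≤ ν i) → ∑ i, ν i = 1 →
      Matrix.vecMul ν M = ν → ν = μ)
    (σ : Equiv.Perm (Fin n)) (Pstar : Matrix (Fin n) (Fin n) ℝ)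
    (hPstar : ∀ i j, Pstar i j = if σ i = j then 1 else 0)
    (U₁ S V₁ U₂ V₂ : Matrix (Fin n) (Fin n) ℝ)
    (h₁ : IsSVD (rescaled M μ) U₁ S V₁) (hor₁ : ColOriented V₁)
    (h₂ : IsSVD (rescaled (Pstarᵀ * M * Pstar) (fun j => μ (σ.symm j))) U₂ S V₂)
    (hor₂ : ColOriented V₂)
    (hdist : ∀ i j, i ≠ j → S i i ≠ S j j)
    (hnz₁ : ∀ i, (∑ k, V₁ k i) ≠ 0) :
    frobNorm (V₂ - Pstarᵀ * V₁) = 0 ∧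
      ∀ Q : Matrix (Fin n) (Fin n) ℝ, IsPermMatrix Q → Q ≠ Pstar →
        0 < frobNorm (V₂ - Qᵀ * V₁) := by
  obtain ⟨hA1, hU1, hV1, hSd1, hSnn1, _⟩ := h₁
  obtain ⟨hA2, hU2, hV2, hSd2, hSnn2, _⟩ := h₂
  have hPPt : Pstar * Pstarᵀ = 1 := perm_mult hPstar
  have hPtP : Pstarᵀ * Pstar = 1 := perm_tmul hPstar
  have hcl : ∀ X : Matrix (Fin n) (Fin n) ℝ, Pstar * (Pstarᵀ * X) = X := fun X => by
    rw [← Matrix.mul_assoc, hPPt, Matrix.one_mul]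
  have key : rescaled (Pstarᵀ * M * Pstar) (fun j => μ (σ.symm j)) =
      Pstarᵀ * rescaled M μ * Pstar := by
    unfold rescaled
    rw [← perm_diag_conj hPstar (fun i => Real.sqrt (μ i)),
      ← perm_diag_conj hPstar (fun i => (Real.sqrt (μ i))⁻¹)]
    simp only [Matrix.mul_assoc, hcl]
  have heq : U₂ * S * V₂ᵀ = (Pstarᵀ * U₁) * S * (Pstarᵀ * V₁)ᵀ := by
    rw [← hA2, key, hA1, Matrix.transpose_mul, Matrix.transpose_transpose]
    simp only [Matrix.mul_assoc]
  have hU' : (Pstarᵀ * U₁)ᵀ * (Pstarᵀ * U₁) = 1 := by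
    rw [Matrix.transpose_mul, Matrix.transpose_transpose, Matrix.mul_assoc,
      ← Matrix.mul_assoc Pstar Pstarᵀ U₁, hPPt, Matrix.one_mul, hU1]
  have hV' : (Pstarᵀ * V₁)ᵀ * (Pstarᵀ * V₁) = 1 := by
    rw [Matrix.transpose_mul, Matrix.transpose_transpose, Matrix.mul_assoc,
      ← Matrix.mul_assoc Pstar Pstarᵀ V₁, hPPt, Matrix.one_mul, hV1]
  have hor' : ColOriented (Pstarᵀ * V₁) := fun i => by
    rw [perm_colsum hPstar]; exact hor₁ i
  have hnz' : ∀ i, (∑ k, (Pstarᵀ * V₁) k i) ≠ 0 := fun i => by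
    rw [perm_colsum hPstar]; exact hnz₁ i
  have hVV2 : V₂ = Pstarᵀ * V₁ :=
    svd_V_unique hU2 hV2 hU' hV' heq hSd2 hSnn2 hdist hor₂ hor' hnz'
  constructor
  · rw [hVV2, sub_self]
    unfold frobNorm
    simp
  · intro Q _ hne
    have hV1V1t : V₁ * V₁ᵀ = 1 := mul_eq_one_comm.mp hV1
    have hsub : V₂ - Qᵀ * V₁ ≠ 0 := by
      rw [hVV2]
      intro h
      have hQV : Pstarᵀ * V₁ = Qᵀ * V₁ := sub_eq_zero.mp h
      have h2 := congrArg (fun X => X * V₁ᵀ) hQV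
      simp only [Matrix.mul_assoc, hV1V1t, Matrix.mul_one] at h2
      exact hne (Matrix.transpose_inj.mp h2.symm)
    unfold frobNorm
    exact Real.sqrt_pos.mpr (frob_helper _ hsub)
end
end

section
/- Policy Difference Lemma: for any two policies φ₁, φ₂ on a finite MDP with dynamics P, initial distribution p₀, discount γ ∈ [0,1), and any reward R : S×A → ℝ, it holds that Σ_s p₀(s)·(V_{φ₁,R}(s) − V_{φ₂,R}(s)) = (1/(1−γ)) · Σ_s μ_{φ₁}(s) · A^R_{φ₁,φ₂}(s), where A^R_{φ₁,φ₂}(s) = Σ_a φ₁(a|s)·(R(s,a) + γ Σ_{s'} P(s'|s,a) V_{φ₂,R}(s') − V_{φ₂,R}(s)) is the average advantage function. -/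
open Matrix BigOperators

noncomputable section

/-- The Markov chain on states induced by following policy `φ` in an MDP with
dynamics `P`: `P_φ(s'|s) = Σ_a φ(a|s) P(s'|s,a)`. -/
def inducedChain {S A : Type*} [Fintype A] (P : S → A → S → ℝ) (φ : S → A → ℝ) :
    Matrix S S ℝ :=
  Matrix.of fun s s' => ∑ a, φ s a * P s a s'

/-- The value function `V_{φ,R} = Σ_{i≥0} γⁱ P_φⁱ r_φ`, where `r_φ(s) = Σ_a φ(a|s) R(s,a)`. -/
def valueFn {S A : Type*} [Fintype S] [Fintype A] [DecidableEq S]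
    (P : S → A → S → ℝ) (φ : S → A → ℝ) (γ : ℝ) (R : S → A → ℝ) : S → ℝ :=
  fun s => ∑' i : ℕ, γ ^ i *
    ((inducedChain P φ ^ i).mulVec (fun s' => ∑ a, φ s' a * R s' a)) s

/-- The state occupancy `μ_φ = (1-γ) Σ_{i≥0} γⁱ (P_φᵀ)ⁱ p₀`. -/
def stateOcc {S A : Type*} [Fintype S] [Fintype A] [DecidableEq S]
    (P : S → A → S → ℝ) (φ : S → A → ℝ) (γ : ℝ) (p₀ : S → ℝ) : S → ℝ :=
  fun s => (1 - γ) * ∑' i : ℕ, γ ^ i * (((inducedChain P φ)ᵀ ^ i).mulVec p₀) s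

/-- The occupancy measure `ρ_φ(s,a) = φ(a|s)·μ_φ(s)`. -/
def occMeasure {S A : Type*} [Fintype S] [Fintype A] [DecidableEq S]
    (P : S → A → S → ℝ) (φ : S → A → ℝ) (γ : ℝ) (p₀ : S → ℝ) (s : S) (a : A) : ℝ :=
  φ s a * stateOcc P φ γ p₀ s

section Aux

variable {S : Type*} [Fintype S] [DecidableEq S]

attribute [local instance] Matrix.linftyOpNormedAddCommGroup Matrix.linftyOpNormedRing
  Matrix.linftyOpNormedSpace

lemma stochastic_norm_le_one (M : Matrix S S ℝ) (hnn : ∀ s s', 0 ≤ M s s')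
    (hsum : ∀ s, ∑ s', M s s' = 1) : ‖M‖ ≤ 1 := by
  rw [Matrix.linfty_opNorm_def]
  have h : ∀ i : S, ∑ j, ‖M i j‖₊ ≤ 1 := by
    intro i
    have : ((∑ j, ‖M i j‖₊ : NNReal) : ℝ) = 1 := by
      push_cast
      simp only [coe_nnnorm, Real.norm_eq_abs]
      rw [Finset.sum_congr rfl fun j _ => abs_of_nonneg (hnn i j)]
      exact hsum i
    exact le_of_eq (NNReal.coe_injective (by simpa using this))
  have : ((Finset.univ : Finset S).sup fun i => ∑ j, ‖M i j‖₊) ≤ 1 :=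
    Finset.sup_le fun i _ => h i
  exact_mod_cast this

lemma smul_norm_lt_one (M : Matrix S S ℝ) (hnn : ∀ s s', 0 ≤ M s s')
    (hsum : ∀ s, ∑ s', M s s' = 1) {γ : ℝ} (hγ0 : 0 ≤ γ) (hγ1 : γ < 1) :
    ‖γ • M‖ < 1 := by
  calc ‖γ • M‖ = ‖γ‖ * ‖M‖ := norm_smul γ M
    _ ≤ γ * 1 := by
        rw [Real.norm_eq_abs, abs_of_nonneg hγ0]
        exact mul_le_mul_of_nonneg_left (stochastic_norm_le_one M hnn hsum) hγ0
    _ < 1 := by linarith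

/-- evaluation map as a continuous linear map -/
def evalCLM (f : S → ℝ) (s : S) : Matrix S S ℝ →L[ℝ] ℝ :=
  LinearMap.toContinuousLinearMap
    { toFun := fun N => (N *ᵥ f) s
      map_add' := fun N₁ N₂ => by simp [Matrix.add_mulVec]
      map_smul' := fun c N => by simp [Matrix.smul_mulVec] }

lemma key_tsum_mulVec (M : Matrix S S ℝ) {γ : ℝ} (hγ : ‖γ • M‖ < 1) (f : S → ℝ) (s : S) :
    ∑' i : ℕ, γ ^ i * ((M ^ i) *ᵥ f) s = ((∑' i : ℕ, (γ • M) ^ i) *ᵥ f) s := by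
  have hs := (summable_geometric_of_norm_lt_one hγ).hasSum
  have h2 := (hs.mapL (evalCLM f s)).tsum_eq
  have h3 : ∀ i : ℕ, (evalCLM f s) ((γ • M) ^ i) = γ ^ i * ((M ^ i) *ᵥ f) s := by
    intro i
    show (((γ • M) ^ i) *ᵥ f) s = _
    rw [smul_pow, Matrix.smul_mulVec]
    simp
  exact (tsum_congr h3).symm.trans h2

lemma key_tsum_mulVec_transpose (M : Matrix S S ℝ) {γ : ℝ} (hγ : ‖γ • M‖ < 1)
    (f : S → ℝ) (s : S) :
    ∑' i : ℕ, γ ^ i * ((Mᵀ ^ i) *ᵥ f) s = ((∑' i : ℕ, (γ • M) ^ i)ᵀ *ᵥ f) s := by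
  have hs := (summable_geometric_of_norm_lt_one hγ).hasSum
  let L : Matrix S S ℝ →L[ℝ] ℝ :=
    LinearMap.toContinuousLinearMap
      { toFun := fun N => (Nᵀ *ᵥ f) s
        map_add' := fun N₁ N₂ => by simp [Matrix.transpose_add, Matrix.add_mulVec]
        map_smul' := fun c N => by simp [Matrix.transpose_smul, Matrix.smul_mulVec] }
  have h2 := (hs.mapL L).tsum_eq
  have h3 : ∀ i : ℕ, L ((γ • M) ^ i) = γ ^ i * ((Mᵀ ^ i) *ᵥ f) s := by
    intro i
    show ((((γ • M) ^ i)ᵀ) *ᵥ f) s = _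
    rw [smul_pow, Matrix.transpose_smul, Matrix.smul_mulVec, Matrix.transpose_pow]
    simp
  exact (tsum_congr h3).symm.trans h2

end Aux

section Main

attribute [local instance] Matrix.linftyOpNormedAddCommGroup Matrix.linftyOpNormedRing
  Matrix.linftyOpNormedSpace

/-- Policy Difference Lemma: for any two policies `φ₁, φ₂` on a finite MDP and any reward `R`,
`Σ_s p₀(s)(V_{φ₁,R}(s) − V_{φ₂,R}(s)) = (1/(1−γ)) Σ_s μ_{φ₁}(s) A^R_{φ₁,φ₂}(s)`,
where `A^R_{φ₁,φ₂}(s) = Σ_a φ₁(a|s)(R(s,a) + γ Σ_{s'} P(s'|s,a) V_{φ₂,R}(s') − V_{φ₂,R}(s))`. -/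
theorem policy_difference_lemma {S A : Type*} [Fintype S] [Fintype A] [DecidableEq S]
    (P : S → A → S → ℝ)
    (hPnn : ∀ s a s', 0 ≤ P s a s') (hPsum : ∀ s a, ∑ s', P s a s' = 1)
    (p₀ : S → ℝ) (hp₀nn : ∀ s, 0 ≤ p₀ s) (hp₀sum : ∑ s, p₀ s = 1)
    (φ₁ φ₂ : S → A → ℝ)
    (hφ₁nn : ∀ s a, 0 ≤ φ₁ s a) (hφ₁sum : ∀ s, ∑ a, φ₁ s a = 1)
    (hφ₂nn : ∀ s a, 0 ≤ φ₂ s a) (hφ₂sum : ∀ s, ∑ a, φ₂ s a = 1)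
    (γ : ℝ) (hγ0 : 0 ≤ γ) (hγ1 : γ < 1) (R : S → A → ℝ) :
    ∑ s, p₀ s * (valueFn P φ₁ γ R s - valueFn P φ₂ γ R s) =
      (1 / (1 - γ)) * ∑ s, stateOcc P φ₁ γ p₀ s *
        (∑ a, φ₁ s a *
          (R s a + γ * (∑ s', P s a s' * valueFn P φ₂ γ R s') - valueFn P φ₂ γ R s)) := by
  set M₁ := inducedChain P φ₁ with hM₁def
  have hM₁nn : ∀ s s', 0 ≤ M₁ s s' := fun s s' =>
    Finset.sum_nonneg fun a _ => mul_nonneg (hφ₁nn s a) (hPnn s a s')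
  have hM₁sum : ∀ s, ∑ s', M₁ s s' = 1 := by
    intro s
    show ∑ s', ∑ a, φ₁ s a * P s a s' = 1
    rw [Finset.sum_comm]
    simp_rw [← Finset.mul_sum, hPsum, mul_one]
    exact hφ₁sum s
  have hγM₁ : ‖γ • M₁‖ < 1 := smul_norm_lt_one M₁ hM₁nn hM₁sum hγ0 hγ1
  set B : Matrix S S ℝ := ∑' i : ℕ, (γ • M₁) ^ i with hBdef
  set r₁ : S → ℝ := fun s => ∑ a, φ₁ s a * R s a with hr₁def
  set V₂ : S → ℝ := valueFn P φ₂ γ R with hV₂def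
  set g : S → ℝ := fun s => r₁ s + γ * (M₁ *ᵥ V₂) s - V₂ s with hgdef
  have hV₁ : ∀ s, valueFn P φ₁ γ R s = (B *ᵥ r₁) s := fun s =>
    key_tsum_mulVec M₁ hγM₁ r₁ s
  have hOcc : ∀ s, stateOcc P φ₁ γ p₀ s = (1 - γ) * (Bᵀ *ᵥ p₀) s := fun s => by
    show (1 - γ) * _ = _
    rw [key_tsum_mulVec_transpose M₁ hγM₁ p₀ s]
  have hBmul : B * (1 - γ • M₁) = 1 := geom_series_mul_neg _ hγM₁
  have hg2 : g = fun s => r₁ s - ((1 - γ • M₁) *ᵥ V₂) s := by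
    funext s
    rw [hgdef]
    rw [Matrix.sub_mulVec, Matrix.one_mulVec, Matrix.smul_mulVec]
    simp
    ring
  have hBg : B *ᵥ g = fun s => (B *ᵥ r₁) s - V₂ s := by
    rw [hg2]
    have : (fun s => r₁ s - ((1 - γ • M₁) *ᵥ V₂) s) = r₁ - ((1 - γ • M₁) *ᵥ V₂) := rfl
    rw [this, Matrix.mulVec_sub, Matrix.mulVec_mulVec, hBmul, Matrix.one_mulVec]
    rfl
  have hinner : ∀ s, (∑ a, φ₁ s a *
      (R s a + γ * (∑ s', P s a s' * V₂ s') - V₂ s)) = g s := by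
    intro s
    have e1 : ∑ a, φ₁ s a * (γ * ∑ s', P s a s' * V₂ s')
        = γ * (M₁ *ᵥ V₂) s := by
      show _ = γ * ∑ s', (∑ a, φ₁ s a * P s a s') * V₂ s'
      calc ∑ a, φ₁ s a * (γ * ∑ s', P s a s' * V₂ s')
          = ∑ a, ∑ s', γ * (φ₁ s a * P s a s' * V₂ s') := by
            refine Finset.sum_congr rfl fun a _ => ?_
            simp_rw [Finset.mul_sum]
            refine Finset.sum_congr rfl fun s' _ => ?_
            ring
        _ = ∑ s', ∑ a, γ * (φ₁ s a * P s a s' * V₂ s') := Finset.sum_comm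
        _ = γ * ∑ s', (∑ a, φ₁ s a * P s a s') * V₂ s' := by
            rw [Finset.mul_sum]
            refine Finset.sum_congr rfl fun s' _ => ?_
            rw [Finset.sum_mul, Finset.mul_sum]
    simp_rw [mul_sub, mul_add]
    rw [Finset.sum_sub_distrib, Finset.sum_add_distrib, e1, ← Finset.sum_mul, hφ₁sum s,
      one_mul]
  have h1γ : (1 : ℝ) - γ ≠ 0 := by linarith
  have hfac : ∑ s, stateOcc P φ₁ γ p₀ s *
      (∑ a, φ₁ s a * (R s a + γ * (∑ s', P s a s' * V₂ s') - V₂ s))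
      = (1 - γ) * ∑ s, (Bᵀ *ᵥ p₀) s * g s := by
    rw [Finset.mul_sum]
    refine Finset.sum_congr rfl fun s _ => ?_
    rw [hOcc s, hinner s]
    ring
  rw [hfac, ← mul_assoc, one_div, inv_mul_cancel₀ h1γ, one_mul]
  calc ∑ s, p₀ s * (valueFn P φ₁ γ R s - V₂ s)
      = ∑ s, p₀ s * (B *ᵥ g) s := by
        refine Finset.sum_congr rfl fun s _ => ?_
        rw [hV₁ s, hBg]
    _ = p₀ ⬝ᵥ (B *ᵥ g) := rfl
    _ = (Bᵀ *ᵥ p₀) ⬝ᵥ g := by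
        rw [Matrix.dotProduct_mulVec, ← Matrix.mulVec_transpose]
    _ = ∑ s, (Bᵀ *ᵥ p₀) s * g s := rfl

end Main
end
end

section
/- Let (S,A,P,p₀) be a finite MDP, φ a policy on S, γ ∈ [0,1), and let π*, π : Ŝ → S be bijections with the target MDP defined by π*. Let φ* = φ∘π* and φ_π = φ∘π be the transferred policies (φ*(a|ŝ) = φ(a|π*(ŝ)), φ_π(a|ŝ) = φ(a|π(ŝ))), with occupancy measures ρ_{φ*,Π*} and ρ_{φ_π,Π*} computed in the target MDP. If π⁻¹(s) = π*⁻¹(s) for every s ∈ S with μ_φ(s) ≥ t, then Σ_{ŝ,a} |ρ_{φ*,Π*}(ŝ,a) − ρ_{φ_π,Π*}(ŝ,a)| ≤ 2t|S|/(1−γ)². -/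
open Matrix BigOperators

noncomputable section

set_option linter.unusedSectionVars false
section OffImHelpers
namespace OffIm
variable {T : Type*} [Fintype T] [DecidableEq T]

variable {T : Type*} [Fintype T] [DecidableEq T]

/-- column-stochastic -/
def CS (N : Matrix T T ℝ) : Prop := (∀ i j, 0 ≤ N i j) ∧ (∀ j, ∑ i, N i j = 1)

lemma mulVec_nonneg {N : Matrix T T ℝ} (hN : CS N) {p : T → ℝ} (hp : ∀ i, 0 ≤ p i) :
    ∀ i, 0 ≤ N.mulVec p i := fun i =>
  Finset.sum_nonneg fun j _ => mul_nonneg (hN.1 i j) (hp j)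

lemma mulVec_sum {N : Matrix T T ℝ} (hN : CS N) (p : T → ℝ) :
    ∑ i, N.mulVec p i = ∑ j, p j := by
  simp only [Matrix.mulVec, dotProduct]
  rw [Finset.sum_comm]
  exact Finset.sum_congr rfl fun j _ => by rw [← Finset.sum_mul, hN.2 j, one_mul]

lemma l1_contract {N : Matrix T T ℝ} (hN : CS N) (v : T → ℝ) :
    ∑ i, |N.mulVec v i| ≤ ∑ j, |v j| := by
  calc ∑ i, |N.mulVec v i| ≤ ∑ i, ∑ j, N i j * |v j| := by
        refine Finset.sum_le_sum fun i _ => ?_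
        simp only [Matrix.mulVec, dotProduct]
        refine (Finset.abs_sum_le_sum_abs _ _).trans ?_
        exact Finset.sum_le_sum fun j _ => by
          rw [abs_mul, abs_of_nonneg (hN.1 i j)]
    _ = ∑ j, |v j| := by
        rw [Finset.sum_comm]
        exact Finset.sum_congr rfl fun j _ => by rw [← Finset.sum_mul, hN.2 j, one_mul]

lemma iter_nonneg {N : Matrix T T ℝ} (hN : CS N) {p : T → ℝ} (hp : ∀ i, 0 ≤ p i) (i : ℕ) :
    ∀ s, 0 ≤ (N ^ i).mulVec p s := by
  induction i with
  | zero => simpa [Matrix.one_mulVec] using hp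
  | succ i ih =>
      intro s
      rw [pow_succ', ← Matrix.mulVec_mulVec]
      exact mulVec_nonneg hN ih s

lemma iter_sum {N : Matrix T T ℝ} (hN : CS N) {p : T → ℝ} (hp1 : ∑ i, p i = 1) (i : ℕ) :
    ∑ s, (N ^ i).mulVec p s = 1 := by
  induction i with
  | zero => simpa [Matrix.one_mulVec] using hp1
  | succ i ih =>
      simp only [pow_succ', ← Matrix.mulVec_mulVec]
      rw [mulVec_sum hN]; exact ih

lemma iter_le_one {N : Matrix T T ℝ} (hN : CS N) {p : T → ℝ} (hp : ∀ i, 0 ≤ p i)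
    (hp1 : ∑ i, p i = 1) (i : ℕ) (s : T) : (N ^ i).mulVec p s ≤ 1 := by
  rw [← iter_sum hN hp1 i]
  exact Finset.single_le_sum (fun s _ => iter_nonneg hN hp i s) (Finset.mem_univ s)

lemma summable_iter {N : Matrix T T ℝ} (hN : CS N) {p : T → ℝ} (hp : ∀ i, 0 ≤ p i)
    (hp1 : ∑ i, p i = 1) {γ : ℝ} (h0 : 0 ≤ γ) (h1 : γ < 1) (s : T) :
    Summable (fun i : ℕ => γ ^ i * (N ^ i).mulVec p s) := by
  refine Summable.of_nonneg_of_le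
    (fun i => mul_nonneg (pow_nonneg h0 i) (iter_nonneg hN hp i s))
    (fun i => ?_) (summable_geometric_of_lt_one h0 h1)
  calc γ ^ i * (N ^ i).mulVec p s ≤ γ ^ i * 1 :=
        mul_le_mul_of_nonneg_left (iter_le_one hN hp hp1 i s) (pow_nonneg h0 i)
    _ = γ ^ i := mul_one _


lemma occ_fix {N : Matrix T T ℝ} (hN : CS N) {p : T → ℝ} (hp : ∀ i, 0 ≤ p i)
    (hp1 : ∑ i, p i = 1) {γ : ℝ} (h0 : 0 ≤ γ) (h1 : γ < 1) (s : T) :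
    (∑' i : ℕ, γ ^ i * (N ^ i).mulVec p s)
      = p s + γ * ∑ s', N s s' * (∑' i : ℕ, γ ^ i * (N ^ i).mulVec p s') := by
  rw [Summable.tsum_eq_zero_add (summable_iter hN hp hp1 h0 h1 s)]
  simp only [pow_zero, one_mul, Matrix.one_mulVec]
  congr 1
  have hstep : ∀ i : ℕ, γ ^ (i + 1) * (N ^ (i + 1)).mulVec p s
      = γ * ∑ s', N s s' * (γ ^ i * (N ^ i).mulVec p s') := by
    intro i
    rw [show N ^ (i + 1) = N * N ^ i from pow_succ' N i, ← Matrix.mulVec_mulVec]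
    simp only [Matrix.mulVec, dotProduct, Finset.mul_sum]
    rw [_root_.pow_succ]
    exact Finset.sum_congr rfl fun s' _ => Finset.sum_congr rfl fun x _ => by ring
  calc (∑' i : ℕ, γ ^ (i + 1) * (N ^ (i + 1)).mulVec p s)
      = ∑' i : ℕ, γ * ∑ s', N s s' * (γ ^ i * (N ^ i).mulVec p s') := tsum_congr hstep
    _ = γ * ∑' i : ℕ, ∑ s', N s s' * (γ ^ i * (N ^ i).mulVec p s') := tsum_mul_left
    _ = γ * ∑ s', N s s' * (∑' i : ℕ, γ ^ i * (N ^ i).mulVec p s') := by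
        congr 1
        rw [Summable.tsum_finsetSum (fun s' _ => ((summable_iter hN hp hp1 h0 h1 s').mul_left _))]
        exact Finset.sum_congr rfl fun s' _ => tsum_mul_left

lemma diff_l1 {N₁ N₂ : Matrix T T ℝ} (h₁ : CS N₁) (h₂ : CS N₂)
    {p : T → ℝ} (hp : ∀ i, 0 ≤ p i) (hp1 : ∑ i, p i = 1)
    {γ : ℝ} (h0 : 0 ≤ γ) (h1 : γ < 1) :
    (1 - γ) * ∑ s, |(∑' i : ℕ, γ ^ i * (N₂ ^ i).mulVec p s)
        - (∑' i : ℕ, γ ^ i * (N₁ ^ i).mulVec p s)|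
      ≤ γ * ∑ s', (∑' i : ℕ, γ ^ i * (N₁ ^ i).mulVec p s') * ∑ s, |N₂ s s' - N₁ s s'| := by
  set f₁ : T → ℝ := fun s => ∑' i : ℕ, γ ^ i * (N₁ ^ i).mulVec p s with hf₁
  set f₂ : T → ℝ := fun s => ∑' i : ℕ, γ ^ i * (N₂ ^ i).mulVec p s with hf₂
  set g : T → ℝ := fun s => f₂ s - f₁ s with hg
  have key : ∀ s, g s = γ * (N₂.mulVec g) s + γ * ∑ s', (N₂ s s' - N₁ s s') * f₁ s' := by
    intro s
    have e1 := occ_fix h₁ hp hp1 h0 h1 s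
    have e2 := occ_fix h₂ hp hp1 h0 h1 s
    have hsplit : (∑ s', N₂ s s' * f₂ s') - (∑ s', N₁ s s' * f₁ s')
        = (∑ s', N₂ s s' * g s') + ∑ s', (N₂ s s' - N₁ s s') * f₁ s' := by
      rw [← Finset.sum_add_distrib, ← Finset.sum_sub_distrib]
      exact Finset.sum_congr rfl fun s' _ => by simp only [hg]; ring
    have : g s = (p s + γ * ∑ s', N₂ s s' * f₂ s') - (p s + γ * ∑ s', N₁ s s' * f₁ s') := by
      simp only [hg]; rw [← e1, ← e2]
    rw [this]
    simp only [Matrix.mulVec, dotProduct]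
    rw [show (p s + γ * ∑ s', N₂ s s' * f₂ s') - (p s + γ * ∑ s', N₁ s s' * f₁ s')
        = γ * ((∑ s', N₂ s s' * f₂ s') - (∑ s', N₁ s s' * f₁ s')) by ring, hsplit]
    ring
  have hB : ∑ s, |∑ s', (N₂ s s' - N₁ s s') * f₁ s'|
      ≤ ∑ s', f₁ s' * ∑ s, |N₂ s s' - N₁ s s'| := by
    have hf₁nn : ∀ s', 0 ≤ f₁ s' := fun s' =>
      tsum_nonneg fun i => mul_nonneg (pow_nonneg h0 i) (iter_nonneg h₁ hp i s')
    calc ∑ s, |∑ s', (N₂ s s' - N₁ s s') * f₁ s'|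
        ≤ ∑ s, ∑ s', |N₂ s s' - N₁ s s'| * f₁ s' := by
          refine Finset.sum_le_sum fun s _ => (Finset.abs_sum_le_sum_abs _ _).trans ?_
          exact Finset.sum_le_sum fun s' _ => by
            rw [abs_mul, abs_of_nonneg (hf₁nn s')]
      _ = ∑ s', f₁ s' * ∑ s, |N₂ s s' - N₁ s s'| := by
          rw [Finset.sum_comm]
          refine Finset.sum_congr rfl fun s' _ => ?_
          rw [Finset.mul_sum]
          exact Finset.sum_congr rfl fun s _ => mul_comm _ _
  have hA : ∑ s, |g s| ≤ γ * ∑ s, |g s|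
      + γ * ∑ s', f₁ s' * ∑ s, |N₂ s s' - N₁ s s'| := by
    calc ∑ s, |g s| ≤ ∑ s, (γ * |(N₂.mulVec g) s| + γ * |∑ s', (N₂ s s' - N₁ s s') * f₁ s'|) := by
          refine Finset.sum_le_sum fun s _ => ?_
          rw [key s]
          refine (abs_add_le _ _).trans (le_of_eq ?_)
          simp only [abs_mul, abs_of_nonneg h0]
      _ = γ * ∑ s, |(N₂.mulVec g) s| + γ * ∑ s, |∑ s', (N₂ s s' - N₁ s s') * f₁ s'| := by
          rw [Finset.sum_add_distrib, Finset.mul_sum, Finset.mul_sum]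
      _ ≤ γ * ∑ s, |g s| + γ * ∑ s', f₁ s' * ∑ s, |N₂ s s' - N₁ s s'| := by
          exact add_le_add (mul_le_mul_of_nonneg_left (l1_contract h₂ g) h0)
            (mul_le_mul_of_nonneg_left hB h0)
  have : (1 - γ) * ∑ s, |g s| ≤ γ * ∑ s', f₁ s' * ∑ s, |N₂ s s' - N₁ s s'| := by
    nlinarith [hA]
  exact this

lemma relabel {S : Type*} [Fintype S] [DecidableEq S] (M : Matrix S S ℝ) (e : T ≃ S)
    (v : S → ℝ) (i : ℕ) (sh : T) :
    ((M.submatrix e e) ^ i).mulVec (fun x => v (e x)) sh = (M ^ i).mulVec v (e sh) := by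
  induction i generalizing sh with
  | zero => simp [Matrix.one_mulVec]
  | succ i ih =>
      rw [show (M.submatrix e e) ^ (i+1) = M.submatrix e e * (M.submatrix e e) ^ i from
        pow_succ' _ i, ← Matrix.mulVec_mulVec,
        show M ^ (i+1) = M * M ^ i from pow_succ' M i, ← Matrix.mulVec_mulVec]
      have hv : ((M.submatrix e e) ^ i).mulVec (fun x => v (e x))
          = fun x => (M ^ i).mulVec v (e x) := funext fun x => ih x
      rw [hv]
      simp only [Matrix.mulVec, dotProduct, Matrix.submatrix_apply]
      exact Equiv.sum_comp e (fun s' => M (e sh) s' * (M ^ i).mulVec v s') ▸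
        (e.sum_comp (fun s' => M (e sh) s' * ∑ x, (M ^ i) s' x * v x))

end OffIm
end OffImHelpers

open OffIm

/-- Offline imitation bound (Theorem 4 of the paper): if the learned bijection `π` agrees with
the true bijection `π*` on every state of occupancy at least `t`, then the total-variation
distance between the occupancy measure of the correctly transferred policy `φ* = φ∘π*` and
that of the transferred guess `φ_π = φ∘π`, both computed in the target MDP defined by `π*`,
is at most `2t|S|/(1−γ)²`. -/
theorem offline_imitation_bound {S A T : Type*}
    [Fintype S] [Fintype A] [DecidableEq S] [Fintype T] [DecidableEq T]
    (P : S → A → S → ℝ)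
    (hPnn : ∀ s a s', 0 ≤ P s a s') (hPsum : ∀ s a, ∑ s', P s a s' = 1)
    (p₀ : S → ℝ) (hp₀nn : ∀ s, 0 ≤ p₀ s) (hp₀sum : ∑ s, p₀ s = 1)
    (φ : S → A → ℝ) (hφnn : ∀ s a, 0 ≤ φ s a) (hφsum : ∀ s, ∑ a, φ s a = 1)
    (γ : ℝ) (hγ0 : 0 ≤ γ) (hγ1 : γ < 1)
    (t : ℝ) (ht : 0 ≤ t)
    (πstar π : T ≃ S)
    (hagree : ∀ s : S, t ≤ stateOcc P φ γ p₀ s → π.symm s = πstar.symm s) :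
    ∑ sh, ∑ a,
      |occMeasure (fun sh a sh' => P (πstar sh) a (πstar sh'))
          (fun sh a => φ (πstar sh) a) γ (fun sh => p₀ (πstar sh)) sh a -
       occMeasure (fun sh a sh' => P (πstar sh) a (πstar sh'))
          (fun sh a => φ (π sh) a) γ (fun sh => p₀ (πstar sh)) sh a|
      ≤ 2 * t * (Fintype.card S) / (1 - γ) ^ 2 := by
  have hc : (0:ℝ) < 1 - γ := by linarith
  set Phat : T → A → T → ℝ := fun sh a sh' => P (πstar sh) a (πstar sh') with hPhat
  set φ₁ : T → A → ℝ := fun sh a => φ (πstar sh) a with hφ₁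
  set φ₂ : T → A → ℝ := fun sh a => φ (π sh) a with hφ₂
  set phat : T → ℝ := fun sh => p₀ (πstar sh) with hphat
  set N₁ : Matrix T T ℝ := (inducedChain Phat φ₁)ᵀ with hN₁def
  set N₂ : Matrix T T ℝ := (inducedChain Phat φ₂)ᵀ with hN₂def
  -- basic facts
  have hphatnn : ∀ sh, 0 ≤ phat sh := fun sh => hp₀nn _
  have hphatsum : ∑ sh, phat sh = 1 := by
    rw [Equiv.sum_comp πstar p₀] at *; exact hp₀sum
  have hCS : ∀ (ψ : T → A → ℝ), (∀ sh a, 0 ≤ ψ sh a) → (∀ sh, ∑ a, ψ sh a = 1) →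
      CS ((inducedChain Phat ψ)ᵀ) := by
    intro ψ hnn hsum
    constructor
    · intro i j
      simp only [Matrix.transpose_apply, inducedChain, Matrix.of_apply]
      exact Finset.sum_nonneg fun a _ => mul_nonneg (hnn j a) (hPnn _ a _)
    · intro j
      simp only [Matrix.transpose_apply, inducedChain, Matrix.of_apply]
      rw [Finset.sum_comm]
      calc ∑ a, ∑ sh', ψ j a * Phat j a sh'
          = ∑ a, ψ j a * ∑ sh', Phat j a sh' := by
            exact Finset.sum_congr rfl fun a _ => (Finset.mul_sum _ _ _).symm
        _ = ∑ a, ψ j a * 1 := by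
            refine Finset.sum_congr rfl fun a _ => ?_
            congr 1
            rw [show (∑ sh', Phat j a sh') = ∑ s', P (πstar j) a s' from
              Equiv.sum_comp πstar (fun s' => P (πstar j) a s')]
            exact hPsum _ a
        _ = 1 := by simp [hsum j]
  have hCS₁ : CS N₁ := hCS φ₁ (fun sh a => hφnn _ a) (fun sh => hφsum _)
  have hCS₂ : CS N₂ := hCS φ₂ (fun sh a => hφnn _ a) (fun sh => hφsum _)
  -- occupancies
  set f₁ : T → ℝ := fun sh => ∑' i : ℕ, γ ^ i * (N₁ ^ i).mulVec phat sh with hf₁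
  set f₂ : T → ℝ := fun sh => ∑' i : ℕ, γ ^ i * (N₂ ^ i).mulVec phat sh with hf₂
  have hμ₁ : ∀ sh, stateOcc Phat φ₁ γ phat sh = (1 - γ) * f₁ sh := fun sh => rfl
  have hμ₂ : ∀ sh, stateOcc Phat φ₂ γ phat sh = (1 - γ) * f₂ sh := fun sh => rfl
  have hf₁nn : ∀ sh, 0 ≤ f₁ sh := fun sh =>
    tsum_nonneg fun i => mul_nonneg (pow_nonneg hγ0 i) (iter_nonneg hCS₁ hphatnn i sh)
  -- relabeling: the target occupancy equals the source occupancy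
  have hrel : ∀ sh, (1 - γ) * f₁ sh = stateOcc P φ γ p₀ (πstar sh) := by
    intro sh
    have hsub : N₁ = ((inducedChain P φ)ᵀ).submatrix πstar πstar := by
      ext i j
      simp only [hN₁def, Matrix.transpose_apply, inducedChain, Matrix.of_apply,
        Matrix.submatrix_apply]
      rfl
    rw [stateOcc]
    congr 1
    refine tsum_congr fun i => ?_
    congr 1
    rw [hf₁] at *
    simp only [hsub]
    exact relabel ((inducedChain P φ)ᵀ) πstar p₀ i sh
  -- small occupancy on disagreement states
  have hsmall : ∀ sh, π sh ≠ πstar sh → (1 - γ) * f₁ sh ≤ t := by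
    intro sh hne
    by_contra hgt
    push_neg at hgt
    have := hagree (πstar sh) (by rw [← hrel sh]; exact le_of_lt hgt)
    rw [Equiv.symm_apply_apply] at this
    have h2 : πstar sh = π sh :=
      (Equiv.apply_symm_apply π (πstar sh)).symm.trans (congrArg π this)
    exact hne h2.symm
  -- column difference bound
  set d : T → ℝ := fun sh' => ∑ a, |φ (π sh') a - φ (πstar sh') a| with hd
  have hcol : ∀ sh', ∑ sh, |N₂ sh sh' - N₁ sh sh'| ≤ d sh' := by
    intro sh'
    calc ∑ sh, |N₂ sh sh' - N₁ sh sh'|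
        = ∑ sh, |∑ a, (φ (π sh') a - φ (πstar sh') a) * Phat sh' a sh| := by
          refine Finset.sum_congr rfl fun sh _ => ?_
          simp only [hN₁def, hN₂def, Matrix.transpose_apply, inducedChain, Matrix.of_apply,
            ← Finset.sum_sub_distrib]
          congr 1
          exact Finset.sum_congr rfl fun a _ => by ring
      _ ≤ ∑ sh, ∑ a, |φ (π sh') a - φ (πstar sh') a| * Phat sh' a sh := by
          refine Finset.sum_le_sum fun sh _ => (Finset.abs_sum_le_sum_abs _ _).trans ?_
          refine Finset.sum_le_sum fun a _ => ?_
          rw [abs_mul, abs_of_nonneg (hPnn _ a _)]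
      _ = ∑ a, |φ (π sh') a - φ (πstar sh') a| * ∑ sh, Phat sh' a sh := by
          rw [Finset.sum_comm]
          exact Finset.sum_congr rfl fun a _ => (Finset.mul_sum _ _ _).symm
      _ = d sh' := by
          refine Finset.sum_congr rfl fun a _ => ?_
          rw [show (∑ sh, Phat sh' a sh) = ∑ s', P (πstar sh') a s' from
            Equiv.sum_comp πstar (fun s' => P (πstar sh') a s'), hPsum, mul_one]
  have hd2 : ∀ sh', d sh' ≤ 2 := by
    intro sh'
    calc d sh' ≤ ∑ a, (φ (π sh') a + φ (πstar sh') a) := by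
          refine Finset.sum_le_sum fun a _ => ?_
          exact (abs_sub _ _).trans (by rw [abs_of_nonneg (hφnn _ a), abs_of_nonneg (hφnn _ a)])
      _ = 2 := by rw [Finset.sum_add_distrib, hφsum, hφsum]; norm_num
  have hdzero : ∀ sh', π sh' = πstar sh' → d sh' = 0 := by
    intro sh' he
    simp [hd, he]
  have hcolnn : ∀ sh', 0 ≤ ∑ sh, |N₂ sh sh' - N₁ sh sh'| :=
    fun sh' => Finset.sum_nonneg fun sh _ => abs_nonneg _
  -- bound B
  have hB : ∑ sh', f₁ sh' * ∑ sh, |N₂ sh sh' - N₁ sh sh'|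
      ≤ 2 * t * (Fintype.card T) / (1 - γ) := by
    calc ∑ sh', f₁ sh' * ∑ sh, |N₂ sh sh' - N₁ sh sh'|
        ≤ ∑ sh' : T, 2 * t / (1 - γ) := by
          refine Finset.sum_le_sum fun sh' _ => ?_
          by_cases he : π sh' = πstar sh'
          · have : ∑ sh, |N₂ sh sh' - N₁ sh sh'| = 0 :=
              le_antisymm ((hcol sh').trans (le_of_eq (hdzero sh' he))) (hcolnn sh')
            rw [this, mul_zero]
            positivity
          · have h1 : f₁ sh' ≤ t / (1 - γ) := by
              rw [le_div_iff₀ hc, mul_comm]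
              exact hsmall sh' he
            calc f₁ sh' * ∑ sh, |N₂ sh sh' - N₁ sh sh'|
                ≤ (t / (1 - γ)) * 2 := by
                  exact mul_le_mul h1 ((hcol sh').trans (hd2 sh')) (hcolnn sh')
                    (by positivity)
              _ = 2 * t / (1 - γ) := by ring
      _ = 2 * t * (Fintype.card T) / (1 - γ) := by
          rw [Finset.sum_const, Finset.card_univ, nsmul_eq_mul]; ring
  -- difference of occupancies
  have hD : ∑ sh, |(1 - γ) * f₂ sh - (1 - γ) * f₁ sh|
      ≤ γ * (2 * t * (Fintype.card T)) / (1 - γ) := by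
    have h0 := diff_l1 hCS₁ hCS₂ hphatnn hphatsum hγ0 hγ1
    have h1 : (1 - γ) * ∑ sh, |f₂ sh - f₁ sh| ≤ γ * (2 * t * (Fintype.card T) / (1 - γ)) :=
      h0.trans (mul_le_mul_of_nonneg_left hB hγ0)
    calc ∑ sh, |(1 - γ) * f₂ sh - (1 - γ) * f₁ sh|
        = (1 - γ) * ∑ sh, |f₂ sh - f₁ sh| := by
          rw [Finset.mul_sum]
          refine Finset.sum_congr rfl fun sh _ => ?_
          rw [← mul_sub, abs_mul, abs_of_nonneg (le_of_lt hc)]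
      _ ≤ γ * (2 * t * (Fintype.card T) / (1 - γ)) := h1
      _ = γ * (2 * t * (Fintype.card T)) / (1 - γ) := by ring
  -- per-state bound
  have hper : ∀ sh, ∑ a, |φ₁ sh a * ((1 - γ) * f₁ sh) - φ₂ sh a * ((1 - γ) * f₂ sh)|
      ≤ 2 * t + |(1 - γ) * f₂ sh - (1 - γ) * f₁ sh| := by
    intro sh
    set μ₁ := (1 - γ) * f₁ sh
    set μ₂ := (1 - γ) * f₂ sh
    have hμ₁nn : 0 ≤ μ₁ := mul_nonneg (le_of_lt hc) (hf₁nn sh)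
    calc ∑ a, |φ₁ sh a * μ₁ - φ₂ sh a * μ₂|
        ≤ ∑ a, (|φ₁ sh a - φ₂ sh a| * μ₁ + φ₂ sh a * |μ₂ - μ₁|) := by
          refine Finset.sum_le_sum fun a _ => ?_
          have heq : φ₁ sh a * μ₁ - φ₂ sh a * μ₂
              = (φ₁ sh a - φ₂ sh a) * μ₁ - φ₂ sh a * (μ₂ - μ₁) := by ring
          rw [heq]
          refine (abs_sub _ _).trans (le_of_eq ?_)
          rw [abs_mul (φ₁ sh a - φ₂ sh a) μ₁, abs_mul (φ₂ sh a) (μ₂ - μ₁),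
            abs_of_nonneg hμ₁nn, abs_of_nonneg (hφnn (π sh) a)]
      _ = μ₁ * (∑ a, |φ₁ sh a - φ₂ sh a|) + |μ₂ - μ₁| := by
          rw [Finset.sum_add_distrib, ← Finset.sum_mul, ← Finset.sum_mul]
          rw [show (∑ a, φ₂ sh a) = 1 from hφsum _, one_mul, mul_comm]
      _ ≤ 2 * t + |μ₂ - μ₁| := by
          refine add_le_add ?_ (le_refl _)
          by_cases he : π sh = πstar sh
          · have : ∑ a, |φ₁ sh a - φ₂ sh a| = 0 := by
              simp [hφ₁, hφ₂, he]
            rw [this, mul_zero]; positivity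
          · have h1 : μ₁ ≤ t := hsmall sh he
            have h2 : ∑ a, |φ₁ sh a - φ₂ sh a| ≤ 2 := by
              have := hd2 sh
              rw [hd] at this
              refine le_trans (le_of_eq ?_) this
              exact Finset.sum_congr rfl fun a _ => by rw [abs_sub_comm]
            calc μ₁ * (∑ a, |φ₁ sh a - φ₂ sh a|) ≤ t * 2 :=
                  mul_le_mul h1 h2 (Finset.sum_nonneg fun a _ => abs_nonneg _) ht
              _ = 2 * t := by ring
  -- assemble
  have hcard : (Fintype.card T : ℝ) = Fintype.card S := by
    rw [Fintype.card_congr πstar]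
  calc ∑ sh, ∑ a,
      |occMeasure Phat φ₁ γ phat sh a - occMeasure Phat φ₂ γ phat sh a|
      = ∑ sh, ∑ a, |φ₁ sh a * ((1 - γ) * f₁ sh) - φ₂ sh a * ((1 - γ) * f₂ sh)| := by
        refine Finset.sum_congr rfl fun sh _ => Finset.sum_congr rfl fun a _ => ?_
        rw [occMeasure, occMeasure, hμ₁ sh, hμ₂ sh]
    _ ≤ ∑ sh : T, (2 * t + |(1 - γ) * f₂ sh - (1 - γ) * f₁ sh|) :=
        Finset.sum_le_sum fun sh _ => hper sh
    _ = 2 * t * (Fintype.card T) + ∑ sh, |(1 - γ) * f₂ sh - (1 - γ) * f₁ sh| := by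
        rw [Finset.sum_add_distrib, Finset.sum_const, Finset.card_univ, nsmul_eq_mul]
        ring
    _ ≤ 2 * t * (Fintype.card T) + γ * (2 * t * (Fintype.card T)) / (1 - γ) :=
        add_le_add (le_refl _) hD
    _ ≤ 2 * t * (Fintype.card S) / (1 - γ) ^ 2 := by
        rw [hcard]
        set K : ℝ := 2 * t * (Fintype.card S) with hK
        have hKnn : 0 ≤ K := by positivity
        have e1 : K + γ * K / (1 - γ) = K / (1 - γ) := by
          field_simp
          ring
        rw [e1]
        have h2 : (1 - γ) ^ 2 ≤ 1 - γ := by nlinarith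
        gcongr
end
end

section
/- Let M be an ergodic row-stochastic matrix on a finite state space with unique stationary distribution μ, D = diag(μ), and rescaled transition matrix L = D^{1/2} M D^{-1/2}. Then: (i) the largest singular value of L equals 1; (ii) D⁻¹MᵀDM = D^{-1/2}(LᵀL)D^{1/2}, so the second largest eigenvalue of the multiplicative reversiblization D⁻¹MᵀDM equals σ₂(L)²; consequently the pseudospectral gap γ_ps(M) := sup_{k≥1} (1 − λ₂((D⁻¹MᵀD)ᵏMᵏ))/k satisfies γ_ps(M) ≥ 1 − σ₂(L)². -/
open Matrix BigOperators

noncomputable section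

open Polynomial

lemma sorted_eq_of_prod_eq {n : ℕ} {e f : Fin n → ℝ} (he : Antitone e) (hf : Antitone f)
    (h : ∀ t : ℝ, ∏ i, (t - e i) = ∏ i, (t - f i)) : e = f := by
  have hpoly : ∏ i, (X - C (e i)) = ∏ i, (X - C (f i)) := by
    apply Polynomial.funext
    intro t
    simpa [Polynomial.eval_prod] using h t
  have hmul : (Finset.univ.val.map e) = (Finset.univ.val.map f) := by
    have h1 : (∏ i, (X - C (e i))).roots = Finset.univ.val.map e := by
      rw [Finset.prod_eq_multiset_prod, show (Multiset.map (fun i => X - C (e i)) Finset.univ.val) = Multiset.map (fun a => X - C a) (Multiset.map e Finset.univ.val) from by simp [Multiset.map_map, Function.comp_def]]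
      exact roots_multiset_prod_X_sub_C _
    have h2 : (∏ i, (X - C (f i))).roots = Finset.univ.val.map f := by
      rw [Finset.prod_eq_multiset_prod, show (Multiset.map (fun i => X - C (f i)) Finset.univ.val) = Multiset.map (fun a => X - C a) (Multiset.map f Finset.univ.val) from by simp [Multiset.map_map, Function.comp_def]]
      exact roots_multiset_prod_X_sub_C _
    rw [← h1, ← h2, hpoly]
  have hperm : ((List.finRange n).map e).Perm ((List.finRange n).map f) := by
    rw [← Multiset.coe_eq_coe]
    simpa [Finset.univ, Fintype.elems, List.finRange] using hmul
  have hs : ∀ (g : Fin n → ℝ), Antitone g → ((List.finRange n).map g).Pairwise (· ≥ ·) := by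
    intro g hg
    exact (List.pairwise_lt_finRange n).map g (fun a b hab => hg hab.le)
  apply List.ofFn_injective
  rw [List.ofFn_eq_map, List.ofFn_eq_map]
  exact List.Perm.eq_of_pairwise' (hs e he) (hs f hf) hperm

lemma det_conj_diag {n : ℕ} {A Q : Matrix (Fin n) (Fin n) ℝ} {d : Fin n → ℝ}
    (hQ : IsUnit Q.det) (h : A = Q * Matrix.diagonal d * Q⁻¹) (t : ℝ) :
    (t • (1 : Matrix (Fin n) (Fin n) ℝ) - A).det = ∏ i, (t - d i) := by
  have hQQ : Q * Q⁻¹ = 1 := Matrix.mul_nonsing_inv Q hQ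
  have hdiag : Matrix.diagonal (fun i : Fin n => t - d i)
      = t • (1 : Matrix (Fin n) (Fin n) ℝ) - Matrix.diagonal d := by
    ext i j
    by_cases hij : i = j <;> simp [hij, Matrix.diagonal, Matrix.one_apply, Matrix.smul_apply]
  have key : t • (1 : Matrix (Fin n) (Fin n) ℝ) - A
      = Q * Matrix.diagonal (fun i => t - d i) * Q⁻¹ := by
    rw [hdiag, h, Matrix.mul_sub, Matrix.sub_mul, mul_smul_comm, Matrix.mul_one,
      Matrix.smul_mul, hQQ]
  rw [key, Matrix.det_mul, Matrix.det_mul, Matrix.det_nonsing_inv, Matrix.det_diagonal,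
    Ring.inverse_eq_inv']
  have hQne : Q.det ≠ 0 := hQ.ne_zero
  field_simp

lemma eig_vec {n : ℕ} {A Q : Matrix (Fin n) (Fin n) ℝ} {d : Fin n → ℝ}
    (hQ : IsUnit Q.det) (h : A = Q * Matrix.diagonal d * Q⁻¹) (i : Fin n) :
    ∃ v : Fin n → ℝ, v ≠ 0 ∧ A.mulVec v = d i • v := by
  have hdet : (d i • (1 : Matrix (Fin n) (Fin n) ℝ) - A).det = 0 := by
    rw [det_conj_diag hQ h]
    exact Finset.prod_eq_zero (Finset.mem_univ i) (by ring)
  obtain ⟨v, hv0, hv⟩ := (Matrix.exists_mulVec_eq_zero_iff).2 hdet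
  refine ⟨v, hv0, ?_⟩
  rw [Matrix.sub_mulVec, Matrix.smul_mulVec, Matrix.one_mulVec] at hv
  exact (sub_eq_zero.mp hv).symm

lemma stoch_eig_bound {n : ℕ} (hn : 0 < n) {A : Matrix (Fin n) (Fin n) ℝ}
    (hA1 : ∀ i j, 0 ≤ A i j) (hA2 : ∀ i, ∑ j, A i j = 1)
    {t : ℝ} {v : Fin n → ℝ} (hv : v ≠ 0) (h : A.mulVec v = t • v) : |t| ≤ 1 := by
  obtain ⟨i, -, hi⟩ := Finset.exists_max_image Finset.univ (fun i => |v i|)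
    ⟨⟨0, hn⟩, Finset.mem_univ _⟩
  have hvi : 0 < |v i| := by
    obtain ⟨j, hj⟩ : ∃ j, v j ≠ 0 := Function.ne_iff.mp hv
    exact lt_of_lt_of_le (abs_pos.mpr hj) (hi j (Finset.mem_univ _))
  have key : |t| * |v i| ≤ |v i| := by
    have h1 : |t * v i| = |(A.mulVec v) i| := by rw [h]; simp [Pi.smul_apply, smul_eq_mul]
    calc |t| * |v i| = |t * v i| := (abs_mul t (v i)).symm
      _ = |∑ j, A i j * v j| := by rw [h1]; rfl
      _ ≤ ∑ j, |A i j * v j| := Finset.abs_sum_le_sum_abs _ _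
      _ ≤ ∑ j, A i j * |v i| := by
          apply Finset.sum_le_sum
          intro j _
          rw [abs_mul, abs_of_nonneg (hA1 i j)]
          exact mul_le_mul_of_nonneg_left (hi j (Finset.mem_univ _)) (hA1 i j)
      _ = |v i| := by rw [← Finset.sum_mul, hA2 i, one_mul]
  exact le_of_mul_le_mul_right (by linarith) hvi

lemma stoch_mul {n : ℕ} {A B : Matrix (Fin n) (Fin n) ℝ}
    (hA1 : ∀ i j, 0 ≤ A i j) (hA2 : ∀ i, ∑ j, A i j = 1)
    (hB1 : ∀ i j, 0 ≤ B i j) (hB2 : ∀ i, ∑ j, B i j = 1) :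
    (∀ i j, 0 ≤ (A * B) i j) ∧ ∀ i, ∑ j, (A * B) i j = 1 := by
  refine ⟨fun i j => by rw [Matrix.mul_apply]; exact Finset.sum_nonneg fun k _ => mul_nonneg (hA1 i k) (hB1 k j), fun i => ?_⟩
  simp only [Matrix.mul_apply]
  rw [Finset.sum_comm]
  calc ∑ k, ∑ j, A i k * B k j = ∑ k, A i k * ∑ j, B k j := by
        simp [Finset.mul_sum]
    _ = 1 := by simp only [hB2, mul_one]; exact hA2 i

lemma stoch_pow {n : ℕ} {A : Matrix (Fin n) (Fin n) ℝ}
    (hA1 : ∀ i j, 0 ≤ A i j) (hA2 : ∀ i, ∑ j, A i j = 1) :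
    ∀ k : ℕ, 1 ≤ k → (∀ i j, 0 ≤ (A ^ k) i j) ∧ ∀ i, ∑ j, (A ^ k) i j = 1 := by
  intro k hk
  induction k with
  | zero => omega
  | succ m ih =>
    rcases Nat.eq_zero_or_pos m with hm | hm
    · subst hm; simpa [pow_one] using ⟨hA1, hA2⟩
    · have hm' := ih hm
      rw [pow_succ]
      exact stoch_mul hm'.1 hm'.2 hA1 hA2


/-- Let `M` be an ergodic row-stochastic matrix with unique stationary distribution `μ`,
`D = diag(μ)`, and rescaled transition matrix `L = D^{1/2} M D^{-1/2}`, with an ordered SVD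
`L = U S Vᵀ`.  For each `k ≥ 1` let `eig k` be the nonincreasing list of eigenvalues of
`(D⁻¹MᵀD)ᵏMᵏ` (these matrices are diagonalizable with real eigenvalues, being similar to
symmetric PSD matrices), so that `eig k ⟨1⟩` is the second largest eigenvalue `λ₂`.  Then:
(i) `σ₁(L) = 1`; (ii) `D⁻¹MᵀDM = D^{-1/2}(LᵀL)D^{1/2}` and `λ₂(D⁻¹MᵀDM) = σ₂(L)²`;
consequently the pseudospectral gap `γ_ps(M) = sup_{k≥1} (1 − λ₂((D⁻¹MᵀD)ᵏMᵏ))/k`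
satisfies `γ_ps(M) ≥ 1 − σ₂(L)²`. -/
theorem pseudospectral_gap_bound {n : ℕ} (hn : 2 ≤ n)
    (M : Matrix (Fin n) (Fin n) ℝ) (μ : Fin n → ℝ)
    (hMnn : ∀ i j, 0 ≤ M i j) (hMrow : ∀ i, ∑ j, M i j = 1)
    (hμpos : ∀ i, 0 < μ i) (hμsum : ∑ i, μ i = 1)
    (hstat : Matrix.vecMul μ M = μ)
    (huniq : ∀ ν : Fin n → ℝ, (∀ i, 0 ≤ ν i) → ∑ i, ν i = 1 →
      Matrix.vecMul ν M = ν → ν = μ)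
    (U S V : Matrix (Fin n) (Fin n) ℝ)
    (hSVD : IsSVD (rescaled M μ) U S V)
    (eig : ℕ → Fin n → ℝ)
    (heig : ∀ k : ℕ, 1 ≤ k →
      Antitone (eig k) ∧
      ∃ Q : Matrix (Fin n) (Fin n) ℝ, IsUnit Q.det ∧
        (Matrix.diagonal (fun i => (μ i)⁻¹) * Mᵀ * Matrix.diagonal μ) ^ k * M ^ k
          = Q * Matrix.diagonal (eig k) * Q⁻¹) :
    S ⟨0, by omega⟩ ⟨0, by omega⟩ = 1 ∧
    Matrix.diagonal (fun i => (μ i)⁻¹) * Mᵀ * Matrix.diagonal μ * M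
      = Matrix.diagonal (fun i => (Real.sqrt (μ i))⁻¹) *
          ((rescaled M μ)ᵀ * rescaled M μ) *
          Matrix.diagonal (fun i => Real.sqrt (μ i)) ∧
    eig 1 ⟨1, by omega⟩ = (S ⟨1, by omega⟩ ⟨1, by omega⟩) ^ 2 ∧
    1 - (S ⟨1, by omega⟩ ⟨1, by omega⟩) ^ 2 ≤
      ⨆ k : ℕ, (1 - eig (k + 1) ⟨1, by omega⟩) / ((k : ℝ) + 1) := by
  obtain ⟨hL, hUU, hVV, hSoff, hSnn, hSord⟩ := hSVD
  set E : Matrix (Fin n) (Fin n) ℝ := Matrix.diagonal (fun i => Real.sqrt (μ i)) with hE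
  set F : Matrix (Fin n) (Fin n) ℝ := Matrix.diagonal (fun i => (Real.sqrt (μ i))⁻¹) with hF
  set N : Matrix (Fin n) (Fin n) ℝ :=
    Matrix.diagonal (fun i => (μ i)⁻¹) * Mᵀ * Matrix.diagonal μ with hN
  have hsqpos : ∀ i, 0 < Real.sqrt (μ i) := fun i => Real.sqrt_pos.mpr (hμpos i)
  have hsqne : ∀ i, Real.sqrt (μ i) ≠ 0 := fun i => (hsqpos i).ne'
  have hsqsq : ∀ i, Real.sqrt (μ i) * Real.sqrt (μ i) = μ i :=
    fun i => Real.mul_self_sqrt (hμpos i).le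
  have hFE : F * E = 1 := by
    rw [hF, hE, Matrix.diagonal_mul_diagonal, ← Matrix.diagonal_one]
    exact congrArg Matrix.diagonal (funext fun i => inv_mul_cancel₀ (hsqne i))
  have hEF : E * F = 1 := by
    rw [hF, hE, Matrix.diagonal_mul_diagonal, ← Matrix.diagonal_one]
    exact congrArg Matrix.diagonal (funext fun i => mul_inv_cancel₀ (hsqne i))
  have hEE : E * E = Matrix.diagonal μ := by
    rw [hE, Matrix.diagonal_mul_diagonal]; exact congrArg Matrix.diagonal (funext fun i => hsqsq i)
  have hFF : F * F = Matrix.diagonal (fun i => (μ i)⁻¹) := by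
    rw [hF, Matrix.diagonal_mul_diagonal]
    exact congrArg Matrix.diagonal (funext fun i => by rw [← mul_inv, hsqsq i])
  -- Part 2
  have part2 : N * M = F * ((rescaled M μ)ᵀ * rescaled M μ) * E := by
    have : (rescaled M μ)ᵀ = F * Mᵀ * E := by
      rw [rescaled, Matrix.transpose_mul, Matrix.transpose_mul, Matrix.diagonal_transpose,
        Matrix.diagonal_transpose, ← hE, ← hF, Matrix.mul_assoc]
    rw [this, rescaled, ← hE, ← hF]
    simp only [Matrix.mul_assoc]
    rw [hFE, Matrix.mul_one, ← Matrix.mul_assoc E E M, hEE]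
    rw [← Matrix.mul_assoc F F _, hFF, hN]
    simp only [Matrix.mul_assoc]
  -- S is diagonal with squares
  have hSdiag : S = Matrix.diagonal (fun i => S i i) := by
    ext i j; by_cases hij : i = j
    · subst hij; simp [Matrix.diagonal]
    · simp [Matrix.diagonal, hij, hSoff i j hij]
  have hLtL : (rescaled M μ)ᵀ * rescaled M μ
      = V * Matrix.diagonal (fun i => S i i ^ 2) * Vᵀ := by
    rw [hL]
    have h1 : (U * S * Vᵀ)ᵀ = V * Sᵀ * Uᵀ := by
      rw [Matrix.transpose_mul, Matrix.transpose_mul, Matrix.transpose_transpose,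
        Matrix.mul_assoc]
    rw [h1]
    have hSS : Sᵀ * S = Matrix.diagonal (fun i => S i i ^ 2) := by
      nth_rewrite 1 [hSdiag]
      nth_rewrite 2 [hSdiag]
      rw [Matrix.diagonal_transpose, Matrix.diagonal_mul_diagonal]
      exact congrArg Matrix.diagonal (funext fun i => by ring)
    calc V * Sᵀ * Uᵀ * (U * S * Vᵀ) = V * (Sᵀ * (Uᵀ * U) * S) * Vᵀ := by
          simp only [Matrix.mul_assoc]
      _ = V * Matrix.diagonal (fun i => S i i ^ 2) * Vᵀ := by
          rw [hUU, Matrix.mul_one, hSS]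
  -- P = F * V conjugates N*M to diagonal of squared singular values
  set P : Matrix (Fin n) (Fin n) ℝ := F * V with hP
  have hPleft : (Vᵀ * E) * P = 1 := by
    rw [hP]
    calc Vᵀ * E * (F * V) = Vᵀ * (E * F) * V := by simp only [Matrix.mul_assoc]
      _ = 1 := by rw [hEF, Matrix.mul_one, hVV]
  have hPdet : IsUnit P.det := Matrix.isUnit_det_of_left_inverse hPleft
  have hPinv : P⁻¹ = Vᵀ * E := Matrix.inv_eq_left_inv hPleft
  have hNM_P : N * M = P * Matrix.diagonal (fun i => S i i ^ 2) * P⁻¹ := by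
    rw [part2, hLtL, hPinv, hP]
    simp only [Matrix.mul_assoc]
  -- N is stochastic
  have hNapp : ∀ i j, N i j = (μ i)⁻¹ * M j i * μ j := by
    intro i j
    rw [hN, Matrix.mul_diagonal, Matrix.diagonal_mul, Matrix.transpose_apply]
  have hN1 : ∀ i j, 0 ≤ N i j := by
    intro i j; rw [hNapp]
    exact mul_nonneg (mul_nonneg (inv_nonneg.mpr (hμpos i).le) (hMnn j i)) (hμpos j).le
  have hN2 : ∀ i, ∑ j, N i j = 1 := by
    intro i
    have hvm : ∑ j, μ j * M j i = μ i := by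
      have := congrFun hstat i
      simpa [Matrix.vecMul, dotProduct] using this
    calc ∑ j, N i j = ∑ j, (μ i)⁻¹ * (μ j * M j i) := by
          apply Finset.sum_congr rfl; intro j _; rw [hNapp]; ring
      _ = (μ i)⁻¹ * ∑ j, μ j * M j i := by rw [Finset.mul_sum]
      _ = 1 := by rw [hvm]; exact inv_mul_cancel₀ (hμpos i).ne'
  -- stochasticity of all the powers
  have hstochk : ∀ k : ℕ, 1 ≤ k →
      (∀ i j, 0 ≤ (N ^ k * M ^ k) i j) ∧ ∀ i, ∑ j, (N ^ k * M ^ k) i j = 1 := by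
    intro k hk
    obtain ⟨hNk1, hNk2⟩ := stoch_pow hN1 hN2 k hk
    obtain ⟨hMk1, hMk2⟩ := stoch_pow hMnn hMrow k hk
    exact stoch_mul hNk1 hNk2 hMk1 hMk2
  -- all eigenvalues bounded by 1 in absolute value
  have heigbd : ∀ k : ℕ, 1 ≤ k → ∀ i, |eig k i| ≤ 1 := by
    intro k hk i
    obtain ⟨hanti, Q, hQ, hQeq⟩ := heig k hk
    obtain ⟨v, hv0, hv⟩ := eig_vec hQ hQeq i
    obtain ⟨hs1, hs2⟩ := hstochk k hk
    exact stoch_eig_bound (by omega) hs1 hs2 hv0 hv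
  obtain ⟨hanti1, Q, hQ, hQeq⟩ := heig 1 le_rfl
  rw [pow_one, pow_one] at hQeq
  -- eig 1 equals squared singular values
  have hsq_anti : Antitone (fun i => S i i ^ 2) := by
    intro i j hij
    have h1 := hSord i j hij
    have h2 := hSnn j
    simpa using pow_le_pow_left₀ h2 h1 2
  have heq : eig 1 = fun i => S i i ^ 2 := by
    apply sorted_eq_of_prod_eq hanti1 hsq_anti
    intro t
    rw [← det_conj_diag hQ hQeq t, ← det_conj_diag hPdet hNM_P t]
  -- the top eigenvalue is 1
  have hone : ∃ i, eig 1 i = 1 := by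
    have hdet : ((1:ℝ) • (1 : Matrix (Fin n) (Fin n) ℝ) - N * M).det = 0 := by
      rw [← Matrix.exists_mulVec_eq_zero_iff]
      refine ⟨fun _ => 1, ?_, ?_⟩
      · intro hcontra
        have := congrFun hcontra ⟨0, by omega⟩
        simp at this
      · funext i
        obtain ⟨hs1, hs2⟩ := hstochk 1 le_rfl
        rw [pow_one, pow_one] at hs2
        rw [Matrix.sub_mulVec, Matrix.smul_mulVec, Matrix.one_mulVec]
        simp [Matrix.mulVec, dotProduct, hs2 i]
    rw [det_conj_diag hQ hQeq 1] at hdet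
    obtain ⟨i, -, hi⟩ := Finset.prod_eq_zero_iff.mp hdet
    exact ⟨i, by linarith [sub_eq_zero.mp hi]⟩
  have htop : eig 1 ⟨0, by omega⟩ = 1 := by
    obtain ⟨i, hi⟩ := hone
    have h1 : eig 1 i ≤ eig 1 ⟨0, by omega⟩ := hanti1 (Fin.mk_le_of_le_val (by omega))
    have h2 : eig 1 ⟨0, by omega⟩ ≤ 1 := by
      have := heigbd 1 le_rfl ⟨0, by omega⟩
      exact (abs_le.mp this).2
    linarith
  have goal1 : S ⟨0, by omega⟩ ⟨0, by omega⟩ = 1 := by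
    have := congrFun heq ⟨0, by omega⟩
    rw [htop] at this
    have h0 := hSnn ⟨0, by omega⟩
    nlinarith
  refine ⟨goal1, part2, congrFun heq ⟨1, by omega⟩, ?_⟩
  -- Part 4
  have hle2 : ∀ k : ℕ, (1 - eig (k + 1) ⟨1, by omega⟩) / ((k : ℝ) + 1) ≤ 2 := by
    intro k
    have hb := heigbd (k + 1) (by omega) ⟨1, by omega⟩
    have h1 : (0:ℝ) ≤ 1 - eig (k + 1) ⟨1, by omega⟩ := by
      have := (abs_le.mp hb).2; linarith
    have h2 : 1 - eig (k + 1) ⟨1, by omega⟩ ≤ 2 := by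
      have := (abs_le.mp hb).1; linarith
    calc (1 - eig (k + 1) ⟨1, by omega⟩) / ((k : ℝ) + 1)
        ≤ 1 - eig (k + 1) ⟨1, by omega⟩ := by
          apply div_le_self h1
          have : (0:ℝ) ≤ (k:ℝ) := Nat.cast_nonneg k
          linarith
      _ ≤ 2 := h2
  have hbdd : BddAbove (Set.range fun k : ℕ =>
      (1 - eig (k + 1) ⟨1, by omega⟩) / ((k : ℝ) + 1)) := by
    refine ⟨2, ?_⟩
    rintro x ⟨k, rfl⟩
    exact hle2 k
  have hkey := le_ciSup hbdd 0
  have hval : (1 - eig (0 + 1) ⟨1, by omega⟩) / (((0:ℕ) : ℝ) + 1)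
      = 1 - (S ⟨1, by omega⟩ ⟨1, by omega⟩) ^ 2 := by
    rw [congrFun heq ⟨1, by omega⟩]
    norm_num
  rw [hval] at hkey
  exact hkey
end
end

section
/- Let n = |I| for a finite index set I, let t > 0, 0 < ε < 1/4, let μ, μ̃ : I → ℝ satisfy μᵢ ≥ t, Σᵢ μᵢ ≤ 1, and |μ̃ᵢ − μᵢ| ≤ ε·μᵢ for all i, and set D = diag(μ), Δ = diag(μ̃−μ). Let M, E be real n×n matrices with ‖M‖_F ≤ √n and ‖E‖_F ≤ ε√n. Then the perturbed rescaled matrix L̃ = (D+Δ)^{1/2}(M+E)(D+Δ)^{-1/2} and L = D^{1/2} M D^{-1/2} satisfy ‖L̃ − L‖_F ≤ 19·√ε·n/√t. -/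
open Matrix BigOperators

noncomputable section

set_option maxHeartbeats 1000000 in
/-- Perturbation bound for the rescaled transition matrix: with `μᵢ ≥ t > 0`, `Σᵢ μᵢ ≤ 1`,
`|μ̃ᵢ − μᵢ| ≤ ε μᵢ`, `0 < ε < 1/4`, `‖M‖_F ≤ √n` and `‖E‖_F ≤ ε√n`, the matrices
`L̃ = (D+Δ)^{1/2}(M+E)(D+Δ)^{-1/2}` and `L = D^{1/2} M D^{-1/2}` (where `D = diag(μ)` and
`D + Δ = diag(μ̃)`) satisfy `‖L̃ − L‖_F ≤ 19 √ε n / √t`. -/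
theorem rescaled_perturbation_bound {n : ℕ}
    (μ μt : Fin n → ℝ) (t ε : ℝ) (ht : 0 < t) (hε0 : 0 < ε) (hε1 : ε < 1/4)
    (hμt : ∀ i, t ≤ μ i) (hμsum : ∑ i, μ i ≤ 1)
    (hclose : ∀ i, |μt i - μ i| ≤ ε * μ i)
    (M E : Matrix (Fin n) (Fin n) ℝ)
    (hM : frobNorm M ≤ Real.sqrt n) (hE : frobNorm E ≤ ε * Real.sqrt n) :
    frobNorm
        (Matrix.diagonal (fun i => Real.sqrt (μt i)) * (M + E) *
            Matrix.diagonal (fun i => (Real.sqrt (μt i))⁻¹) -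
          Matrix.diagonal (fun i => Real.sqrt (μ i)) * M *
            Matrix.diagonal (fun i => (Real.sqrt (μ i))⁻¹))
      ≤ 19 * Real.sqrt ε * n / Real.sqrt t := by
  have hμpos : ∀ i, 0 < μ i := fun i => lt_of_lt_of_le ht (hμt i)
  have hμ1 : ∀ i, μ i ≤ 1 := by
    intro i
    calc μ i ≤ ∑ j, μ j := Finset.single_le_sum (fun j _ => (hμpos j).le) (Finset.mem_univ i)
      _ ≤ 1 := hμsum
  have hμtlb : ∀ i, (1 - ε) * μ i ≤ μt i := by
    intro i; have h := (abs_le.mp (hclose i)).1; nlinarith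
  have hμtub : ∀ i, μt i ≤ (1 + ε) * μ i := by
    intro i; have h := (abs_le.mp (hclose i)).2; nlinarith
  have hμtpos : ∀ i, 0 < μt i := fun i =>
    lt_of_lt_of_le (by nlinarith [hμpos i]) (hμtlb i)
  have hsqrtt : 0 < Real.sqrt t := Real.sqrt_pos.mpr ht
  have hsa : ∀ i, 0 < Real.sqrt (μ i) := fun i => Real.sqrt_pos.mpr (hμpos i)
  have hsa' : ∀ i, 0 < Real.sqrt (μt i) := fun i => Real.sqrt_pos.mpr (hμtpos i)
  -- |√μ̃ i - √μ i| ≤ ε √μ i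
  have hsqclose : ∀ i, |Real.sqrt (μt i) - Real.sqrt (μ i)| ≤ ε * Real.sqrt (μ i) := by
    intro i
    rw [abs_sub_le_iff]
    constructor
    · have h1 : μt i ≤ (1+ε)^2 * μ i := by
        nlinarith [hμtub i, hμpos i, mul_nonneg (mul_nonneg hε0.le hε0.le) (hμpos i).le,
          mul_nonneg hε0.le (hμpos i).le]
      have h2 : Real.sqrt (μt i) ≤ Real.sqrt ((1+ε)^2 * μ i) := Real.sqrt_le_sqrt h1
      rw [Real.sqrt_mul (by positivity), Real.sqrt_sq (by linarith)] at h2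
      linarith
    · have h1 : (1-ε)^2 * μ i ≤ μt i := by
        nlinarith [hμtlb i, hμpos i, mul_nonneg hε0.le (hμpos i).le,
          mul_nonneg (mul_nonneg hε0.le hε0.le) (hμpos i).le]
      have h2 : Real.sqrt ((1-ε)^2 * μ i) ≤ Real.sqrt (μt i) := Real.sqrt_le_sqrt h1
      rw [Real.sqrt_mul (by positivity), Real.sqrt_sq (by linarith)] at h2
      linarith
  -- (√μ̃ j)⁻¹ ≤ 2 (√t)⁻¹
  have hainv : ∀ j, (Real.sqrt (μt j))⁻¹ ≤ 2 * (Real.sqrt t)⁻¹ := by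
    intro j
    have h1 : t ≤ 4 * μt j := by nlinarith [hμtlb j, hμt j, hμpos j]
    have h2 : Real.sqrt t ≤ Real.sqrt (4 * μt j) := Real.sqrt_le_sqrt h1
    have h4 : Real.sqrt (4 * μt j) = 2 * Real.sqrt (μt j) := by
      rw [show (4:ℝ) = 2^2 by norm_num, Real.sqrt_mul (by positivity), Real.sqrt_sq (by norm_num)]
    rw [h4] at h2
    have : (1:ℝ)/Real.sqrt (μt j) ≤ 2/Real.sqrt t := by
      rw [div_le_div_iff₀ (hsa' j) hsqrtt]; linarith
    simpa [one_div, div_eq_mul_inv] using this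
  -- √μ̃ i ≤ 2
  have haup : ∀ i, Real.sqrt (μt i) ≤ 2 := by
    intro i
    have h1 : μt i ≤ 4 := by nlinarith [hμtub i, hμ1 i, hμpos i]
    have h2 : Real.sqrt (μt i) ≤ Real.sqrt 4 := Real.sqrt_le_sqrt h1
    have h4 : Real.sqrt 4 = 2 := by
      rw [show (4:ℝ) = 2^2 by norm_num, Real.sqrt_sq (by norm_num)]
    linarith [h2, h4.le]
  have hεsq : Real.sqrt ε * Real.sqrt ε = ε := Real.mul_self_sqrt hε0.le
  have hεhalf : Real.sqrt ε ≤ 1/2 := by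
    have h2 : Real.sqrt ε ≤ Real.sqrt (1/4) := Real.sqrt_le_sqrt hε1.le
    have h4 : Real.sqrt (1/4) = 1/2 := by
      rw [show (1/4:ℝ) = (1/2)^2 by norm_num, Real.sqrt_sq (by norm_num)]
    linarith
  have hεs : 4 * ε ≤ 2 * Real.sqrt ε := by nlinarith [Real.sqrt_nonneg ε]
  -- key bound on coefficient difference
  have hkey : ∀ i j, |Real.sqrt (μt i) * (Real.sqrt (μt j))⁻¹ -
      Real.sqrt (μ i) * (Real.sqrt (μ j))⁻¹| ≤ 2 * Real.sqrt ε * (Real.sqrt t)⁻¹ := by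
    intro i j
    set a := Real.sqrt (μ i) with ha_def
    set b := Real.sqrt (μ j) with hb_def
    set a' := Real.sqrt (μt i) with ha'_def
    set b' := Real.sqrt (μt j) with hb'_def
    have ha : 0 < a := hsa i
    have hb : 0 < b := hsa j
    have hb' : 0 < b' := hsa' j
    have ha1 : a ≤ 1 := Real.sqrt_le_one.mpr (hμ1 i)
    have decomp : a' * b'⁻¹ - a * b⁻¹ = (a' - a) * b'⁻¹ + a * ((b - b') * (b * b')⁻¹) := by
      field_simp
      ring
    rw [decomp]
    have t1 : |(a' - a) * b'⁻¹| ≤ ε * a * b'⁻¹ := by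
      rw [abs_mul, abs_of_pos (inv_pos.mpr hb')]
      exact mul_le_mul_of_nonneg_right (hsqclose i) (by positivity)
    have t2 : |a * ((b - b') * (b * b')⁻¹)| ≤ ε * a * b'⁻¹ := by
      rw [abs_mul, abs_mul, abs_of_pos ha, abs_of_pos (inv_pos.mpr (mul_pos hb hb'))]
      have hbb : |b - b'| ≤ ε * b := by
        have := hsqclose j; rwa [abs_sub_comm] at this
      calc a * (|b - b'| * (b*b')⁻¹) ≤ a * ((ε*b) * (b*b')⁻¹) := by
            apply mul_le_mul_of_nonneg_left _ ha.le
            exact mul_le_mul_of_nonneg_right hbb (by positivity)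
        _ = ε * a * b'⁻¹ := by field_simp
    have hb'inv : b'⁻¹ ≤ 2 * (Real.sqrt t)⁻¹ := hainv j
    have hbnd : ε * a * b'⁻¹ ≤ 2 * ε * (Real.sqrt t)⁻¹ := by
      have h1 : ε * a * b'⁻¹ ≤ ε * 1 * (2 * (Real.sqrt t)⁻¹) := by
        apply mul_le_mul
        · exact mul_le_mul_of_nonneg_left ha1 hε0.le
        · exact hb'inv
        · positivity
        · positivity
      linarith
    have htri := abs_add_le ((a' - a) * b'⁻¹) (a * ((b - b') * (b * b')⁻¹))
    have hfin : 4 * ε * (Real.sqrt t)⁻¹ ≤ 2 * Real.sqrt ε * (Real.sqrt t)⁻¹ := by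
      have := mul_le_mul_of_nonneg_right hεs (inv_nonneg.mpr hsqrtt.le)
      linarith
    linarith
  -- upper bound √μ̃ i * (√μ̃ j)⁻¹ ≤ 4 (√t)⁻¹
  have hup : ∀ i j, Real.sqrt (μt i) * (Real.sqrt (μt j))⁻¹ ≤ 4 * (Real.sqrt t)⁻¹ := by
    intro i j
    have h1 := hainv j
    have h2 := haup i
    have h3 : 0 ≤ (Real.sqrt (μt j))⁻¹ := by positivity
    nlinarith [hsa' i, inv_nonneg.mpr hsqrtt.le]
  -- sums of squares bounds
  have hM2 : ∑ i, ∑ j, (M i j)^2 ≤ (n:ℝ) := by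
    have h0 : (0:ℝ) ≤ ∑ i, ∑ j, (M i j)^2 := by positivity
    have hs := Real.sq_sqrt h0
    have hn := Real.sq_sqrt (Nat.cast_nonneg n : (0:ℝ) ≤ n)
    unfold frobNorm at hM
    nlinarith [Real.sqrt_nonneg (∑ i, ∑ j, (M i j)^2), Real.sqrt_nonneg (n:ℝ)]
  have hE2 : ∑ i, ∑ j, (E i j)^2 ≤ ε^2 * (n:ℝ) := by
    have h0 : (0:ℝ) ≤ ∑ i, ∑ j, (E i j)^2 := by positivity
    have hs := Real.sq_sqrt h0
    have hn := Real.sq_sqrt (Nat.cast_nonneg n : (0:ℝ) ≤ n)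
    unfold frobNorm at hE
    nlinarith [Real.sqrt_nonneg (∑ i, ∑ j, (E i j)^2), Real.sqrt_nonneg (n:ℝ)]
  -- entrywise rewrite
  set X := Matrix.diagonal (fun i => Real.sqrt (μt i)) * (M + E) *
            Matrix.diagonal (fun i => (Real.sqrt (μt i))⁻¹) -
          Matrix.diagonal (fun i => Real.sqrt (μ i)) * M *
            Matrix.diagonal (fun i => (Real.sqrt (μ i))⁻¹) with hX
  have hentry : ∀ i j, X i j = Real.sqrt (μt i) * (M i j + E i j) * (Real.sqrt (μt j))⁻¹ -
      Real.sqrt (μ i) * M i j * (Real.sqrt (μ j))⁻¹ := by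
    intro i j
    simp [hX, Matrix.sub_apply, Matrix.mul_diagonal, Matrix.diagonal_mul, Matrix.add_apply]
  -- squared entry bound
  have hsq : ∀ i j, (X i j)^2 ≤ 8 * ε * ((Real.sqrt t)⁻¹)^2 * (M i j)^2 +
      32 * ((Real.sqrt t)⁻¹)^2 * (E i j)^2 := by
    intro i j
    rw [hentry i j]
    have hrw : Real.sqrt (μt i) * (M i j + E i j) * (Real.sqrt (μt j))⁻¹ -
        Real.sqrt (μ i) * M i j * (Real.sqrt (μ j))⁻¹ =
        (Real.sqrt (μt i) * (Real.sqrt (μt j))⁻¹ -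
          Real.sqrt (μ i) * (Real.sqrt (μ j))⁻¹) * M i j +
        (Real.sqrt (μt i) * (Real.sqrt (μt j))⁻¹) * E i j := by ring
    rw [hrw]
    set c := Real.sqrt (μt i) * (Real.sqrt (μt j))⁻¹ -
          Real.sqrt (μ i) * (Real.sqrt (μ j))⁻¹ with hc
    set d := Real.sqrt (μt i) * (Real.sqrt (μt j))⁻¹ with hd
    have h1 : |c| ≤ 2 * Real.sqrt ε * (Real.sqrt t)⁻¹ := hkey i j
    have h2 : d ≤ 4 * (Real.sqrt t)⁻¹ := hup i j
    have hd0 : 0 ≤ d := by positivity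
    have hsε : (0:ℝ) ≤ Real.sqrt ε := Real.sqrt_nonneg ε
    have hsi : (0:ℝ) ≤ (Real.sqrt t)⁻¹ := by positivity
    have hc2 : c^2 ≤ 4 * ε * ((Real.sqrt t)⁻¹)^2 := by
      have h1' := mul_self_le_mul_self (abs_nonneg c) h1
      have hBB : (2 * Real.sqrt ε * (Real.sqrt t)⁻¹) * (2 * Real.sqrt ε * (Real.sqrt t)⁻¹)
          = 4 * ε * ((Real.sqrt t)⁻¹)^2 := by
        rw [show (2 * Real.sqrt ε * (Real.sqrt t)⁻¹) * (2 * Real.sqrt ε * (Real.sqrt t)⁻¹)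
          = 4 * (Real.sqrt ε * Real.sqrt ε) * ((Real.sqrt t)⁻¹)^2 from by ring, hεsq]
      calc c^2 = |c| * |c| := by rw [← sq_abs c, sq]
        _ ≤ (2 * Real.sqrt ε * (Real.sqrt t)⁻¹) * (2 * Real.sqrt ε * (Real.sqrt t)⁻¹) := h1'
        _ = 4 * ε * ((Real.sqrt t)⁻¹)^2 := hBB
    have hd2 : d^2 ≤ 16 * ((Real.sqrt t)⁻¹)^2 := by
      have h2' := mul_self_le_mul_self hd0 h2
      nlinarith [h2']
    calc (c * M i j + d * E i j)^2 ≤ 2 * c^2 * (M i j)^2 + 2 * d^2 * (E i j)^2 := by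
          nlinarith [sq_nonneg (c * M i j - d * E i j)]
      _ ≤ 8 * ε * ((Real.sqrt t)⁻¹)^2 * (M i j)^2 + 32 * ((Real.sqrt t)⁻¹)^2 * (E i j)^2 := by
          nlinarith [hc2, hd2, sq_nonneg (M i j), sq_nonneg (E i j)]
  -- sum it
  have hsinv2 : ((Real.sqrt t)⁻¹)^2 = t⁻¹ := by
    rw [← Real.sqrt_inv]
    exact Real.sq_sqrt (by positivity)
  have hsum : ∑ i, ∑ j, (X i j)^2 ≤ 16 * ε * (n:ℝ) / t := by
    have h1 : ∑ i, ∑ j, (X i j)^2 ≤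
        ∑ i, ∑ j, (8 * ε * ((Real.sqrt t)⁻¹)^2 * (M i j)^2 +
          32 * ((Real.sqrt t)⁻¹)^2 * (E i j)^2) := by
      apply Finset.sum_le_sum; intro i _
      apply Finset.sum_le_sum; intro j _
      exact hsq i j
    have h2 : ∑ i, ∑ j, (8 * ε * ((Real.sqrt t)⁻¹)^2 * (M i j)^2 +
          32 * ((Real.sqrt t)⁻¹)^2 * (E i j)^2) =
        8 * ε * t⁻¹ * (∑ i, ∑ j, (M i j)^2) + 32 * t⁻¹ * (∑ i, ∑ j, (E i j)^2) := by
      rw [← hsinv2]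
      simp only [Finset.sum_add_distrib, ← Finset.mul_sum]
    have hti : (0:ℝ) < t⁻¹ := by positivity
    have h3 : 8 * ε * t⁻¹ * (∑ i, ∑ j, (M i j)^2) ≤ 8 * ε * t⁻¹ * (n:ℝ) := by
      apply mul_le_mul_of_nonneg_left hM2 (by positivity)
    have h4 : 32 * t⁻¹ * (∑ i, ∑ j, (E i j)^2) ≤ 32 * t⁻¹ * (ε^2 * (n:ℝ)) := by
      apply mul_le_mul_of_nonneg_left hE2 (by positivity)
    have h5 : 32 * t⁻¹ * (ε^2 * (n:ℝ)) ≤ 8 * ε * t⁻¹ * (n:ℝ) := by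
      have hn0 : (0:ℝ) ≤ (n:ℝ) := Nat.cast_nonneg n
      nlinarith [mul_nonneg (mul_nonneg (mul_nonneg hε0.le
        (by linarith : (0:ℝ) ≤ 1 - 4*ε)) hti.le) hn0]
    have h6 : 8 * ε * t⁻¹ * (n:ℝ) + 8 * ε * t⁻¹ * (n:ℝ) = 16 * ε * (n:ℝ) / t := by
      field_simp; ring
    linarith
  -- finish
  unfold frobNorm
  have hR : (0:ℝ) ≤ 19 * Real.sqrt ε * n / Real.sqrt t := by positivity
  have hRsq : (19 * Real.sqrt ε * n / Real.sqrt t)^2 = 361 * ε * (n:ℝ)^2 / t := by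
    rw [div_pow, mul_pow, mul_pow]
    rw [Real.sq_sqrt hε0.le, Real.sq_sqrt ht.le]
    ring
  have hfinal : ∑ i, ∑ j, (X i j)^2 ≤ (19 * Real.sqrt ε * n / Real.sqrt t)^2 := by
    rw [hRsq]
    have hn0 : (0:ℝ) ≤ (n:ℝ) := Nat.cast_nonneg n
    have hn1 : (n:ℝ) ≤ (n:ℝ)^2 := by
      rcases Nat.eq_zero_or_pos n with h|h
      · simp [h]
      · have h1 : (1:ℝ) ≤ (n:ℝ) := by exact_mod_cast h
        nlinarith
    have h16 : 16 * ε * (n:ℝ) / t ≤ 361 * ε * (n:ℝ)^2 / t := by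
      have hnum : 16 * ε * (n:ℝ) ≤ 361 * ε * (n:ℝ)^2 := by nlinarith
      exact div_le_div_of_nonneg_right hnum ht.le
    linarith
  calc Real.sqrt (∑ i, ∑ j, (X i j)^2) ≤
      Real.sqrt ((19 * Real.sqrt ε * n / Real.sqrt t)^2) := Real.sqrt_le_sqrt hfinal
    _ = 19 * Real.sqrt ε * n / Real.sqrt t := Real.sqrt_sq hR
end
end

section
/- Let L, L̃ be real n×n matrices with σ₁(L) ≤ 1, suppose L is (α,β)-friendly, and let r := ‖L̃ − L‖_F with α > 2r. Set ζ := 2(2 + r)·r/α² and suppose β > √(2nζ). Then L̃ is friendly; moreover, its singular values satisfy σᵢ(L̃) − σᵢ₊₁(L̃) > 0 for all i, and its right singular vectors ṽᵢ (oriented so that ṽᵢᵀ𝟙 ≥ 0) satisfy 1 − ṽᵢᵀvᵢ ≤ ζ and ṽᵢᵀ𝟙 > 0, where vᵢ are the right singular vectors of L (oriented so that vᵢᵀ𝟙 ≥ 0). -/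
open Matrix BigOperators

noncomputable section

namespace FPaux

variable {n : ℕ}

def N2 (x : Fin n → ℝ) : ℝ := ∑ i, x i ^ 2
def F2 (A : Matrix (Fin n) (Fin n) ℝ) : ℝ := ∑ i, ∑ j, A i j ^ 2

lemma N2_nonneg (x : Fin n → ℝ) : 0 ≤ N2 x :=
  Finset.sum_nonneg fun _ _ => sq_nonneg _

lemma F2_nonneg (A : Matrix (Fin n) (Fin n) ℝ) : 0 ≤ F2 A :=
  Finset.sum_nonneg fun _ _ => N2_nonneg _

lemma dot_self (x : Fin n → ℝ) : x ⬝ᵥ x = N2 x := by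
  simp [dotProduct, N2, pow_two]

lemma N2_mulVec_orth (M : Matrix (Fin n) (Fin n) ℝ) (h : Mᵀ * M = 1) (x : Fin n → ℝ) :
    N2 (M *ᵥ x) = N2 x := by
  rw [← dot_self, ← dot_self x, Matrix.dotProduct_mulVec, Matrix.vecMul_mulVec, h]
  simp

lemma N2_mulVec_le (M : Matrix (Fin n) (Fin n) ℝ) (x : Fin n → ℝ) :
    N2 (M *ᵥ x) ≤ F2 M * N2 x := by
  rw [N2, F2, Finset.sum_mul]
  refine Finset.sum_le_sum fun i _ => ?_
  simpa [Matrix.mulVec, dotProduct, N2] using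
    Finset.sum_mul_sq_le_sq_mul_sq Finset.univ (fun j => M i j) x

lemma F2_transpose (A : Matrix (Fin n) (Fin n) ℝ) : F2 Aᵀ = F2 A := by
  rw [F2, F2, Finset.sum_comm]; rfl

lemma F2_eq_sum_cols (A : Matrix (Fin n) (Fin n) ℝ) : F2 A = ∑ j, N2 (fun i => A i j) := by
  rw [F2, Finset.sum_comm]; rfl

lemma F2_eq_sum_rows (A : Matrix (Fin n) (Fin n) ℝ) : F2 A = ∑ i, N2 (fun j => A i j) := rfl

lemma mul_col (A B : Matrix (Fin n) (Fin n) ℝ) (j : Fin n) :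
    (fun i => (A * B) i j) = A *ᵥ (fun k => B k j) := by
  ext i; simp [Matrix.mul_apply, Matrix.mulVec, dotProduct]

lemma sum_add_sq_le {ι : Type*} [Fintype ι] (f g : ι → ℝ) :
    ∑ i, (f i + g i)^2 ≤ (Real.sqrt (∑ i, f i ^2) + Real.sqrt (∑ i, g i ^2))^2 := by
  have hf : (0:ℝ) ≤ ∑ i, f i ^2 := Finset.sum_nonneg fun _ _ => sq_nonneg _
  have hg : (0:ℝ) ≤ ∑ i, g i ^2 := Finset.sum_nonneg fun _ _ => sq_nonneg _
  have hcs : (∑ i, f i * g i)^2 ≤ (∑ i, f i ^2) * (∑ i, g i ^2) :=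
    Finset.sum_mul_sq_le_sq_mul_sq Finset.univ f g
  have h1 : ∑ i, f i * g i ≤ Real.sqrt (∑ i, f i ^2) * Real.sqrt (∑ i, g i ^2) := by
    rw [← Real.sqrt_mul hf]
    calc ∑ i, f i * g i ≤ |∑ i, f i * g i| := le_abs_self _
    _ = Real.sqrt ((∑ i, f i * g i)^2) := (Real.sqrt_sq_eq_abs _).symm
    _ ≤ _ := Real.sqrt_le_sqrt hcs
  have hexp : ∑ i, (f i + g i)^2 = (∑ i, f i ^2) + 2 * (∑ i, f i * g i) + ∑ i, g i ^2 := by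
    rw [Finset.mul_sum, ← Finset.sum_add_distrib, ← Finset.sum_add_distrib]
    exact Finset.sum_congr rfl fun i _ => by ring
  have hsf := Real.sq_sqrt hf
  have hsg := Real.sq_sqrt hg
  nlinarith only [h1, hexp, hsf, hsg, Real.sqrt_nonneg (∑ i, f i ^2),
    Real.sqrt_nonneg (∑ i, g i ^2)]

lemma F2_add_le (A B : Matrix (Fin n) (Fin n) ℝ) :
    F2 (A + B) ≤ (Real.sqrt (F2 A) + Real.sqrt (F2 B))^2 := by
  have := sum_add_sq_le (ι := Fin n × Fin n) (fun p => A p.1 p.2) (fun p => B p.1 p.2)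
  simpa [F2, Fintype.sum_prod_type, Matrix.add_apply] using this

lemma F2_eq_trace (A : Matrix (Fin n) (Fin n) ℝ) : F2 A = Matrix.trace (Aᵀ * A) := by
  rw [Matrix.trace, F2, Finset.sum_comm]
  refine Finset.sum_congr rfl fun j _ => ?_
  simp [Matrix.diag, Matrix.mul_apply, pow_two]

lemma F2_conj (E V W : Matrix (Fin n) (Fin n) ℝ) (hV : Vᵀ * V = 1) (hW : Wᵀ * W = 1) :
    F2 (Vᵀ * E * W) = F2 E := by
  have hV' : V * Vᵀ = 1 := mul_eq_one_comm.mp hV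
  have hW' : W * Wᵀ = 1 := mul_eq_one_comm.mp hW
  rw [F2_eq_trace, F2_eq_trace]
  have : (Vᵀ * E * W)ᵀ * (Vᵀ * E * W) = Wᵀ * (Eᵀ * E) * W := by
    simp only [Matrix.transpose_mul, Matrix.transpose_transpose, Matrix.mul_assoc]
    rw [← Matrix.mul_assoc V Vᵀ, hV', Matrix.one_mul]
  rw [this, Matrix.trace_mul_comm (Wᵀ * (Eᵀ * E)) W, ← Matrix.mul_assoc, hW', Matrix.one_mul]

lemma diag_mul_entry (D M : Matrix (Fin n) (Fin n) ℝ) (hD : ∀ i j, i ≠ j → D i j = 0)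
    (i j : Fin n) : (D * M) i j = D i i * M i j := by
  rw [Matrix.mul_apply]
  rw [Finset.sum_eq_single i (fun k _ hk => by rw [hD i k (Ne.symm hk), zero_mul])
    (fun h => absurd (Finset.mem_univ i) h)]

lemma mul_diag_entry (M D : Matrix (Fin n) (Fin n) ℝ) (hD : ∀ i j, i ≠ j → D i j = 0)
    (i j : Fin n) : (M * D) i j = M i j * D j j := by
  rw [Matrix.mul_apply]
  rw [Finset.sum_eq_single j (fun k _ hk => by rw [hD k j hk, mul_zero])
    (fun h => absurd (Finset.mem_univ j) h)]

lemma sum_col_sq (M : Matrix (Fin n) (Fin n) ℝ) (h : Mᵀ * M = 1) (j : Fin n) :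
    ∑ i, M i j ^ 2 = 1 := by
  have := congrFun (congrFun h j) j
  rw [Matrix.mul_apply] at this
  simpa [Matrix.transpose_apply, pow_two] using this




lemma weyl_aux (C : Matrix (Fin n) (Fin n) ℝ) (lam mu : Fin n → ℝ) (ε : ℝ)
    (hε : 0 ≤ ε)
    (hlam : ∀ i j : Fin n, i ≤ j → lam j ≤ lam i)
    (hmu : ∀ i j : Fin n, i ≤ j → mu j ≤ mu i)
    (hcol : ∀ j, ∑ i, C i j ^ 2 = 1)
    (hrow : ∀ i, ∑ j, C i j ^ 2 = 1)
    (hsum : ∑ j, ∑ i, (C i j * (mu j - lam i))^2 ≤ ε^2) :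
    ∀ j, mu j ≤ lam j + ε := by
  intro j
  by_contra hcon
  push_neg at hcon
  set d : ℝ := mu j - lam j with hd
  have hdε : ε < d := by simp [hd]; linarith
  have hd0 : 0 < d := lt_of_le_of_lt hε hdε
  -- block sum at least 1
  have hblock : (1:ℝ) ≤ ∑ j' ∈ Finset.Iic j, ∑ i ∈ Finset.Ici j, C i j' ^ 2 := by
    have hsplit : ∀ j', ∑ i ∈ Finset.Ici j, C i j' ^ 2
        = 1 - ∑ i ∈ Finset.Iio j, C i j' ^ 2 := by
      intro j'
      have hcompl : ∑ i ∈ Finset.Iio j, C i j' ^2 + ∑ i ∈ Finset.Ici j, C i j' ^2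
          = ∑ i, C i j' ^2 := by
        rw [← Finset.sum_union]
        · congr 1
          ext i
          simp only [Finset.mem_union, Finset.mem_Iio, Finset.mem_Ici, Finset.mem_univ,
            iff_true]
          exact lt_or_ge i j
        · rw [Finset.disjoint_left]
          intro a ha hb
          rw [Finset.mem_Iio] at ha; rw [Finset.mem_Ici] at hb
          exact absurd hb (not_le.mpr ha)
      rw [hcol j'] at hcompl; linarith
    have hbound : ∑ j' ∈ Finset.Iic j, ∑ i ∈ Finset.Iio j, C i j' ^2 ≤ (j : ℝ) := by
      rw [Finset.sum_comm]
      calc ∑ i ∈ Finset.Iio j, ∑ j' ∈ Finset.Iic j, C i j' ^2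
          ≤ ∑ i ∈ Finset.Iio j, ∑ j', C i j' ^2 := by
            refine Finset.sum_le_sum fun i _ => ?_
            exact Finset.sum_le_sum_of_subset_of_nonneg (Finset.subset_univ _)
              (fun _ _ _ => sq_nonneg _)
      _ = ∑ i ∈ Finset.Iio j, 1 := by
            exact Finset.sum_congr rfl fun i _ => hrow i
      _ = (j:ℝ) := by rw [Finset.sum_const, Fin.card_Iio]; simp
    have hcard : ((Finset.Iic j).card : ℝ) = (j:ℝ) + 1 := by rw [Fin.card_Iic]; push_cast; ring
    calc (1:ℝ) = ((j:ℝ) + 1) - (j:ℝ) := by ring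
    _ ≤ ∑ j' ∈ Finset.Iic j, (1:ℝ) - ∑ j' ∈ Finset.Iic j, ∑ i ∈ Finset.Iio j, C i j' ^2 := by
        rw [Finset.sum_const, nsmul_eq_mul, mul_one, hcard]
        linarith
    _ = ∑ j' ∈ Finset.Iic j, (1 - ∑ i ∈ Finset.Iio j, C i j' ^2) := by
        rw [Finset.sum_sub_distrib]
    _ = _ := Finset.sum_congr rfl fun j' _ => (hsplit j').symm
  -- entrywise bound on the block
  have hentry : ∀ j' ∈ Finset.Iic j, ∀ i ∈ Finset.Ici j,
      C i j' ^2 * d^2 ≤ (C i j' * (mu j' - lam i))^2 := by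
    intro j' hj' i hi
    rw [Finset.mem_Iic] at hj'
    rw [Finset.mem_Ici] at hi
    have h1 : mu j ≤ mu j' := hmu j' j hj'
    have h2 : lam i ≤ lam j := hlam j i hi
    have : d ≤ mu j' - lam i := by simp [hd]; linarith
    have hsq : d^2 ≤ (mu j' - lam i)^2 := by nlinarith only [this, hd0]
    calc C i j' ^2 * d^2 ≤ C i j' ^2 * (mu j' - lam i)^2 :=
          mul_le_mul_of_nonneg_left hsq (sq_nonneg _)
    _ = (C i j' * (mu j' - lam i))^2 := by ring
  have hblock2 : d^2 ≤ ∑ j' ∈ Finset.Iic j, ∑ i ∈ Finset.Ici j, (C i j' * (mu j' - lam i))^2 := by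
    calc d^2 = 1 * d^2 := by ring
    _ ≤ (∑ j' ∈ Finset.Iic j, ∑ i ∈ Finset.Ici j, C i j' ^ 2) * d^2 :=
        mul_le_mul_of_nonneg_right hblock (sq_nonneg _)
    _ = ∑ j' ∈ Finset.Iic j, ∑ i ∈ Finset.Ici j, C i j' ^ 2 * d^2 := by
        rw [Finset.sum_mul]
        exact Finset.sum_congr rfl fun j' _ => Finset.sum_mul _ _ _
    _ ≤ _ := Finset.sum_le_sum fun j' hj' => Finset.sum_le_sum fun i hi => hentry j' hj' i hi
  have hfull : ∑ j' ∈ Finset.Iic j, ∑ i ∈ Finset.Ici j, (C i j' * (mu j' - lam i))^2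
      ≤ ∑ j', ∑ i, (C i j' * (mu j' - lam i))^2 := by
    calc ∑ j' ∈ Finset.Iic j, ∑ i ∈ Finset.Ici j, (C i j' * (mu j' - lam i))^2
        ≤ ∑ j' ∈ Finset.Iic j, ∑ i, (C i j' * (mu j' - lam i))^2 :=
          Finset.sum_le_sum fun j' _ => Finset.sum_le_sum_of_subset_of_nonneg
            (Finset.subset_univ _) (fun _ _ _ => sq_nonneg _)
    _ ≤ _ := Finset.sum_le_sum_of_subset_of_nonneg (Finset.subset_univ _)
          (fun _ _ _ => Finset.sum_nonneg fun _ _ => sq_nonneg _)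
  nlinarith only [hblock2, hfull, hsum, hdε, hε, hd0]


end FPaux

namespace FPaux

lemma S_transpose {n : ℕ} (S : Matrix (Fin n) (Fin n) ℝ)
    (hSd : ∀ i j, i ≠ j → S i j = 0) : Sᵀ = S := by
  ext i j
  by_cases h : i = j
  · subst h; rfl
  · rw [Matrix.transpose_apply, hSd i j h, hSd j i (Ne.symm h)]

lemma gram_of_svd {n : ℕ} {A U S V : Matrix (Fin n) (Fin n) ℝ} (h : IsSVD A U S V) :
    Aᵀ * A = V * (S * S) * Vᵀ := by
  obtain ⟨hA, hU, hV, hSd, -, -⟩ := h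
  subst hA
  simp only [Matrix.transpose_mul, Matrix.transpose_transpose, Matrix.mul_assoc]
  rw [S_transpose S hSd, ← Matrix.mul_assoc Uᵀ U, hU, Matrix.one_mul]

lemma sum_row_sq {n : ℕ} (M : Matrix (Fin n) (Fin n) ℝ) (h : M * Mᵀ = 1) (i : Fin n) :
    ∑ j, M i j ^ 2 = 1 := by
  have := sum_col_sq Mᵀ (by rwa [Matrix.transpose_transpose]) i
  simpa using this

set_option maxHeartbeats 2000000 in
lemma core {n : ℕ} (hn : 0 < n)
    (L Lt U S V : Matrix (Fin n) (Fin n) ℝ)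
    (hSVD : IsSVD L U S V)
    (hσ₁ : S ⟨0, hn⟩ ⟨0, hn⟩ ≤ 1)
    (α β r ζ : ℝ)
    (hr : r = frobNorm (Lt - L)) (hα : 2 * r < α)
    (hgap : ∀ i j : Fin n, (j : ℕ) = (i : ℕ) + 1 → α < S i i - S j j)
    (hβV : ∀ i, β < ∑ k, V k i)
    (hζ : ζ = 2 * (2 + r) * r / α ^ 2)
    (hβ : Real.sqrt (2 * n * ζ) < β)
    (St Vt : Matrix (Fin n) (Fin n) ℝ)
    (hVt : Vtᵀ * Vt = 1)
    (hfact : Ltᵀ * Lt = Vt * (St * St) * Vtᵀ)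
    (hStd : ∀ i j, i ≠ j → St i j = 0) (hSt0 : ∀ i, 0 ≤ St i i)
    (hSta : ∀ i j : Fin n, i ≤ j → St j j ≤ St i i)
    (hort : ColOriented Vt) :
    (∀ i j : Fin n, (j : ℕ) = (i : ℕ) + 1 → 0 < St i i - St j j) ∧
    (∀ i, 1 - ∑ k, Vt k i * V k i ≤ ζ) ∧
    (∀ i, 0 < ∑ k, Vt k i) := by
  obtain ⟨hL, hUU, hVV, hSd, hS0, hSa⟩ := hSVD
  have hVV' : V * Vᵀ = 1 := mul_eq_one_comm.mp hVV
  have hVt' : Vt * Vtᵀ = 1 := mul_eq_one_comm.mp hVt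
  -- basic numbers
  set Δ : Matrix (Fin n) (Fin n) ℝ := Lt - L with hΔdef
  have hr0 : 0 ≤ r := by rw [hr]; exact Real.sqrt_nonneg _
  have hα0 : 0 < α := by linarith
  have hαs : 0 < α ^ 2 := by positivity
  set ε : ℝ := (2 + r) * r with hεdef
  have hε0 : 0 ≤ ε := by rw [hεdef]; nlinarith only [hr0]
  have hεζ : 2 * ε = ζ * α ^ 2 := by
    rw [hζ]; field_simp; ring
  have hΔF : FPaux.F2 Δ = r ^ 2 := by
    have h0 : (0:ℝ) ≤ ∑ i, ∑ j, (Δ i j) ^ 2 := FPaux.F2_nonneg Δ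
    rw [hr, frobNorm, Real.sq_sqrt h0]; rfl
  -- the Gram perturbation E
  set E : Matrix (Fin n) (Fin n) ℝ := Ltᵀ * Lt - Lᵀ * L with hEdef
  have hLt_eq : Lt = L + Δ := by rw [hΔdef]; abel
  have hE : E = (Lᵀ * Δ + Δᵀ * L) + Δᵀ * Δ := by
    rw [hEdef, hLt_eq, Matrix.transpose_add, Matrix.add_mul, Matrix.mul_add, Matrix.mul_add]
    abel
  -- operator bound for Lᵀ
  have hopL : ∀ x : Fin n → ℝ, FPaux.N2 (Lᵀ *ᵥ x) ≤ FPaux.N2 x := by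
    intro x
    have hLT : Lᵀ = V * S * Uᵀ := by
      rw [hL]
      simp only [Matrix.transpose_mul, Matrix.transpose_transpose, Matrix.mul_assoc]
      rw [S_transpose S hSd]
    have h1 : Lᵀ *ᵥ x = V *ᵥ (S *ᵥ (Uᵀ *ᵥ x)) := by
      rw [hLT, Matrix.mulVec_mulVec, Matrix.mulVec_mulVec]
    rw [h1, FPaux.N2_mulVec_orth V hVV]
    have hUorth : (Uᵀ)ᵀ * Uᵀ = 1 := by
      rw [Matrix.transpose_transpose]; exact mul_eq_one_comm.mp hUU
    rw [← FPaux.N2_mulVec_orth Uᵀ hUorth x]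
    set z := Uᵀ *ᵥ x
    have hdiag : ∀ i, (S *ᵥ z) i = S i i * z i := by
      intro i
      rw [Matrix.mulVec, dotProduct]
      exact Finset.sum_eq_single i (fun k _ hk => by rw [hSd i k (Ne.symm hk), zero_mul])
        (fun h => absurd (Finset.mem_univ i) h)
    rw [FPaux.N2, FPaux.N2]
    refine Finset.sum_le_sum fun i _ => ?_
    rw [hdiag i]
    have hSi : S i i ≤ 1 := le_trans (hSa ⟨0, hn⟩ i (by simp [Fin.le_def])) hσ₁
    nlinarith only [mul_nonneg (mul_nonneg (sub_nonneg.mpr hSi)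
      (by linarith [hS0 i] : (0:ℝ) ≤ 1 + S i i)) (sq_nonneg (z i))]
  -- Frobenius bounds
  have hFa : FPaux.F2 (Lᵀ * Δ) ≤ r ^ 2 := by
    rw [FPaux.F2_eq_sum_cols, ← hΔF, FPaux.F2_eq_sum_cols]
    refine Finset.sum_le_sum fun j _ => ?_
    rw [FPaux.mul_col]
    exact hopL _
  have hFb : FPaux.F2 (Δᵀ * L) ≤ r ^ 2 := by
    have : (Δᵀ * L)ᵀ = Lᵀ * Δ := by
      rw [Matrix.transpose_mul, Matrix.transpose_transpose]
    rw [← FPaux.F2_transpose, this]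
    exact hFa
  have hFc : FPaux.F2 (Δᵀ * Δ) ≤ r ^ 2 * r ^ 2 := by
    have hb : ∀ j, FPaux.N2 (fun i => (Δᵀ * Δ) i j) ≤ r ^ 2 * FPaux.N2 (fun k => Δ k j) := by
      intro j
      rw [FPaux.mul_col]
      calc FPaux.N2 (Δᵀ *ᵥ fun k => Δ k j) ≤ FPaux.F2 Δᵀ * FPaux.N2 (fun k => Δ k j) :=
            FPaux.N2_mulVec_le _ _
      _ = r ^ 2 * FPaux.N2 (fun k => Δ k j) := by rw [FPaux.F2_transpose, hΔF]
    calc FPaux.F2 (Δᵀ * Δ) = ∑ j, FPaux.N2 (fun i => (Δᵀ * Δ) i j) := FPaux.F2_eq_sum_cols _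
    _ ≤ ∑ j, r ^ 2 * FPaux.N2 (fun k => Δ k j) := Finset.sum_le_sum fun j _ => hb j
    _ = r ^ 2 * FPaux.F2 Δ := by rw [← Finset.mul_sum, FPaux.F2_eq_sum_cols]
    _ = r ^ 2 * r ^ 2 := by rw [hΔF]
  have hFE : FPaux.F2 E ≤ ε ^ 2 := by
    have hsa : Real.sqrt (FPaux.F2 (Lᵀ * Δ)) ≤ r := by
      rw [← Real.sqrt_sq hr0]; exact Real.sqrt_le_sqrt hFa
    have hsb : Real.sqrt (FPaux.F2 (Δᵀ * L)) ≤ r := by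
      rw [← Real.sqrt_sq hr0]; exact Real.sqrt_le_sqrt hFb
    have hsc : Real.sqrt (FPaux.F2 (Δᵀ * Δ)) ≤ r ^ 2 := by
      have : r ^ 2 * r ^ 2 = (r ^ 2) ^ 2 := by ring
      rw [this] at hFc
      rw [← Real.sqrt_sq (sq_nonneg r)]; exact Real.sqrt_le_sqrt hFc
    have h1 : FPaux.F2 (Lᵀ * Δ + Δᵀ * L) ≤ (r + r) ^ 2 := by
      refine le_trans (FPaux.F2_add_le _ _) ?_
      nlinarith only [hsa, hsb, Real.sqrt_nonneg (FPaux.F2 (Lᵀ * Δ)),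
        Real.sqrt_nonneg (FPaux.F2 (Δᵀ * L))]
    have hs1 : Real.sqrt (FPaux.F2 (Lᵀ * Δ + Δᵀ * L)) ≤ r + r := by
      rw [← Real.sqrt_sq (by linarith : (0:ℝ) ≤ r + r)]; exact Real.sqrt_le_sqrt h1
    have h2 : FPaux.F2 E ≤ ((r + r) + r ^ 2) ^ 2 := by
      rw [hE]
      refine le_trans (FPaux.F2_add_le _ _) ?_
      nlinarith only [hs1, hsc, hr0, Real.sqrt_nonneg (FPaux.F2 (Lᵀ * Δ + Δᵀ * L)),
        Real.sqrt_nonneg (FPaux.F2 (Δᵀ * Δ))]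
    calc FPaux.F2 E ≤ ((r + r) + r ^ 2) ^ 2 := h2
    _ = ε ^ 2 := by rw [hεdef]; ring
  -- the coupling matrix
  set C : Matrix (Fin n) (Fin n) ℝ := Vᵀ * Vt with hCdef
  have hCtC : Cᵀ * C = 1 := by
    rw [hCdef, Matrix.transpose_mul, Matrix.transpose_transpose]
    calc Vtᵀ * V * (Vᵀ * Vt) = Vtᵀ * (V * Vᵀ) * Vt := by simp only [Matrix.mul_assoc]
    _ = 1 := by rw [hVV']; rw [Matrix.mul_one]; exact hVt
  have hCCt : C * Cᵀ = 1 := mul_eq_one_comm.mp hCtC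
  set lam : Fin n → ℝ := fun i => S i i ^ 2 with hlamdef
  set mu : Fin n → ℝ := fun i => St i i ^ 2 with hmudef
  have hlam : ∀ i j : Fin n, i ≤ j → lam j ≤ lam i := fun i j hij =>
    pow_le_pow_left₀ (hS0 j) (hSa i j hij) 2
  have hmu : ∀ i j : Fin n, i ≤ j → mu j ≤ mu i := fun i j hij =>
    pow_le_pow_left₀ (hSt0 j) (hSta i j hij) 2
  -- entries of the conjugated perturbation
  have hStSt_off : ∀ i j, i ≠ j → (St * St) i j = 0 := by
    intro i j hij
    rw [FPaux.diag_mul_entry St St hStd, hStd i j hij, mul_zero]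
  have hSS_off : ∀ i j, i ≠ j → (S * S) i j = 0 := by
    intro i j hij
    rw [FPaux.diag_mul_entry S S hSd, hSd i j hij, mul_zero]
  have hLgram : Lᵀ * L = V * (S * S) * Vᵀ :=
    gram_of_svd ⟨hL, hUU, hVV, hSd, hS0, hSa⟩
  have hGmat : Vᵀ * E * Vt = C * (St * St) - (S * S) * C := by
    rw [hEdef, hfact, hLgram]
    rw [Matrix.mul_sub, Matrix.sub_mul]
    congr 1
    · calc Vᵀ * (Vt * (St * St) * Vtᵀ) * Vt
          = Vᵀ * Vt * (St * St) * (Vtᵀ * Vt) := by simp only [Matrix.mul_assoc]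
      _ = C * (St * St) := by rw [hVt, Matrix.mul_one, hCdef]
    · calc Vᵀ * (V * (S * S) * Vᵀ) * Vt
          = (Vᵀ * V) * ((S * S) * (Vᵀ * Vt)) := by simp only [Matrix.mul_assoc]
      _ = (S * S) * C := by rw [hVV, Matrix.one_mul, hCdef]
  have hGentry : ∀ i j, (Vᵀ * E * Vt) i j = C i j * (mu j - lam i) := by
    intro i j
    rw [hGmat, Matrix.sub_apply, FPaux.mul_diag_entry C (St * St) hStSt_off,
      FPaux.diag_mul_entry (S * S) C hSS_off]
    have h1 : (St * St) j j = mu j := by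
      rw [FPaux.diag_mul_entry St St hStd, hmudef]; ring
    have h2 : (S * S) i i = lam i := by
      rw [FPaux.diag_mul_entry S S hSd, hlamdef]; ring
    rw [h1, h2]; ring
  have hFG : ∑ j, ∑ i, (C i j * (mu j - lam i)) ^ 2 ≤ ε ^ 2 := by
    have hinv : FPaux.F2 (Vᵀ * E * Vt) = FPaux.F2 E := FPaux.F2_conj E V Vt hVV hVt
    calc ∑ j, ∑ i, (C i j * (mu j - lam i)) ^ 2
        = ∑ j, ∑ i, ((Vᵀ * E * Vt) i j) ^ 2 := by
          exact Finset.sum_congr rfl fun j _ => Finset.sum_congr rfl fun i _ => by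
            rw [hGentry]
    _ = FPaux.F2 (Vᵀ * E * Vt) := by rw [FPaux.F2, Finset.sum_comm]
    _ = FPaux.F2 E := hinv
    _ ≤ ε ^ 2 := hFE
  -- Weyl bounds
  have hcolC : ∀ j, ∑ i, C i j ^ 2 = 1 := FPaux.sum_col_sq C hCtC
  have hrowC : ∀ i, ∑ j, C i j ^ 2 = 1 := FPaux.sum_row_sq C hCCt
  have hweyl1 : ∀ j, mu j ≤ lam j + ε :=
    FPaux.weyl_aux C lam mu ε hε0 hlam hmu hcolC hrowC hFG
  have hsum2 : ∑ j, ∑ i, (Cᵀ i j * (lam j - mu i)) ^ 2 ≤ ε ^ 2 := by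
    calc ∑ j, ∑ i, (Cᵀ i j * (lam j - mu i)) ^ 2
        = ∑ i, ∑ j, (Cᵀ i j * (lam j - mu i)) ^ 2 := Finset.sum_comm
    _ = ∑ a, ∑ b, (C b a * (mu a - lam b)) ^ 2 := by
        refine Finset.sum_congr rfl fun a _ => Finset.sum_congr rfl fun b _ => ?_
        rw [Matrix.transpose_apply]; ring
    _ ≤ ε ^ 2 := hFG
  have hweyl2 : ∀ j, lam j ≤ mu j + ε := by
    refine FPaux.weyl_aux Cᵀ mu lam ε hε0 hmu hlam ?_ ?_ hsum2
    · intro j; simpa using hrowC j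
    · intro i; simpa using hcolC i
  have habs : ∀ j, |mu j - lam j| ≤ ε := fun j =>
    abs_le.mpr ⟨by linarith [hweyl2 j], by linarith [hweyl1 j]⟩
  -- zeta numerics
  have hζ0 : 0 ≤ ζ := by
    rw [hζ]
    apply div_nonneg
    · nlinarith only [hr0]
    · positivity
  have hβ0 : 0 < β := lt_of_le_of_lt (Real.sqrt_nonneg _) hβ
  have h2nζ : 2 * n * ζ < β ^ 2 := by
    have hnn : (0:ℝ) ≤ 2 * n * ζ := by positivity
    have := mul_self_lt_mul_self (Real.sqrt_nonneg (2 * n * ζ)) hβ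
    rw [Real.mul_self_sqrt hnn] at this
    nlinarith only [this]
  have hn1 : (1:ℝ) ≤ (n:ℝ) := by exact_mod_cast hn
  have hsn : ∑ i, (∑ k, V k i) ^ 2 = (n:ℝ) := by
    have h1 : ∀ k l, ∑ i, V k i * V l i = (1 : Matrix (Fin n) (Fin n) ℝ) k l := by
      intro k l
      rw [← hVV', Matrix.mul_apply]
      rfl
    calc ∑ i, (∑ k, V k i) ^ 2 = ∑ i, ∑ k, ∑ l, V k i * V l i := by
          refine Finset.sum_congr rfl fun i _ => ?_
          rw [pow_two, Finset.sum_mul_sum]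
    _ = ∑ k, ∑ i, ∑ l, V k i * V l i := Finset.sum_comm
    _ = ∑ k, ∑ l, ∑ i, V k i * V l i := Finset.sum_congr rfl fun k _ => Finset.sum_comm
    _ = ∑ k, ∑ l, (1 : Matrix (Fin n) (Fin n) ℝ) k l := by
          refine Finset.sum_congr rfl fun k _ => Finset.sum_congr rfl fun l _ => h1 k l
    _ = (n:ℝ) := by simp [Matrix.one_apply]
  have hβ1 : β ^ 2 < 1 := by
    have hterm : ∀ i : Fin n, β ^ 2 < (∑ k, V k i) ^ 2 := by
      intro i
      have := hβV i
      nlinarith only [this, hβ0]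
    have hne : (Finset.univ : Finset (Fin n)).Nonempty := ⟨⟨0, hn⟩, Finset.mem_univ _⟩
    have hlt := Finset.sum_lt_sum_of_nonempty hne fun i _ => hterm i
    rw [hsn, Finset.sum_const, Finset.card_univ, Fintype.card_fin, nsmul_eq_mul] at hlt
    nlinarith only [hlt, hn1, sq_nonneg β]
  have hζhalf : 2 * ζ < 1 := by
    nlinarith only [h2nζ, hβ1, hn1, hζ0, mul_nonneg (sub_nonneg.mpr hn1) hζ0]
  have hεα : 4 * ε ≤ α ^ 2 := by
    nlinarith only [hεζ, hαs, mul_nonneg (by linarith : (0:ℝ) ≤ 1 - 2 * ζ) (le_of_lt hαs)]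
  -- gap in lam
  have hlamgap : ∀ i j : Fin n, i < j → α ^ 2 < lam i - lam j := by
    intro i j hij
    have hij' : (i : ℕ) < (j : ℕ) := hij
    have hi1 : (i : ℕ) + 1 < n := lt_of_le_of_lt hij' j.isLt |>.trans_le (le_refl n) |> fun _ => by omega
    set i1 : Fin n := ⟨(i : ℕ) + 1, by omega⟩ with hi1def
    have hstep := hgap i i1 rfl
    have hle : i1 ≤ j := by
      rw [Fin.le_def]; simpa [hi1def] using hij'
    have h2 : lam j ≤ lam i1 := hlam i1 j hle
    have h3 : α < S i i - S i1 i1 := hstep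
    have h4 : lam i - lam i1 > α ^ 2 := by
      have hsum : α ≤ S i i + S i1 i1 := by linarith [hS0 i1]
      have hprod : α * α < (S i i - S i1 i1) * (S i i + S i1 i1) :=
        mul_lt_mul h3 hsum hα0 (by linarith [hS0 i1])
      have heq : lam i - lam i1 = (S i i - S i1 i1) * (S i i + S i1 i1) := by
        show S i i ^ 2 - S i1 i1 ^ 2 = _
        ring
      rw [heq]
      nlinarith only [hprod]
    linarith
  -- first conclusion: gaps of St
  have hgapSt : ∀ i j : Fin n, (j : ℕ) = (i : ℕ) + 1 → 0 < St i i - St j j := by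
    intro i j hij
    have hijlt : i < j := by rw [Fin.lt_def]; omega
    have h1 : α ^ 2 < lam i - lam j := hlamgap i j hijlt
    have h2 := habs i; have h3 := habs j
    have hmuij : 0 < mu i - mu j := by
      rw [abs_le] at h2 h3
      linarith only [h1, h2.1, h2.2, h3.1, h3.2, hεα, hαs]
    by_contra hcon
    push_neg at hcon
    have : St i i ≤ St j j := by linarith
    have : mu i ≤ mu j := pow_le_pow_left₀ (hSt0 i) this 2
    linarith
  -- column analysis
  have key : ∀ j, 1 - ζ ≤ C j j ∧ 0 < ∑ k, Vt k j := by
    intro j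
    have hcolj : ∑ i, (C i j * (mu j - lam i)) ^ 2 ≤ ε ^ 2 := by
      refine le_trans ?_ hFG
      exact Finset.single_le_sum
        (f := fun j' => ∑ i, (C i j' * (mu j' - lam i)) ^ 2)
        (fun j' _ => Finset.sum_nonneg fun i _ => sq_nonneg _) (Finset.mem_univ j)
    have hoff : ∀ i, i ≠ j → ((3/4) * α ^ 2) ^ 2 * C i j ^ 2 ≤ (C i j * (mu j - lam i)) ^ 2 := by
      intro i hij
      have hmm := habs j
      rw [abs_le] at hmm
      have hsq : ((3/4) * α ^ 2) ^ 2 ≤ (mu j - lam i) ^ 2 := by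
        rcases lt_or_gt_of_ne hij with h | h
        · have h5 := hlamgap i j h
          have hXc : mu j - lam i + (3/4) * α ^ 2 ≤ 0 := by linarith [hmm.1, hmm.2]
          nlinarith only [hXc, hαs]
        · have h5 := hlamgap j i h
          have hXc : 0 ≤ mu j - lam i - (3/4) * α ^ 2 := by linarith [hmm.1, hmm.2]
          nlinarith only [hXc, hαs]
      calc ((3/4) * α ^ 2) ^ 2 * C i j ^ 2 ≤ (mu j - lam i) ^ 2 * C i j ^ 2 :=
            mul_le_mul_of_nonneg_right hsq (sq_nonneg _)
      _ = (C i j * (mu j - lam i)) ^ 2 := by ring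
    set Q : ℝ := ∑ i ∈ Finset.univ.erase j, C i j ^ 2 with hQdef
    have hQ0 : 0 ≤ Q := Finset.sum_nonneg fun _ _ => sq_nonneg _
    have hQbound : ((3/4) * α ^ 2) ^ 2 * Q ≤ ε ^ 2 := by
      rw [hQdef, Finset.mul_sum]
      refine le_trans ?_ hcolj
      refine le_trans (Finset.sum_le_sum fun i hi =>
        hoff i (Finset.ne_of_mem_erase hi)) ?_
      exact Finset.sum_le_sum_of_subset_of_nonneg (Finset.erase_subset _ _)
        (fun _ _ _ => sq_nonneg _)
    have hεsq : 4 * ε ^ 2 = ζ ^ 2 * α ^ 4 := by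
      linear_combination (2 * ε + ζ * α ^ 2) * hεζ
    have hα4 : 0 < α ^ 4 := by positivity
    have hQζ : Q ≤ (4/9) * ζ ^ 2 := by
      have h1 : (9/16) * (α ^ 4 * Q) ≤ (1/4) * (ζ ^ 2 * α ^ 4) := by
        nlinarith only [hQbound, hεsq]
      by_contra hc
      push_neg at hc
      have h3 := mul_lt_mul_of_pos_left hc hα4
      nlinarith only [h1, h3]
    have hCjj : C j j ^ 2 = 1 - Q := by
      have := hcolC j
      rw [← Finset.add_sum_erase Finset.univ (fun i => C i j ^ 2) (Finset.mem_univ j)] at this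
      linarith
    -- sums of columns
    set s : Fin n → ℝ := fun i => ∑ k, V k i with hsdef
    set t : ℝ := ∑ k, Vt k j with htdef
    have ht0 : 0 ≤ t := hort j
    have hVtVC : Vt = V * C := by
      rw [hCdef, ← Matrix.mul_assoc, hVV', Matrix.one_mul]
    have htj : t = ∑ i, C i j * s i := by
      rw [htdef]
      calc ∑ k, Vt k j = ∑ k, ∑ i, V k i * C i j := by
            refine Finset.sum_congr rfl fun k _ => ?_
            rw [hVtVC, Matrix.mul_apply]
      _ = ∑ i, ∑ k, V k i * C i j := Finset.sum_comm
      _ = ∑ i, C i j * s i := by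
            refine Finset.sum_congr rfl fun i _ => ?_
            rw [hsdef, ← Finset.sum_mul]
            ring
    set q : ℝ := t - C j j * s j with hqdef
    have hq : q = ∑ i ∈ Finset.univ.erase j, C i j * s i := by
      rw [hqdef, htj,
        ← Finset.add_sum_erase Finset.univ (fun i => C i j * s i) (Finset.mem_univ j)]
      ring
    have hsn' : ∑ i ∈ Finset.univ.erase j, s i ^ 2 ≤ (n:ℝ) := by
      rw [← hsn]
      exact Finset.sum_le_sum_of_subset_of_nonneg (Finset.erase_subset _ _)
        (fun _ _ _ => sq_nonneg _)
    have hq2 : q ^ 2 ≤ Q * (n:ℝ) := by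
      rw [hq]
      calc (∑ i ∈ Finset.univ.erase j, C i j * s i) ^ 2
          ≤ (∑ i ∈ Finset.univ.erase j, C i j ^ 2) * (∑ i ∈ Finset.univ.erase j, s i ^ 2) :=
            Finset.sum_mul_sq_le_sq_mul_sq _ _ _
      _ ≤ Q * (n:ℝ) := by
            rw [← hQdef]
            exact mul_le_mul_of_nonneg_left hsn' hQ0
    have hq2' : q ^ 2 ≤ (4/9) * ζ ^ 2 * (n:ℝ) := by
      refine le_trans hq2 ?_
      have : Q * (n:ℝ) ≤ ((4/9) * ζ ^ 2) * (n:ℝ) :=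
        mul_le_mul_of_nonneg_right hQζ (by positivity)
      linarith
    have hn0 : (0:ℝ) ≤ (n:ℝ) := by linarith
    have hγ : ζ ^ 2 ≤ ζ / 2 := by nlinarith only [hζhalf, hζ0]
    have h5 : (4/9) * ζ ^ 2 * (n:ℝ) ≤ (2/9) * ζ * (n:ℝ) := by nlinarith only [hγ, hn0]
    have h6 : (2/9) * ζ * (n:ℝ) ≤ (1/4) * (2 * n * ζ) := by
      nlinarith only [mul_nonneg hζ0 hn0]
    have h7 : q ^ 2 < (1/4) * β ^ 2 := by linarith only [hq2', h5, h6, h2nζ]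
    have h8 : (1/2) * β ≤ (1 - ζ) * β :=
      mul_le_mul_of_nonneg_right (by linarith) hβ0.le
    have h9 : ((1/2) * β) ^ 2 ≤ ((1 - ζ) * β) ^ 2 :=
      pow_le_pow_left₀ (by linarith : (0:ℝ) ≤ (1/2) * β) h8 2
    have hqlt : q ^ 2 < ((1 - ζ) * β) ^ 2 := by
      calc q ^ 2 < (1/4) * β ^ 2 := h7
      _ = ((1/2) * β) ^ 2 := by ring
      _ ≤ ((1 - ζ) * β) ^ 2 := h9
    have hpos : 0 < (1 - ζ) * β := mul_pos (by linarith) hβ0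
    have habsq : |q| < (1 - ζ) * β := by
      by_contra hc
      push_neg at hc
      have h2' : ((1 - ζ) * β) ^ 2 ≤ |q| ^ 2 := pow_le_pow_left₀ hpos.le hc 2
      rw [sq_abs] at h2'
      linarith only [h2', hqlt]
    have hsj : β < s j := hβV j
    have hstep1 : (1 - ζ) ^ 2 ≤ C j j ^ 2 := by
      nlinarith only [hCjj, hQζ, hζ0, hζhalf, mul_nonneg hζ0 (by linarith : (0:ℝ) ≤ 1 - 2 * ζ)]
    have hstep2 : -(1 - ζ) < C j j := by
      by_contra hcon
      push_neg at hcon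
      have h1 : q ≤ |q| := le_abs_self q
      have h2 : C j j * s j ≤ -(1 - ζ) * s j := by
        apply mul_le_mul_of_nonneg_right hcon
        linarith
      have h3 : -(1 - ζ) * s j < -(1 - ζ) * β := by
        have := mul_pos (show (0:ℝ) < 1 - ζ by linarith) (show (0:ℝ) < s j - β by linarith)
        nlinarith only [this]
      have ht' : t = C j j * s j + q := by rw [hqdef]; ring
      linarith only [ht0, ht', h1, h2, h3, habsq]
    have hstep3 : 1 - ζ ≤ C j j := by
      by_contra hcon
      push_neg at hcon
      have := sq_lt_sq' hstep2 hcon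
      linarith
    refine ⟨hstep3, ?_⟩
    have ht' : t = C j j * s j + q := by rw [hqdef]; ring
    have h1 : -|q| ≤ q := neg_abs_le q
    have h2 : (1 - ζ) * s j ≤ C j j * s j := by
      apply mul_le_mul_of_nonneg_right hstep3
      linarith
    have h3 : (1 - ζ) * β < (1 - ζ) * s j := by
      have := mul_pos (show (0:ℝ) < 1 - ζ by linarith) (show (0:ℝ) < s j - β by linarith)
      nlinarith only [this]
    show (0:ℝ) < t
    linarith only [ht', h1, h2, h3, habsq]
  refine ⟨hgapSt, ?_, fun j => (key j).2⟩
  intro j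
  have h1 := (key j).1
  have h2 : ∑ k, Vt k j * V k j = C j j := by
    rw [hCdef, Matrix.mul_apply]
    exact Finset.sum_congr rfl fun k _ => by rw [Matrix.transpose_apply]; ring
  linarith

end FPaux

namespace FPaux

lemma strict_anti_of_gaps {n : ℕ} (f : Fin n → ℝ)
    (hmono : ∀ i j : Fin n, i ≤ j → f j ≤ f i)
    (hgap : ∀ i j : Fin n, (j : ℕ) = (i : ℕ) + 1 → 0 < f i - f j) :
    ∀ i j : Fin n, i < j → f j < f i := by
  intro i j hij
  have hij' : (i : ℕ) < (j : ℕ) := hij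
  have h1 : (i : ℕ) + 1 < n := by have := j.isLt; omega
  set i1 : Fin n := ⟨(i : ℕ) + 1, h1⟩ with hi1
  have h2 := hgap i i1 rfl
  have h3 : f j ≤ f i1 := hmono i1 j (by rw [Fin.le_def]; simpa [hi1] using hij')
  linarith

lemma build_svd {n : ℕ} (Lt Vs : Matrix (Fin n) (Fin n) ℝ) (σ : Fin n → ℝ)
    (hVs : Vsᵀ * Vs = 1) (hσ0 : ∀ j, 0 ≤ σ j)
    (hP : (Lt * Vs)ᵀ * (Lt * Vs) = Matrix.diagonal (fun j => σ j ^ 2))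
    (hzuniq : ∀ j j', σ j = 0 → σ j' = 0 → j = j')
    (u : Fin n → ℝ)
    (hu : (∃ j, σ j = 0) → (∑ k, u k ^ 2 = 1) ∧ Ltᵀ *ᵥ u = 0) :
    ∃ Umat : Matrix (Fin n) (Fin n) ℝ,
      Umatᵀ * Umat = 1 ∧ Lt = Umat * Matrix.diagonal σ * Vsᵀ := by
  set B : Matrix (Fin n) (Fin n) ℝ := Lt * Vs with hBdef
  have hBcol : ∀ j j', ∑ k, B k j * B k j' = if j = j' then σ j ^ 2 else 0 := by
    intro j j'
    have := congrFun (congrFun hP j) j'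
    rw [Matrix.mul_apply] at this
    simp only [Matrix.transpose_apply] at this
    rw [this, Matrix.diagonal_apply]
  have hudot : ∀ (hz : ∃ j, σ j = 0) (j' : Fin n), ∑ k, u k * B k j' = 0 := by
    intro hz j'
    have hcol : (fun k => B k j') = Lt *ᵥ (fun k => Vs k j') := FPaux.mul_col Lt Vs j'
    have h1 : ∑ k, u k * B k j' = u ⬝ᵥ (Lt *ᵥ fun k => Vs k j') := by
      rw [← hcol]
      rfl
    rw [h1, Matrix.dotProduct_mulVec, ← Matrix.mulVec_transpose, (hu hz).2]
    simp [dotProduct]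
  set Umat : Matrix (Fin n) (Fin n) ℝ :=
    Matrix.of (fun k j => if σ j = 0 then u k else (σ j)⁻¹ * B k j) with hUdef
  have hUapp : ∀ k j, Umat k j = if σ j = 0 then u k else (σ j)⁻¹ * B k j := fun _ _ => rfl
  refine ⟨Umat, ?_, ?_⟩
  · ext j j'
    rw [Matrix.mul_apply]
    simp only [Matrix.transpose_apply, hUapp]
    by_cases hj : σ j = 0 <;> by_cases hj' : σ j' = 0
    · have hjj' : j = j' := hzuniq j j' hj hj'
      subst hjj'
      simp only [hj, if_true]
      rw [Matrix.one_apply_eq]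
      have := (hu ⟨j, hj⟩).1
      calc ∑ k, u k * u k = ∑ k, u k ^ 2 := by
            exact Finset.sum_congr rfl fun k _ => (pow_two (u k)).symm
      _ = 1 := this
    · have hne : j ≠ j' := fun h => hj' (h ▸ hj)
      simp only [hj, hj', if_true, if_false]
      rw [Matrix.one_apply_ne hne]
      calc ∑ k, u k * ((σ j')⁻¹ * B k j') = (σ j')⁻¹ * ∑ k, u k * B k j' := by
            rw [Finset.mul_sum]; exact Finset.sum_congr rfl fun k _ => by ring
      _ = 0 := by rw [hudot ⟨j, hj⟩ j', mul_zero]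
    · have hne : j ≠ j' := fun h => hj (h ▸ hj')
      simp only [hj, hj', if_true, if_false]
      rw [Matrix.one_apply_ne hne]
      calc ∑ k, ((σ j)⁻¹ * B k j) * u k = (σ j)⁻¹ * ∑ k, u k * B k j := by
            rw [Finset.mul_sum]; exact Finset.sum_congr rfl fun k _ => by ring
      _ = 0 := by rw [hudot ⟨j', hj'⟩ j, mul_zero]
    · simp only [hj, hj', if_false]
      have : ∑ k, (σ j)⁻¹ * B k j * ((σ j')⁻¹ * B k j') =
          (σ j)⁻¹ * (σ j')⁻¹ * ∑ k, B k j * B k j' := by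
        rw [Finset.mul_sum]; exact Finset.sum_congr rfl fun k _ => by ring
      rw [this, hBcol]
      by_cases h : j = j'
      · subst h
        rw [Matrix.one_apply_eq, if_pos rfl]
        field_simp
      · rw [Matrix.one_apply_ne h, if_neg h, mul_zero]
  · have hUS : Umat * Matrix.diagonal σ = B := by
      ext k j
      rw [Matrix.mul_diagonal, hUapp]
      by_cases hj : σ j = 0
      · rw [if_pos hj, hj, mul_zero]
        have hzero : ∑ k, B k j * B k j = 0 := by
          rw [hBcol, if_pos rfl, hj]; ring
        have : B k j * B k j = 0 := by
          have hnn : ∀ i ∈ Finset.univ, 0 ≤ B i j * B i j := fun i _ => mul_self_nonneg _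
          exact (Finset.sum_eq_zero_iff_of_nonneg hnn).mp hzero k (Finset.mem_univ k)
        exact (mul_self_eq_zero.mp this).symm
      · rw [if_neg hj]
        field_simp
    rw [hUS, hBdef, Matrix.mul_assoc, mul_eq_one_comm.mp hVs, Matrix.mul_one]

end FPaux

/-- Friendliness is robust to perturbation: if `σ₁(L) ≤ 1`, `L` is `(α,β)`-friendly
(via the oriented SVD `L = U S Vᵀ`: consecutive singular value gaps exceed `α` and
`Vᵀ𝟙 > β𝟙`), `r = ‖L̃ − L‖_F` with `α > 2r`, `ζ = 2(2+r)r/α²`, and `β > √(2nζ)`, then `L̃`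
is friendly; moreover for any oriented SVD `L̃ = Ũ S̃ Ṽᵀ` the consecutive singular value gaps
of `L̃` are positive and the right singular vectors satisfy `1 − ṽᵢᵀvᵢ ≤ ζ` and `ṽᵢᵀ𝟙 > 0`. -/
theorem friendly_perturbation {n : ℕ} (hn : 0 < n)
    (L Lt : Matrix (Fin n) (Fin n) ℝ)
    (U S V : Matrix (Fin n) (Fin n) ℝ)
    (hSVD : IsSVD L U S V) (hor : ColOriented V)
    (hσ₁ : S ⟨0, hn⟩ ⟨0, hn⟩ ≤ 1)
    (α β r ζ : ℝ)
    (hr : r = frobNorm (Lt - L)) (hα : 2 * r < α)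
    (hgap : ∀ i j : Fin n, (j : ℕ) = (i : ℕ) + 1 → α < S i i - S j j)
    (hβV : ∀ i, β < ∑ k, V k i)
    (hζ : ζ = 2 * (2 + r) * r / α ^ 2)
    (hβ : Real.sqrt (2 * n * ζ) < β) :
    Friendly Lt ∧
      ∀ Ut St Vt : Matrix (Fin n) (Fin n) ℝ,
        IsSVD Lt Ut St Vt → ColOriented Vt →
          (∀ i j : Fin n, (j : ℕ) = (i : ℕ) + 1 → 0 < St i i - St j j) ∧
          (∀ i, 1 - ∑ k, Vt k i * V k i ≤ ζ) ∧
          (∀ i, 0 < ∑ k, Vt k i) := by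
  classical
  have part2 : ∀ Ut St Vt : Matrix (Fin n) (Fin n) ℝ,
      IsSVD Lt Ut St Vt → ColOriented Vt →
        (∀ i j : Fin n, (j : ℕ) = (i : ℕ) + 1 → 0 < St i i - St j j) ∧
        (∀ i, 1 - ∑ k, Vt k i * V k i ≤ ζ) ∧
        (∀ i, 0 < ∑ k, Vt k i) := by
    intro Ut St Vt hsvd hor'
    exact FPaux.core hn L Lt U S V hSVD hσ₁ α β r ζ hr hα hgap hβV hζ hβ St Vt hsvd.2.2.1
      (FPaux.gram_of_svd hsvd) hsvd.2.2.2.1 hsvd.2.2.2.2.1 hsvd.2.2.2.2.2 hor'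
  refine ⟨?_, part2⟩
  -- spectral decomposition of Ltᵀ * Lt
  have hconjT : ∀ (M : Matrix (Fin n) (Fin n) ℝ), Mᴴ = Mᵀ := by
    intro M; ext i j; simp [Matrix.conjTranspose_apply]
  have hH : (Ltᵀ * Lt).IsHermitian := by
    show (Ltᵀ * Lt)ᴴ = Ltᵀ * Lt
    rw [hconjT, Matrix.transpose_mul, Matrix.transpose_transpose]
  set g : Fin n → ℝ := hH.eigenvalues with hgdef
  have hg0 : ∀ i, 0 ≤ g i := by
    have hpsd : (Ltᵀ * Lt).PosSemidef := by
      have := Matrix.posSemidef_conjTranspose_mul_self Lt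
      rwa [hconjT] at this
    exact fun i => hpsd.eigenvalues_nonneg i
  set M : Matrix (Fin n) (Fin n) ℝ := (hH.eigenvectorUnitary : Matrix (Fin n) (Fin n) ℝ)
    with hMdef
  have hMtM : Mᵀ * M = 1 := by
    have := Matrix.mem_unitaryGroup_iff'.mp hH.eigenvectorUnitary.2
    rwa [Matrix.star_eq_conjTranspose, hconjT] at this
  have hspec : Ltᵀ * Lt = M * Matrix.diagonal g * Mᵀ := by
    have h0 := hH.spectral_theorem
    rw [Unitary.conjStarAlgAut_apply, Matrix.star_eq_conjTranspose, hconjT] at h0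
    have h1 : Matrix.diagonal (RCLike.ofReal ∘ hH.eigenvalues : Fin n → ℝ)
        = Matrix.diagonal g := by simp [RCLike.ofReal_real_eq_id, hgdef]
    rw [h1] at h0
    exact h0
  set e : Equiv.Perm (Fin n) := Tuple.sort (fun i => -g i) with hedef
  have hganti : ∀ i j : Fin n, i ≤ j → g (e j) ≤ g (e i) := by
    intro i j hij
    have := Tuple.monotone_sort (fun i => -g i) hij
    simpa [hedef] using this
  set Vs : Matrix (Fin n) (Fin n) ℝ := M.submatrix id ⇑e with hVsdef
  have hVsO : Vsᵀ * Vs = 1 := by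
    ext j j'
    rw [Matrix.mul_apply]
    simp only [Matrix.transpose_apply, hVsdef, Matrix.submatrix_apply, id_eq]
    have hMc : ∑ k, M k (e j) * M k (e j') = (1 : Matrix (Fin n) (Fin n) ℝ) (e j) (e j') := by
      rw [← hMtM, Matrix.mul_apply]; rfl
    rw [hMc]
    by_cases h : j = j'
    · subst h; rw [Matrix.one_apply_eq, Matrix.one_apply_eq]
    · rw [Matrix.one_apply_ne (fun hc => h (e.injective hc)), Matrix.one_apply_ne h]
  have hdsub : Matrix.diagonal (fun j => g (e j)) = (Matrix.diagonal g).submatrix ⇑e ⇑e := by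
    ext i j
    rw [Matrix.submatrix_apply, Matrix.diagonal_apply, Matrix.diagonal_apply]
    by_cases h : i = j
    · subst h; simp
    · rw [if_neg h, if_neg (fun hc => h (e.injective hc))]
  have hVsT : Vsᵀ = Mᵀ.submatrix ⇑e id := by
    rw [hVsdef, Matrix.transpose_submatrix]
  have hfact0 : Ltᵀ * Lt = Vs * Matrix.diagonal (fun j => g (e j)) * Vsᵀ := by
    rw [hdsub, hVsT, hVsdef]
    rw [Matrix.submatrix_mul_equiv M (Matrix.diagonal g) id e ⇑e]
    rw [Matrix.submatrix_mul_equiv (M * Matrix.diagonal g) Mᵀ id e id]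
    rw [Matrix.submatrix_id_id]
    exact hspec
  set σ : Fin n → ℝ := fun j => Real.sqrt (g (e j)) with hσdef
  have hσ0 : ∀ j, 0 ≤ σ j := fun j => Real.sqrt_nonneg _
  have hσanti : ∀ i j : Fin n, i ≤ j → σ j ≤ σ i := fun i j hij =>
    Real.sqrt_le_sqrt (hganti i j hij)
  have hσsq : ∀ j, σ j ^ 2 = g (e j) := fun j => Real.sq_sqrt (hg0 (e j))
  set Sm : Matrix (Fin n) (Fin n) ℝ := Matrix.diagonal σ with hSmdef
  have hSmSm : Sm * Sm = Matrix.diagonal (fun j => g (e j)) := by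
    rw [hSmdef, Matrix.diagonal_mul_diagonal]
    have h1 : (fun i => σ i * σ i) = fun j => g (e j) :=
      funext fun j => by rw [← hσsq j]; ring
    rw [h1]
  -- orientation
  set d : Fin n → ℝ := fun j => if (∑ k, Vs k j) < 0 then (-1:ℝ) else 1 with hddef
  have hd2 : ∀ j, d j * d j = 1 := by
    intro j; rw [hddef]; dsimp only; split_ifs <;> norm_num
  set D : Matrix (Fin n) (Fin n) ℝ := Matrix.diagonal d with hDdef
  set V₂ : Matrix (Fin n) (Fin n) ℝ := Vs * D with hV2def
  have hDD : D * D = 1 := by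
    rw [hDdef, Matrix.diagonal_mul_diagonal]
    have h1 : (fun i => d i * d i) = fun _ => (1:ℝ) := funext fun i => hd2 i
    rw [h1, Matrix.diagonal_one]
  have hV2O : V₂ᵀ * V₂ = 1 := by
    rw [hV2def, Matrix.transpose_mul, hDdef, Matrix.diagonal_transpose, ← hDdef]
    calc D * Vsᵀ * (Vs * D) = D * (Vsᵀ * Vs) * D := by simp only [Matrix.mul_assoc]
    _ = D * D := by rw [hVsO, Matrix.mul_one]
    _ = 1 := hDD
  have hmid : D * Matrix.diagonal (fun j => g (e j)) * D
      = Matrix.diagonal (fun j => g (e j)) := by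
    rw [hDdef, Matrix.diagonal_mul_diagonal, Matrix.diagonal_mul_diagonal]
    have h1 : (fun i => d i * g (e i) * d i) = fun j => g (e j) := funext fun j => by
      calc d j * g (e j) * d j = g (e j) * (d j * d j) := by ring
      _ = g (e j) := by rw [hd2 j, mul_one]
    rw [h1]
  have hfact2 : Ltᵀ * Lt = V₂ * (Sm * Sm) * V₂ᵀ := by
    rw [hSmSm, hV2def, Matrix.transpose_mul, hDdef, Matrix.diagonal_transpose, ← hDdef]
    calc Ltᵀ * Lt = Vs * Matrix.diagonal (fun j => g (e j)) * Vsᵀ := hfact0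
    _ = Vs * (D * Matrix.diagonal (fun j => g (e j)) * D) * Vsᵀ := by rw [hmid]
    _ = Vs * D * Matrix.diagonal (fun j => g (e j)) * (D * Vsᵀ) := by
        simp only [Matrix.mul_assoc]
  have hor2 : ColOriented V₂ := by
    intro j
    have hcol : ∑ k, V₂ k j = (∑ k, Vs k j) * d j := by
      rw [hV2def]
      calc ∑ k, (Vs * D) k j = ∑ k, Vs k j * d j :=
            Finset.sum_congr rfl fun k _ => by rw [hDdef, Matrix.mul_diagonal]
      _ = (∑ k, Vs k j) * d j := (Finset.sum_mul _ _ _).symm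
    rw [hcol, hddef]
    dsimp only
    split_ifs with h
    · nlinarith only [h]
    · push_neg at h; nlinarith only [h]
  -- apply the core estimate to this (partial) decomposition
  have hSmd : ∀ i j : Fin n, i ≠ j → Sm i j = 0 := fun i j hij => Matrix.diagonal_apply_ne _ hij
  have hSmEq : ∀ i, Sm i i = σ i := fun i => Matrix.diagonal_apply_eq _ i
  have hSm0 : ∀ i, 0 ≤ Sm i i := fun i => by rw [hSmEq]; exact hσ0 i
  have hSma : ∀ i j : Fin n, i ≤ j → Sm j j ≤ Sm i i := fun i j hij => by
    rw [hSmEq, hSmEq]; exact hσanti i j hij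
  obtain ⟨hgaps, hvec, hpos⟩ := FPaux.core hn L Lt U S V hSVD hσ₁ α β r ζ hr hα hgap hβV hζ hβ
    Sm V₂ hV2O hfact2 hSmd hSm0 hSma hor2
  have hstrict := FPaux.strict_anti_of_gaps (fun j => Sm j j) hSma hgaps
  have hσne : ∀ i j : Fin n, i ≠ j → Sm i i ≠ Sm j j := by
    intro i j hij
    rcases lt_or_gt_of_ne hij with h | h
    · simpa using ne_of_gt (hstrict i j h)
    · simpa using ne_of_lt (hstrict j i h)
  have hzuniq : ∀ j j', σ j = 0 → σ j' = 0 → j = j' := by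
    intro j j' h1 h2
    by_contra hne
    have h3 : Sm j j ≠ Sm j' j' := hσne j j' hne
    rw [hSmEq, hSmEq, h1, h2] at h3
    exact h3 rfl
  have hP : (Lt * V₂)ᵀ * (Lt * V₂) = Matrix.diagonal (fun j => σ j ^ 2) := by
    have h1 : (Lt * V₂)ᵀ * (Lt * V₂) = V₂ᵀ * (Ltᵀ * Lt) * V₂ := by
      rw [Matrix.transpose_mul]; simp only [Matrix.mul_assoc]
    rw [h1, hfact2]
    calc V₂ᵀ * (V₂ * (Sm * Sm) * V₂ᵀ) * V₂ = V₂ᵀ * V₂ * (Sm * Sm) * (V₂ᵀ * V₂) := by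
          simp only [Matrix.mul_assoc]
    _ = Sm * Sm := by rw [hV2O, Matrix.one_mul, Matrix.mul_one]
    _ = Matrix.diagonal (fun j => σ j ^ 2) := by
        rw [hSmSm]
        have h2 : (fun j => σ j ^ 2) = fun j => g (e j) := funext fun j => hσsq j
        rw [h2]
  have hexu : ∃ u : Fin n → ℝ, (∃ j, σ j = 0) → (∑ k, u k ^ 2 = 1) ∧ Ltᵀ *ᵥ u = 0 := by
    by_cases hz : ∃ j, σ j = 0
    · obtain ⟨j0, hj0⟩ := hz
      have hdet : Lt.det = 0 := by
        have h1 : (Ltᵀ * Lt).det = Lt.det * Lt.det := by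
          rw [Matrix.det_mul, Matrix.det_transpose]
        have h2 : (Ltᵀ * Lt).det = 0 := by
          rw [hfact2, Matrix.det_mul, Matrix.det_mul]
          have h3 : (Sm * Sm).det = 0 := by
            rw [hSmSm, Matrix.det_diagonal]
            refine Finset.prod_eq_zero (Finset.mem_univ j0) ?_
            rw [← hσsq j0, hj0]; ring
          rw [h3, mul_zero, zero_mul]
        rw [h2] at h1
        exact mul_self_eq_zero.mp h1.symm
      have hdetT : Ltᵀ.det = 0 := by rw [Matrix.det_transpose]; exact hdet
      obtain ⟨u0, hu0ne, hu0⟩ := Matrix.exists_mulVec_eq_zero_iff.mpr hdetT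
      set c : ℝ := Real.sqrt (∑ k, u0 k ^ 2) with hcdef
      have hsum0 : 0 < ∑ k, u0 k ^ 2 := by
        obtain ⟨k, hk⟩ := Function.ne_iff.mp hu0ne
        exact Finset.sum_pos' (fun i _ => sq_nonneg _)
          ⟨k, Finset.mem_univ k, lt_of_le_of_ne (sq_nonneg _) (Ne.symm (pow_ne_zero 2 hk))⟩
      have hc : 0 < c := Real.sqrt_pos.mpr hsum0
      refine ⟨fun k => u0 k / c, fun _ => ⟨?_, ?_⟩⟩
      · have : ∑ k, (u0 k / c) ^ 2 = (∑ k, u0 k ^ 2) / c ^ 2 := by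
          rw [Finset.sum_div]
          exact Finset.sum_congr rfl fun k _ => by rw [div_pow]
        rw [this, hcdef, Real.sq_sqrt hsum0.le, div_self (ne_of_gt hsum0)]
      · have heq : (fun k => u0 k / c) = c⁻¹ • u0 := by
          funext k
          simp [div_eq_inv_mul]
        rw [heq, Matrix.mulVec_smul, hu0, smul_zero]
    · exact ⟨0, fun h => absurd h hz⟩
  obtain ⟨u, hu⟩ := hexu
  obtain ⟨Umat, hUO, hULt⟩ := FPaux.build_svd Lt V₂ σ hV2O hσ0 hP hzuniq u hu
  exact ⟨Umat, Sm, V₂, ⟨hULt, hUO, hV2O, hSmd, hSm0, hSma⟩, hor2, hσne,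
    fun i => ne_of_gt (hpos i)⟩
end
end

section
/- Let V, Ṽ be real n×n matrices with orthonormal columns vᵢ, ṽᵢ such that 1 − ṽᵢᵀvᵢ ≤ ζ for every i, where nζ < 1/2, let Π* be a permutation matrix, and set V̂ = Π*ᵀṼ. Then ‖Π*ᵀV − V̂‖_F ≤ √(2nζ), and Π* is the unique permutation matrix Π satisfying ‖ΠᵀV − V̂‖_F ≤ √(2nζ). -/
open Matrix BigOperators

noncomputable section

attribute [local instance] Matrix.frobeniusNormedAddCommGroup

lemma frobNorm_eq_norm {n : ℕ} (A : Matrix (Fin n) (Fin n) ℝ) : frobNorm A = ‖A‖ := by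
  rw [frobNorm, Matrix.frobenius_norm_def, Real.sqrt_eq_rpow]
  congr 1
  simp_rw [Real.rpow_two, Real.norm_eq_abs, sq_abs]

lemma sumSq_eq_trace {n : ℕ} (M : Matrix (Fin n) (Fin n) ℝ) :
    ∑ i, ∑ j, M i j ^ 2 = Matrix.trace (M * Mᵀ) := by
  simp [Matrix.trace, Matrix.mul_apply, sq, Matrix.diag]

lemma perm_orth {n : ℕ} {P : Matrix (Fin n) (Fin n) ℝ} (hP : IsPermMatrix P) :
    P * Pᵀ = 1 := by
  obtain ⟨σ, hσ⟩ := hP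
  ext i j
  simp [Matrix.mul_apply, hσ, Matrix.one_apply, ite_and, σ.injective.eq_iff]

lemma sumSq_permMul {n : ℕ} {P : Matrix (Fin n) (Fin n) ℝ} (hP : IsPermMatrix P)
    (A : Matrix (Fin n) (Fin n) ℝ) :
    ∑ i, ∑ j, (Pᵀ * A) i j ^ 2 = ∑ i, ∑ j, A i j ^ 2 := by
  rw [sumSq_eq_trace, sumSq_eq_trace, Matrix.transpose_mul, Matrix.transpose_transpose,
    Matrix.mul_assoc, Matrix.trace_mul_comm, Matrix.mul_assoc, Matrix.mul_assoc,
    perm_orth hP, Matrix.mul_one]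

lemma sumSq_mul_right {n : ℕ} (B V : Matrix (Fin n) (Fin n) ℝ) (h : V * Vᵀ = 1) :
    ∑ i, ∑ j, (B * V) i j ^ 2 = ∑ i, ∑ j, B i j ^ 2 := by
  rw [sumSq_eq_trace, sumSq_eq_trace, Matrix.transpose_mul, ← Matrix.mul_assoc,
    Matrix.mul_assoc B V Vᵀ, h, Matrix.mul_one]

lemma sumSq_transpose {n : ℕ} (M : Matrix (Fin n) (Fin n) ℝ) :
    ∑ i, ∑ j, Mᵀ i j ^ 2 = ∑ i, ∑ j, M i j ^ 2 := by
  rw [Finset.sum_comm]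
  simp [Matrix.transpose_apply]


/-- Let `V, Ṽ` have orthonormal columns with `1 − ṽᵢᵀvᵢ ≤ ζ` for all `i`, `nζ < 1/2`,
`Π*` a permutation matrix, and `V̂ = Π*ᵀṼ`.  Then `‖Π*ᵀV − V̂‖_F ≤ √(2nζ)`, and `Π*` is
the unique permutation matrix `Π` with `‖ΠᵀV − V̂‖_F ≤ √(2nζ)`. -/
theorem unique_perm_recovery {n : ℕ}
    (V Vt : Matrix (Fin n) (Fin n) ℝ) (ζ : ℝ)
    (hV : Vᵀ * V = 1) (hVt : Vtᵀ * Vt = 1)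
    (hclose : ∀ i, 1 - ∑ k, Vt k i * V k i ≤ ζ)
    (hnζ : (n : ℝ) * ζ < 1 / 2)
    (Pstar : Matrix (Fin n) (Fin n) ℝ) (hP : IsPermMatrix Pstar) :
    frobNorm (Pstarᵀ * V - Pstarᵀ * Vt) ≤ Real.sqrt (2 * n * ζ) ∧
      ∀ Q : Matrix (Fin n) (Fin n) ℝ, IsPermMatrix Q →
        frobNorm (Qᵀ * V - Pstarᵀ * Vt) ≤ Real.sqrt (2 * n * ζ) → Q = Pstar := by
  obtain ⟨σ, hσ⟩ := hP
  have col1 : ∀ j, ∑ i, V i j ^ 2 = 1 := fun j => by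
    have := congrFun (congrFun hV j) j
    simpa [Matrix.mul_apply, Matrix.one_apply, sq] using this
  have col2 : ∀ j, ∑ i, Vt i j ^ 2 = 1 := fun j => by
    have := congrFun (congrFun hVt j) j
    simpa [Matrix.mul_apply, Matrix.one_apply, sq] using this
  have hle : ∑ i, ∑ j, (V - Vt) i j ^ 2 ≤ 2 * n * ζ := by
    rw [Finset.sum_comm]
    have e : ∀ j, ∑ i, (V - Vt) i j ^ 2 = 2 - 2 * ∑ k, Vt k j * V k j := by
      intro j
      have e1 : ∀ i, (V - Vt) i j ^ 2
          = V i j ^ 2 - 2 * (Vt i j * V i j) + Vt i j ^ 2 := fun i => by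
        simp [Matrix.sub_apply]; ring
      rw [Finset.sum_congr rfl fun i _ => e1 i, Finset.sum_add_distrib,
        Finset.sum_sub_distrib, col1, col2, ← Finset.mul_sum]
      ring
    calc ∑ j, ∑ i, (V - Vt) i j ^ 2 = ∑ j, (2 - 2 * ∑ k, Vt k j * V k j) :=
          Finset.sum_congr rfl fun j _ => e j
      _ ≤ ∑ _j : Fin n, 2 * ζ := Finset.sum_le_sum fun j _ => by
          have := hclose j; linarith
      _ = 2 * n * ζ := by simp [Finset.sum_const]; ring
  have h1 : frobNorm (Pstarᵀ * V - Pstarᵀ * Vt) ≤ Real.sqrt (2 * n * ζ) := by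
    rw [frobNorm, ← Matrix.mul_sub]
    exact Real.sqrt_le_sqrt (by rw [sumSq_permMul ⟨σ, hσ⟩]; exact hle)
  refine ⟨h1, fun Q hQ hQle => ?_⟩
  obtain ⟨τ, hτ⟩ := hQ
  by_contra hne
  -- the permutations differ in at least two places
  have hπ : (σ⁻¹ * τ : Equiv.Perm (Fin n)) ≠ 1 := by
    intro h
    apply hne
    ext i j
    have : σ⁻¹ (τ i) = i := Equiv.Perm.ext_iff.mp h i
    have hti : τ i = σ i := by
      have h2 := congrArg σ this
      simpa using h2
    rw [hσ, hτ, hti]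
  have hsupp : (σ⁻¹ * τ : Equiv.Perm (Fin n)).support
      = Finset.univ.filter (fun i => ¬ τ i = σ i) := by
    ext i
    simp [Equiv.Perm.mem_support, Equiv.Perm.mul_apply,
      Equiv.Perm.eq_inv_iff_eq, eq_comm, Equiv.eq_symm_apply]
  have hcard : 2 ≤ (Finset.univ.filter (fun i => ¬ τ i = σ i)).card := by
    have := Equiv.Perm.one_lt_card_support_of_ne_one hπ
    rw [hsupp] at this
    omega
  -- sum of squares of Q - Pstar is at least 4
  have hQP : ∑ i, ∑ j, (Q - Pstar) i j ^ 2
      = ∑ i : Fin n, (if τ i = σ i then (0:ℝ) else 2) := by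
    refine Finset.sum_congr rfl fun i _ => ?_
    by_cases h : τ i = σ i
    · simp [Matrix.sub_apply, hσ, hτ, h]
    · have e1 : ∀ j : Fin n,
          ((if τ i = j then (1:ℝ) else 0) - (if σ i = j then 1 else 0)) ^ 2
          = (if τ i = j then (1:ℝ) else 0) + (if σ i = j then 1 else 0) := fun j => by
        by_cases h1 : τ i = j <;> by_cases h2 : σ i = j <;>
          first
          | (exfalso; exact h (h1.trans h2.symm))
          | simp [h1, h2]
      simp only [Matrix.sub_apply, hσ, hτ, e1, Finset.sum_add_distrib,
        Finset.sum_ite_eq, Finset.mem_univ, if_true, h]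
      norm_num
  have h4 : (4:ℝ) ≤ ∑ i, ∑ j, (Q - Pstar) i j ^ 2 := by
    rw [hQP]
    have : ∑ i : Fin n, (if τ i = σ i then (0:ℝ) else 2)
        = ∑ i ∈ Finset.univ.filter (fun i => ¬ τ i = σ i), (2:ℝ) := by
      rw [Finset.sum_filter]
      refine Finset.sum_congr rfl fun i _ => ?_
      by_cases h : τ i = σ i <;> simp [h]
    rw [this, Finset.sum_const, nsmul_eq_mul]
    have : (2:ℝ) ≤ (Finset.univ.filter (fun i => ¬ τ i = σ i)).card := by
      exact_mod_cast hcard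
    linarith
  -- but the norm bound forces it to be < 4
  have hVV : V * Vᵀ = 1 := mul_eq_one_comm.mp hV
  have hsum_eq : ∑ i, ∑ j, (Qᵀ * V - Pstarᵀ * V) i j ^ 2
      = ∑ i, ∑ j, (Q - Pstar) i j ^ 2 := by
    rw [← Matrix.sub_mul, ← Matrix.transpose_sub, sumSq_mul_right _ _ hVV, sumSq_transpose]
  have hs1 : Real.sqrt (2 * n * ζ) < 1 := by
    rcases le_or_gt (2 * (n:ℝ) * ζ) 0 with h | h
    · have : Real.sqrt (2 * ↑n * ζ) = 0 := Real.sqrt_eq_zero'.mpr (by linarith)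
      rw [this]; norm_num
    · have h2 : 2 * (n:ℝ) * ζ < 1 := by linarith
      calc Real.sqrt (2 * ↑n * ζ) < Real.sqrt 1 := Real.sqrt_lt_sqrt h.le h2
        _ = 1 := Real.sqrt_one
  have htri : ‖Qᵀ * V - Pstarᵀ * V‖ < 2 := by
    have e : Qᵀ * V - Pstarᵀ * V
        = (Qᵀ * V - Pstarᵀ * Vt) + (Pstarᵀ * Vt - Pstarᵀ * V) := by abel
    have hb : ‖Pstarᵀ * Vt - Pstarᵀ * V‖ ≤ Real.sqrt (2 * n * ζ) := by
      rw [← norm_neg, neg_sub, ← frobNorm_eq_norm]; exact h1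
    have ha : ‖Qᵀ * V - Pstarᵀ * Vt‖ ≤ Real.sqrt (2 * n * ζ) := by
      rw [← frobNorm_eq_norm]; exact hQle
    calc ‖Qᵀ * V - Pstarᵀ * V‖ ≤ ‖Qᵀ * V - Pstarᵀ * Vt‖ + ‖Pstarᵀ * Vt - Pstarᵀ * V‖ := by
          rw [e]; exact norm_add_le _ _
      _ ≤ Real.sqrt (2 * n * ζ) + Real.sqrt (2 * n * ζ) := add_le_add ha hb
      _ < 2 := by linarith
  have hnn : 0 ≤ ∑ i, ∑ j, (Qᵀ * V - Pstarᵀ * V) i j ^ 2 :=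
    Finset.sum_nonneg fun i _ => Finset.sum_nonneg fun j _ => sq_nonneg _
  have hlt4 : ∑ i, ∑ j, (Qᵀ * V - Pstarᵀ * V) i j ^ 2 < 4 := by
    have := frobNorm_eq_norm (Qᵀ * V - Pstarᵀ * V)
    rw [frobNorm] at this
    have h0 : 0 ≤ ‖Qᵀ * V - Pstarᵀ * V‖ := norm_nonneg _
    nlinarith [Real.sq_sqrt hnn, this]
  rw [hsum_eq] at hlt4
  linarith
end
end

section
/- Consider the MDP with states S = {x₀, y₀, x₁, y₁, x₂, x₃, y₂, y₃}, actions A = {r, b}, initial distribution p₀(x₀) = p₀(y₀) = 1/2, and dynamics: from x₀ action r leads to x₁ and action b leads to y₁ (deterministically); from y₀ action r leads to y₁ and action b leads to x₁; from x₁, under either action, the next state is x₂ with probability α and x₃ with probability 1−α; from y₁, under either action, the next state is y₂ with probability β and y₃ with probability 1−β; the states x₂, x₃, y₂, y₃ are absorbing under both actions, where α, β ∈ [0,1]. Let φ be the behavior policy with φ(r|x₀) = 1, φ(b|y₀) = 1, and φ(r|s) = 1 for all other states s. Then for any discount γ ∈ [0,1) and any policy φ̂ on S, the occupancy measures satisfy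 Σ_{s,a} |ρ_φ(s,a) − ρ_{φ̂}(s,a)| ≥ γ − γ·(φ̂(r|x₀) + φ̂(b|y₀))/2. -/
open Matrix BigOperators

noncomputable section

/-- The states of the bandit-like MDP. -/
inductive St : Type
  | x0 | y0 | x1 | y1 | x2 | x3 | y2 | y3
  deriving DecidableEq

instance : Fintype St where
  elems := {.x0, .y0, .x1, .y1, .x2, .x3, .y2, .y3}
  complete := by intro x; cases x <;> simp

/-- The actions of the bandit-like MDP: red and blue. -/
inductive Act : Type
  | r | b
  deriving DecidableEq

instance : Fintype Act where
  elems := {.r, .b}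
  complete := by intro x; cases x <;> simp

/-- The dynamics of the bandit-like MDP. -/
def Pdyn (α β : ℝ) : St → Act → St → ℝ
  | .x0, .r, .x1 => 1
  | .x0, .b, .y1 => 1
  | .y0, .r, .y1 => 1
  | .y0, .b, .x1 => 1
  | .x1, _, .x2 => α
  | .x1, _, .x3 => 1 - α
  | .y1, _, .y2 => β
  | .y1, _, .y3 => 1 - β
  | .x2, _, .x2 => 1
  | .x3, _, .x3 => 1
  | .y2, _, .y2 => 1
  | .y3, _, .y3 => 1
  | _, _, _ => 0

/-- The initial distribution: `p₀(x₀) = p₀(y₀) = 1/2`. -/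
def p0 : St → ℝ
  | .x0 => 1 / 2
  | .y0 => 1 / 2
  | _ => 0

/-- The behavior policy: `φ(r|x₀) = 1`, `φ(b|y₀) = 1`, and `φ(r|s) = 1` elsewhere. -/
def φbeh : St → Act → ℝ
  | .y0, .b => 1
  | .y0, .r => 0
  | _, .r => 1
  | _, .b => 0

lemma sum_St (f : St → ℝ) : ∑ s, f s = f .x0 + f .y0 + f .x1 + f .y1 + f .x2 + f .x3 + f .y2 + f .y3 := by
  show Finset.sum _ f = _
  rw [show (Finset.univ : Finset St) = {St.x0, St.y0, St.x1, St.y1, St.x2, St.x3, St.y2, St.y3} from rfl]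
  simp [Finset.sum_insert, Finset.mem_insert]; ring

lemma sum_Act (f : Act → ℝ) : ∑ a, f a = f .r + f .b := by
  show Finset.sum _ f = _
  rw [show (Finset.univ : Finset Act) = {Act.r, Act.b} from rfl]; simp

def qOf (φ : St → Act → ℝ) : ℝ := (φ .x0 .r + φ .y0 .b) / 2

def V1 (q : ℝ) : St → ℝ
  | .x1 => q | .y1 => 1 - q | _ => 0

def Wv (α β q : ℝ) : St → ℝ
  | .x2 => q * α | .x3 => q * (1 - α) | .y2 => (1 - q) * β | .y3 => (1 - q) * (1 - β) | _ => 0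

section steps
variable (α β : ℝ) (φ : St → Act → ℝ) (hsum : ∀ s, ∑ a, φ s a = 1)
include hsum

lemma step0 : (inducedChain (Pdyn α β) φ)ᵀ.mulVec p0 = V1 (qOf φ) := by
  funext s
  have h0 := hsum .x0
  have h1 := hsum .y0
  rw [sum_Act] at h0 h1
  cases s <;>
    simp [Matrix.mulVec, dotProduct, inducedChain, sum_St, sum_Act, Pdyn, p0, V1, qOf] <;>
    ring_nf <;> linarith

lemma step1 (q : ℝ) : (inducedChain (Pdyn α β) φ)ᵀ.mulVec (V1 q) = Wv α β q := by
  funext s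
  have h0 := hsum .x1
  have h1 := hsum .y1
  rw [sum_Act] at h0 h1
  cases s <;>
    simp [Matrix.mulVec, dotProduct, inducedChain, sum_St, sum_Act, Pdyn, V1, Wv] <;>
    first
      | linear_combination (α*q)*h0
      | linear_combination ((1-α)*q)*h0
      | linear_combination (β*(1-q))*h1
      | linear_combination ((1-β)*(1-q))*h1

lemma stepW (q : ℝ) : (inducedChain (Pdyn α β) φ)ᵀ.mulVec (Wv α β q) = Wv α β q := by
  funext s
  have h2 := hsum .x2
  have h3 := hsum .x3
  have h4 := hsum .y2
  have h5 := hsum .y3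
  rw [sum_Act] at h2 h3 h4 h5
  cases s <;>
    simp [Matrix.mulVec, dotProduct, inducedChain, sum_St, sum_Act, Pdyn, Wv] <;>
    first
      | linear_combination (q*α)*h2
      | linear_combination (q*(1-α))*h3
      | linear_combination ((1-q)*β)*h4
      | linear_combination ((1-q)*(1-β))*h5
end steps

section pow
variable (α β : ℝ) (φ : St → Act → ℝ) (hsum : ∀ s, ∑ a, φ s a = 1)
include hsum

lemma powW (q : ℝ) (i : ℕ) :
    ((inducedChain (Pdyn α β) φ)ᵀ ^ i).mulVec (Wv α β q) = Wv α β q := by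
  induction i with
  | zero => simp [Matrix.one_mulVec]
  | succ n ih =>
      rw [pow_succ', ← Matrix.mulVec_mulVec, ih, stepW α β φ hsum]

lemma vec_pow (i : ℕ) :
    ((inducedChain (Pdyn α β) φ)ᵀ ^ (i + 2)).mulVec p0 = Wv α β (qOf φ) := by
  have : (i : ℕ) + 2 = (i + 1) + 1 := rfl
  rw [this, pow_succ, ← Matrix.mulVec_mulVec, step0 α β φ hsum, pow_succ,
    ← Matrix.mulVec_mulVec, step1 α β φ hsum, powW α β φ hsum]

lemma stateOcc_eq (γ : ℝ) (hγ0 : 0 ≤ γ) (hγ1 : γ < 1) (s : St) :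
    stateOcc (Pdyn α β) φ γ p0 s =
      (1 - γ) * (p0 s + γ * V1 (qOf φ) s) + γ ^ 2 * Wv α β (qOf φ) s := by
  set f : ℕ → ℝ := fun i => γ ^ i * (((inducedChain (Pdyn α β) φ)ᵀ ^ i).mulVec p0) s with hf
  have hgeo : Summable fun n : ℕ => γ ^ n := summable_geometric_of_lt_one hγ0 hγ1
  have hshift : (fun n => f (n + 2)) = fun n => (Wv α β (qOf φ) s * γ ^ 2) * γ ^ n := by
    funext n
    simp only [hf, vec_pow α β φ hsum]
    ring
  have hsf : Summable f := (summable_nat_add_iff 2).mp (by rw [hshift]; exact hgeo.mul_left _)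
  have hsf1 : Summable fun n => f (n + 1) := (summable_nat_add_iff 1).mpr hsf
  have h0 : f 0 = p0 s := by simp [hf, Matrix.one_mulVec]
  have h1 : f 1 = γ * V1 (qOf φ) s := by
    simp [hf, pow_one, step0 α β φ hsum]
  have htail : ∑' n, f (n + 2) = Wv α β (qOf φ) s * γ ^ 2 * (1 - γ)⁻¹ := by
    rw [hshift, tsum_mul_left, tsum_geometric_of_lt_one hγ0 hγ1]
  have hne : (1 - γ) ≠ 0 := by linarith
  have : ∑' n, f n = f 0 + (f 1 + ∑' n, f (n + 2)) := by
    rw [Summable.tsum_eq_zero_add hsf, Summable.tsum_eq_zero_add hsf1]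
  rw [stateOcc]
  rw [← hf, this, h0, h1, htail]
  field_simp
  ring
end pow

/-- Lower bound for the online counterexample: in the bandit-like MDP, for any policy `φ̂`,
the total-variation distance between occupancy measures satisfies
`Σ_{s,a} |ρ_φ(s,a) − ρ_{φ̂}(s,a)| ≥ γ − γ(φ̂(r|x₀) + φ̂(b|y₀))/2`. -/
theorem online_counterexample_lower_bound
    (α β : ℝ) (hα0 : 0 ≤ α) (hα1 : α ≤ 1) (hβ0 : 0 ≤ β) (hβ1 : β ≤ 1)
    (γ : ℝ) (hγ0 : 0 ≤ γ) (hγ1 : γ < 1)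
    (φh : St → Act → ℝ)
    (hφhnn : ∀ s a, 0 ≤ φh s a) (hφhsum : ∀ s, ∑ a, φh s a = 1) :
    γ - γ * (φh .x0 .r + φh .y0 .b) / 2 ≤
      ∑ s, ∑ a,
        |occMeasure (Pdyn α β) φbeh γ p0 s a - occMeasure (Pdyn α β) φh γ p0 s a| := by
  have hb : ∀ s, ∑ a, φbeh s a = 1 := by
    intro s; rw [sum_Act]; cases s <;> norm_num [φbeh]
  have qb : qOf φbeh = 1 := by norm_num [qOf, φbeh]
  set q : ℝ := qOf φh with hqdef
  have hq2 : φh .x0 .r + φh .y0 .b = 2 * q := by rw [hqdef, qOf]; ring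
  have hx0 : φh .x0 .r + φh .x0 .b = 1 := by have := hφhsum .x0; rwa [sum_Act] at this
  have hy0 : φh .y0 .r + φh .y0 .b = 1 := by have := hφhsum .y0; rwa [sum_Act] at this
  have hq1 : q ≤ 1 := by
    have n1 := hφhnn .x0 .b
    have n2 := hφhnn .y0 .r
    rw [hqdef, qOf]; linarith
  set μb := stateOcc (Pdyn α β) φbeh γ p0 with hμb
  set μh := stateOcc (Pdyn α β) φh γ p0 with hμh
  set T : St → ℝ := fun s => ∑ a,
    |occMeasure (Pdyn α β) φbeh γ p0 s a - occMeasure (Pdyn α β) φh γ p0 s a| with hT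
  have key : ∀ s, |μb s - μh s| ≤ T s := by
    intro s
    have h1 : φbeh s .r + φbeh s .b = 1 := by have := hb s; rwa [sum_Act] at this
    have h2 : φh s .r + φh s .b = 1 := by have := hφhsum s; rwa [sum_Act] at this
    have heq : μb s - μh s = ∑ a,
        (occMeasure (Pdyn α β) φbeh γ p0 s a - occMeasure (Pdyn α β) φh γ p0 s a) := by
      rw [sum_Act]
      simp only [occMeasure, hμb, hμh]
      linear_combination (stateOcc (Pdyn α β) φh γ p0 s) * h2
        - (stateOcc (Pdyn α β) φbeh γ p0 s) * h1
    calc |μb s - μh s| = |∑ a, (occMeasure (Pdyn α β) φbeh γ p0 s a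
          - occMeasure (Pdyn α β) φh γ p0 s a)| := by rw [heq]
      _ ≤ T s := Finset.abs_sum_le_sum_abs _ _
  have Eb : ∀ s, μb s = (1-γ) * (p0 s + γ * V1 1 s) + γ^2 * Wv α β 1 s := by
    intro s; rw [hμb, stateOcc_eq α β φbeh hb γ hγ0 hγ1 s, qb]
  have Eh : ∀ s, μh s = (1-γ) * (p0 s + γ * V1 q s) + γ^2 * Wv α β q s := by
    intro s; rw [hμh, stateOcc_eq α β φh hφhsum γ hγ0 hγ1 s, hqdef]
  have bx1 : (1-γ)*γ*(1-q) ≤ T .x1 := by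
    have := (le_abs_self (μb .x1 - μh .x1)).trans (key .x1)
    rw [Eb, Eh] at this; simp only [V1, Wv, p0] at this; linarith [this]
  have by1 : (1-γ)*γ*(1-q) ≤ T .y1 := by
    have := (neg_le_abs (μb .y1 - μh .y1)).trans (key .y1)
    rw [Eb, Eh] at this; simp only [V1, Wv, p0] at this; linarith [this]
  have bx2 : γ^2*α*(1-q) ≤ T .x2 := by
    have := (le_abs_self (μb .x2 - μh .x2)).trans (key .x2)
    rw [Eb, Eh] at this; simp only [V1, Wv, p0] at this; nlinarith [this]
  have bx3 : γ^2*(1-α)*(1-q) ≤ T .x3 := by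
    have := (le_abs_self (μb .x3 - μh .x3)).trans (key .x3)
    rw [Eb, Eh] at this; simp only [V1, Wv, p0] at this; nlinarith [this]
  have by2 : γ^2*β*(1-q) ≤ T .y2 := by
    have := (neg_le_abs (μb .y2 - μh .y2)).trans (key .y2)
    rw [Eb, Eh] at this; simp only [V1, Wv, p0] at this; nlinarith [this]
  have by3 : γ^2*(1-β)*(1-q) ≤ T .y3 := by
    have := (neg_le_abs (μb .y3 - μh .y3)).trans (key .y3)
    rw [Eb, Eh] at this; simp only [V1, Wv, p0] at this; nlinarith [this]
  have bx0 : 0 ≤ T .x0 := Finset.sum_nonneg fun _ _ => abs_nonneg _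
  have by0 : 0 ≤ T .y0 := Finset.sum_nonneg fun _ _ => abs_nonneg _
  have hsum8 : ∑ s, ∑ a,
      |occMeasure (Pdyn α β) φbeh γ p0 s a - occMeasure (Pdyn α β) φh γ p0 s a|
      = T .x0 + T .y0 + T .x1 + T .y1 + T .x2 + T .x3 + T .y2 + T .y3 := by
    rw [sum_St]
  rw [hsum8, hq2]
  nlinarith [mul_nonneg hγ0 (by linarith : (0:ℝ) ≤ 1 - q), sq_nonneg γ,
    mul_nonneg (mul_nonneg (sq_nonneg γ) hγ0) (by linarith : (0:ℝ) ≤ 1 - q)]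
end
end
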